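/- arXiv:2310.07466 — 13 statements merged into one kernel-verified Lean document; each statement's English description precedes it below -/
import Mathlib

section
/- Let n ≥ 1 and 0 < ε < 1. Suppose 𝒢 is a group of n×n complex unitary matrices and ξ ∈ ℂⁿ is a unit vector with |⟨Gξ, ξ⟩| ≥ 1 − ε for all G ∈ 𝒢. If G ∈ 𝒢 is a commutator, i.e. G = ABA⁻¹B⁻¹ for some A, B ∈ 𝒢, then ‖Gξ − ξ‖ ≤ 4√(2ε). -/
/-!
For a unit vector `ξ` and an isometry `U`, taking `c` to be the phase of `⟪ξ, Uξ⟫` gives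
`‖Uξ - cξ‖² = 2 - 2‖⟪ξ, Uξ⟫‖ ≤ 2ε`, so `A⁻¹` and `B⁻¹` move `ξ` to within `√(2ε)` of
`αξ` and `βξ` with `‖α‖ = ‖β‖ = 1`. Applying the isometry `B⁻¹A⁻¹` turns
`‖ABA⁻¹B⁻¹ξ - ξ‖` into `‖A⁻¹B⁻¹ξ - B⁻¹A⁻¹ξ‖`; since the scalars `α` and `β` commute,
this difference is a sum of four error terms, each of norm at most `√(2ε)`.
-/

open Matrix ComplexConjugate

theorem LinearIsometry.norm_apply_apply_sub_apply_apply_le {𝕜 E : Type*} [NormedField 𝕜]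
    [SeminormedAddCommGroup E] [NormedSpace 𝕜 E] (S T : E →ₗᵢ[𝕜] E) {α β : 𝕜}
    (hα : ‖α‖ ≤ 1) (hβ : ‖β‖ ≤ 1) (x : E) :
    ‖S (T x) - T (S x)‖ ≤ 2 * ‖S x - α • x‖ + 2 * ‖T x - β • x‖ := by
  set a := S x - α • x
  set b := T x - β • x
  have hsplit : S (T x) - T (S x) = (S b - α • b) + (β • a - T a) := by
    simp only [a, b, map_sub, map_smul]
    module
  have hsmul : ∀ (γ : 𝕜) (v : E), ‖γ‖ ≤ 1 → ‖γ • v‖ ≤ ‖v‖ := fun γ v hγ =>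
    (norm_smul_le γ v).trans (mul_le_of_le_one_left (norm_nonneg v) hγ)
  calc ‖S (T x) - T (S x)‖ ≤ (‖S b‖ + ‖α • b‖) + (‖β • a‖ + ‖T a‖) := by
        rw [hsplit]
        exact (norm_add_le _ _).trans (add_le_add (norm_sub_le _ _) (norm_sub_le _ _))
    _ ≤ (‖b‖ + ‖b‖) + (‖a‖ + ‖a‖) := by
        rw [S.norm_map, T.norm_map]
        gcongr <;> exact hsmul _ _ ‹_›
    _ = 2 * ‖a‖ + 2 * ‖b‖ := by ring

section ComplexInnerProductSpace

variable {E : Type*} [NormedAddCommGroup E] [InnerProductSpace ℂ E]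

open Complex in
theorem norm_sub_exp_arg_inner_smul_sq {x y : E} (hx : ‖x‖ = 1) (hy : ‖y‖ = 1) :
    ‖y - exp (arg (inner ℂ x y) * I) • x‖ ^ 2 = 2 - 2 * ‖inner ℂ x y‖ := by
  set z := inner ℂ x y
  set u := exp (arg z * I)
  have hu : u * conj u = 1 := by
    rw [mul_conj, normSq_eq_norm_sq, norm_exp_ofReal_mul_I]; norm_num
  have hinner : inner ℂ y (u • x) = (‖z‖ : ℂ) := by
    have hz : z = ‖z‖ * u := (norm_mul_exp_arg_mul_I z).symm
    rw [inner_smul_right, ← inner_conj_symm]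
    change u * conj z = _
    conv_lhs => rw [hz, map_mul, conj_ofReal]
    linear_combination (‖z‖ : ℂ) * hu
  rw [norm_sub_sq (𝕜 := ℂ), hinner, norm_smul, norm_exp_ofReal_mul_I, hx, hy,
    RCLike.re_to_complex, ofReal_re]
  ring

theorem exists_norm_eq_one_norm_sub_smul_le_sqrt {x y : E} (hx : ‖x‖ = 1) (hy : ‖y‖ = 1) {ε : ℝ}
    (h : 1 - ε ≤ ‖inner ℂ x y‖) : ∃ c : ℂ, ‖c‖ = 1 ∧ ‖y - c • x‖ ≤ √(2 * ε) := by
  refine ⟨_, Complex.norm_exp_ofReal_mul_I (Complex.arg (inner ℂ x y)), Real.le_sqrt_of_sq_le ?_⟩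
  rw [norm_sub_exp_arg_inner_smul_sq hx hy]
  linarith

end ComplexInnerProductSpace

namespace Matrix

variable {n 𝕜 : Type*} [Fintype n] [DecidableEq n] [RCLike 𝕜]

theorem norm_toEuclideanLin_of_mem_unitaryGroup {A : Matrix n n 𝕜} (hA : A ∈ unitaryGroup n 𝕜)
    (x : EuclideanSpace 𝕜 n) : ‖toEuclideanLin A x‖ = ‖x‖ := by
  have hU : toEuclideanCLM (n := n) (𝕜 := 𝕜) A ∈ unitary _ := Unitary.map_mem _ hA
  exact ContinuousLinearMap.norm_map_of_mem_unitary hU x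

theorem inv_eq_star_of_mem_unitaryGroup {A : Matrix n n 𝕜} (hA : A ∈ unitaryGroup n 𝕜) :
    A⁻¹ = star A :=
  inv_eq_left_inv (Unitary.star_mul_self_of_mem hA)

theorem inv_mem_unitaryGroup {A : Matrix n n 𝕜} (hA : A ∈ unitaryGroup n 𝕜) :
    A⁻¹ ∈ unitaryGroup n 𝕜 :=
  inv_eq_star_of_mem_unitaryGroup hA ▸ Unitary.star_mem hA

theorem norm_toEuclideanLin_commutator_apply_sub {A B : Matrix n n 𝕜} (hA : A ∈ unitaryGroup n 𝕜)
    (hB : B ∈ unitaryGroup n 𝕜) (x : EuclideanSpace 𝕜 n) :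
    ‖toEuclideanLin (A * B * A⁻¹ * B⁻¹) x - x‖ =
      ‖toEuclideanLin A⁻¹ (toEuclideanLin B⁻¹ x) - toEuclideanLin B⁻¹ (toEuclideanLin A⁻¹ x)‖ := by
  have hcancel : B⁻¹ * A⁻¹ * (A * B * A⁻¹ * B⁻¹) = A⁻¹ * B⁻¹ := by
    rw [inv_eq_star_of_mem_unitaryGroup hA, inv_eq_star_of_mem_unitaryGroup hB]
    simp only [mul_assoc]
    rw [← mul_assoc (star A) A, Unitary.star_mul_self_of_mem hA, one_mul,
      ← mul_assoc (star B) B, Unitary.star_mul_self_of_mem hB, one_mul]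
  calc ‖toEuclideanLin (A * B * A⁻¹ * B⁻¹) x - x‖
      = ‖toEuclideanLin (B⁻¹ * A⁻¹) (toEuclideanLin (A * B * A⁻¹ * B⁻¹) x - x)‖ :=
        (norm_toEuclideanLin_of_mem_unitaryGroup
          (mul_mem (inv_mem_unitaryGroup hB) (inv_mem_unitaryGroup hA)) _).symm
    _ = ‖toEuclideanLin (A⁻¹ * B⁻¹) x - toEuclideanLin (B⁻¹ * A⁻¹) x‖ := by
        rw [map_sub, ← hcancel]
        simp only [toLpLin_mul_same, LinearMap.comp_apply]
    _ = _ := by simp only [toLpLin_mul_same, LinearMap.comp_apply]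

end Matrix

theorem stmt_2_general (n : ℕ) (ε : ℝ)
    (G : Set (Matrix (Fin n) (Fin n) ℂ))
    (hinv : ∀ A ∈ G, A⁻¹ ∈ G)
    (hunitary : ∀ A ∈ G, A ∈ Matrix.unitaryGroup (Fin n) ℂ)
    (ξ : EuclideanSpace ℂ (Fin n)) (hξ : ‖ξ‖ = 1)
    (hweak : ∀ A ∈ G, 1 - ε ≤ ‖(inner ℂ ξ (Matrix.toEuclideanLin A ξ) : ℂ)‖) :
    ∀ A ∈ G, ∀ B ∈ G,
      ‖Matrix.toEuclideanLin (A * B * A⁻¹ * B⁻¹) ξ - ξ‖ ≤ 4 * Real.sqrt (2 * ε) := by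
  intro A hA B hB
  have hAu := hunitary _ (hinv A hA)
  have hBu := hunitary _ (hinv B hB)
  obtain ⟨α, hα, hαξ⟩ := exists_norm_eq_one_norm_sub_smul_le_sqrt hξ
    (by rw [norm_toEuclideanLin_of_mem_unitaryGroup hAu, hξ]) (hweak _ (hinv A hA))
  obtain ⟨β, hβ, hβξ⟩ := exists_norm_eq_one_norm_sub_smul_le_sqrt hξ
    (by rw [norm_toEuclideanLin_of_mem_unitaryGroup hBu, hξ]) (hweak _ (hinv B hB))
  let S : EuclideanSpace ℂ (Fin n) →ₗᵢ[ℂ] EuclideanSpace ℂ (Fin n) :=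
    ⟨toEuclideanLin A⁻¹, norm_toEuclideanLin_of_mem_unitaryGroup hAu⟩
  let T : EuclideanSpace ℂ (Fin n) →ₗᵢ[ℂ] EuclideanSpace ℂ (Fin n) :=
    ⟨toEuclideanLin B⁻¹, norm_toEuclideanLin_of_mem_unitaryGroup hBu⟩
  rw [norm_toEuclideanLin_commutator_apply_sub (hunitary A hA) (hunitary B hB)]
  calc ‖S (T ξ) - T (S ξ)‖ ≤ 2 * ‖S ξ - α • ξ‖ + 2 * ‖T ξ - β • ξ‖ :=
        S.norm_apply_apply_sub_apply_apply_le T hα.le hβ.le ξ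
    _ ≤ 2 * √(2 * ε) + 2 * √(2 * ε) := by gcongr; exacts [hαξ, hβξ]
    _ = 4 * √(2 * ε) := by ring

/-- If `ξ` is a weak `ε`-approximate fixed point of a group of unitary
matrices `G`, then for every commutator `A * B * A⁻¹ * B⁻¹` with `A, B ∈ G` one has
`‖(ABA⁻¹B⁻¹)ξ - ξ‖ ≤ 4√(2ε)`. -/
theorem stmt_2 (n : ℕ) (hn : 1 ≤ n) (ε : ℝ) (hε : 0 < ε) (hε1 : ε < 1)
    (G : Set (Matrix (Fin n) (Fin n) ℂ))
    (hone : (1 : Matrix (Fin n) (Fin n) ℂ) ∈ G)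
    (hmul : ∀ A ∈ G, ∀ B ∈ G, A * B ∈ G)
    (hinv : ∀ A ∈ G, A⁻¹ ∈ G)
    (hunitary : ∀ A ∈ G, A ∈ Matrix.unitaryGroup (Fin n) ℂ)
    (ξ : EuclideanSpace ℂ (Fin n)) (hξ : ‖ξ‖ = 1)
    (hweak : ∀ A ∈ G, 1 - ε ≤ ‖(inner ℂ ξ (Matrix.toEuclideanLin A ξ) : ℂ)‖) :
    ∀ A ∈ G, ∀ B ∈ G,
      ‖Matrix.toEuclideanLin (A * B * A⁻¹ * B⁻¹) ξ - ξ‖ ≤ 4 * Real.sqrt (2 * ε) :=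
  stmt_2_general n ε G hinv hunitary ξ hξ hweak
end

section
/- Let n ≥ 1 and 0 < ε < 1. Suppose 𝒢 is a group of n×n complex unitary matrices such that every element of 𝒢 is a commutator ABA⁻¹B⁻¹ of two elements A, B ∈ 𝒢. If ξ ∈ ℂⁿ is a unit vector with |⟨Gξ, ξ⟩| ≥ 1 − ε for all G ∈ 𝒢, then ‖Gξ − ξ‖ ≤ 4√(2ε) for all G ∈ 𝒢; that is, ξ is a 4√(2ε)-approximate fixed point of 𝒢. -/
/-!
If `|⟪ξ, Uξ⟫| ≥ 1 - ε` for a unitary `U` and a unit vector `ξ`, then rotating `ξ` by the phase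
of `⟪ξ, Uξ⟫` gives `‖Uξ - ωξ‖² = 2 - 2|⟪ξ, Uξ⟫| ≤ 2ε`, so `ξ` is a `√(2ε)`-approximate
eigenvector of `U` with a unimodular eigenvalue `ω`, and then also of `U⁻¹`, with eigenvalue
`ω⁻¹`. For a commutator `ABA⁻¹B⁻¹` the four errors add up to at most `4√(2ε)` while the four
phases cancel, so `ξ` is almost fixed by it.
-/

open Matrix
open scoped commutatorElement

section ApproximateEigenvector

variable {𝕜 E : Type*} [RCLike 𝕜] [NormedAddCommGroup E] [InnerProductSpace 𝕜 E]

local notation "⟪" x ", " y "⟫" => @inner 𝕜 _ _ x y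

theorem exists_norm_eq_one_norm_sub_smul_sq_eq {x y : E} (hx : ‖x‖ = 1) (hy : ‖y‖ = 1) :
    ∃ ω : 𝕜, ‖ω‖ = 1 ∧ ‖y - ω • x‖ ^ 2 = 2 - 2 * ‖⟪x, y⟫‖ := by
  obtain ⟨ω, hω, hωa⟩ := RCLike.exists_norm_mul_eq_self ⟪x, y⟫
  refine ⟨ω, hω, ?_⟩
  have hinner : ⟪y, ω • x⟫ = ‖⟪x, y⟫‖ := by
    rw [inner_smul_right, ← inner_conj_symm, ← hωa, map_mul, RCLike.conj_ofReal, ← mul_assoc,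
      RCLike.mul_conj]
    simp [hω]
  rw [@norm_sub_sq 𝕜, hinner, RCLike.ofReal_re, norm_smul, hω, hx, hy]
  ring

theorem exists_norm_sub_smul_le_sqrt {x y : E} {ε : ℝ} (hx : ‖x‖ = 1) (hy : ‖y‖ = 1)
    (h : 1 - ε ≤ ‖⟪x, y⟫‖) : ∃ ω : 𝕜, ‖ω‖ = 1 ∧ ‖y - ω • x‖ ≤ √(2 * ε) := by
  obtain ⟨ω, hω, hsq⟩ := exists_norm_eq_one_norm_sub_smul_sq_eq (𝕜 := 𝕜) hx hy
  exact ⟨ω, hω, Real.le_sqrt_of_sq_le (by linarith)⟩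

namespace LinearIsometryEquiv

theorem norm_inv_apply_sub_inv_smul (U : E ≃ₗᵢ[𝕜] E) {ω : 𝕜} (hω : ‖ω‖ = 1) (x : E) :
    ‖U⁻¹ x - ω⁻¹ • x‖ = ‖U x - ω • x‖ := by
  have hω0 : ω ≠ 0 := norm_ne_zero_iff.mp (by simp [hω])
  calc ‖U⁻¹ x - ω⁻¹ • x‖ = ‖U (U⁻¹ x - ω⁻¹ • x)‖ := (U.norm_map _).symm
    _ = ‖ω⁻¹ • (ω • x - U x)‖ := by
      rw [map_sub, map_smul, coe_inv, U.apply_symm_apply, smul_sub, smul_smul,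
        inv_mul_cancel₀ hω0, one_smul]
    _ = ‖U x - ω • x‖ := by rw [norm_smul, norm_inv, hω, inv_one, one_mul, norm_sub_rev]

theorem norm_apply_sub_mul_smul_le (U : E ≃ₗᵢ[𝕜] E) (x y : E) (α β : 𝕜) :
    ‖U y - (β * α) • x‖ ≤ ‖y - α • x‖ + ‖α‖ * ‖U x - β • x‖ :=
  calc ‖U y - (β * α) • x‖ = ‖U (y - α • x) + α • (U x - β • x)‖ := by
        rw [map_sub, map_smul]; congr 1; module
    _ ≤ ‖y - α • x‖ + ‖α‖ * ‖U x - β • x‖ := by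
        rw [← U.norm_map (y - α • x), ← norm_smul]; exact norm_add_le _ _

theorem norm_commutatorElement_apply_sub_le (U V : E ≃ₗᵢ[𝕜] E) {α β : 𝕜}
    (hα : ‖α‖ = 1) (hβ : ‖β‖ = 1) (x : E) :
    ‖⁅U, V⁆ x - x‖ ≤ 2 * (‖U x - α • x‖ + ‖V x - β • x‖) := by
  have hα0 : α ≠ 0 := norm_ne_zero_iff.mp (by simp [hα])
  have hβ0 : β ≠ 0 := norm_ne_zero_iff.mp (by simp [hβ])
  have h2 := U⁻¹.norm_apply_sub_mul_smul_le x (V⁻¹ x) β⁻¹ α⁻¹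
  have h3 := V.norm_apply_sub_mul_smul_le x (U⁻¹ (V⁻¹ x)) (α⁻¹ * β⁻¹) β
  have h4 := U.norm_apply_sub_mul_smul_le x (V (U⁻¹ (V⁻¹ x))) (β * (α⁻¹ * β⁻¹)) α
  rw [U.norm_inv_apply_sub_inv_smul hα, V.norm_inv_apply_sub_inv_smul hβ] at h2
  rw [show α * (β * (α⁻¹ * β⁻¹)) = 1 by field_simp, one_smul] at h4
  simp only [norm_mul, norm_inv, hα, hβ, inv_one, mul_one, one_mul] at h2 h3 h4
  rw [commutatorElement_def]
  simp only [coe_mul, Function.comp_apply]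
  linarith

end LinearIsometryEquiv

end ApproximateEigenvector

namespace Matrix.UnitaryGroup

variable {𝕜 n : Type*} [RCLike 𝕜] [Fintype n] [DecidableEq n]

noncomputable def toLinearIsometryEquiv :
    unitaryGroup n 𝕜 →* (EuclideanSpace 𝕜 n ≃ₗᵢ[𝕜] EuclideanSpace 𝕜 n) :=
  Unitary.linearIsometryEquiv.toMonoidHom.comp
    (Unitary.map (StarMonoidHom.ofClass (toEuclideanCLM (n := n) (𝕜 := 𝕜)))).toMonoidHom

theorem toLinearIsometryEquiv_apply (A : unitaryGroup n 𝕜) (x : EuclideanSpace 𝕜 n) :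
    toLinearIsometryEquiv A x = toEuclideanLin (A : Matrix n n 𝕜) x :=
  rfl

theorem coe_inv (A : unitaryGroup n 𝕜) :
    ((A⁻¹ : unitaryGroup n 𝕜) : Matrix n n 𝕜) = (A : Matrix n n 𝕜)⁻¹ :=
  (inv_eq_left_inv (Unitary.star_mul_self_of_mem A.2)).symm

theorem coe_commutatorElement (A B : unitaryGroup n 𝕜) :
    ((⁅A, B⁆ : unitaryGroup n 𝕜) : Matrix n n 𝕜) =
      A * B * (A : Matrix n n 𝕜)⁻¹ * (B : Matrix n n 𝕜)⁻¹ := by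
  simp only [commutatorElement_def, Submonoid.coe_mul, coe_inv]

end Matrix.UnitaryGroup

theorem stmt_3_general (n : ℕ) (ε : ℝ)
    (G : Set (Matrix (Fin n) (Fin n) ℂ))
    (hunitary : ∀ A ∈ G, A ∈ Matrix.unitaryGroup (Fin n) ℂ)
    (hcomm : ∀ C ∈ G, ∃ A ∈ G, ∃ B ∈ G, C = A * B * A⁻¹ * B⁻¹)
    (ξ : EuclideanSpace ℂ (Fin n)) (hξ : ‖ξ‖ = 1)
    (hweak : ∀ A ∈ G, 1 - ε ≤ ‖(inner ℂ ξ (Matrix.toEuclideanLin A ξ) : ℂ)‖) :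
    ∀ C ∈ G, ‖Matrix.toEuclideanLin C ξ - ξ‖ ≤ 4 * Real.sqrt (2 * ε) := by
  intro C hC
  obtain ⟨A, hA, B, hB, rfl⟩ := hcomm C hC
  lift A to unitaryGroup (Fin n) ℂ using hunitary A hA
  lift B to unitaryGroup (Fin n) ℂ using hunitary B hB
  let φ := UnitaryGroup.toLinearIsometryEquiv (𝕜 := ℂ) (n := Fin n)
  have hφ (U : unitaryGroup (Fin n) ℂ) (hU : ↑U ∈ G) :
      ∃ ω : ℂ, ‖ω‖ = 1 ∧ ‖φ U ξ - ω • ξ‖ ≤ √(2 * ε) :=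
    exists_norm_sub_smul_le_sqrt hξ (by rw [(φ U).norm_map, hξ]) (hweak U hU)
  obtain ⟨α, hα, hAξ⟩ := hφ A hA
  obtain ⟨β, hβ, hBξ⟩ := hφ B hB
  rw [← UnitaryGroup.coe_commutatorElement, ← UnitaryGroup.toLinearIsometryEquiv_apply,
    map_commutatorElement]
  linarith [(φ A).norm_commutatorElement_apply_sub_le (φ B) hα hβ ξ]

/-- If every element of a group of unitary matrices `G` is a commutator
of two elements of `G`, and `ξ` is a weak `ε`-approximate fixed point of `G`, then `ξ` is a
`4√(2ε)`-approximate fixed point of `G`. -/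
theorem stmt_3 (n : ℕ) (hn : 1 ≤ n) (ε : ℝ) (hε : 0 < ε) (hε1 : ε < 1)
    (G : Set (Matrix (Fin n) (Fin n) ℂ))
    (hone : (1 : Matrix (Fin n) (Fin n) ℂ) ∈ G)
    (hmul : ∀ A ∈ G, ∀ B ∈ G, A * B ∈ G)
    (hinv : ∀ A ∈ G, A⁻¹ ∈ G)
    (hunitary : ∀ A ∈ G, A ∈ Matrix.unitaryGroup (Fin n) ℂ)
    (hcomm : ∀ C ∈ G, ∃ A ∈ G, ∃ B ∈ G, C = A * B * A⁻¹ * B⁻¹)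
    (ξ : EuclideanSpace ℂ (Fin n)) (hξ : ‖ξ‖ = 1)
    (hweak : ∀ A ∈ G, 1 - ε ≤ ‖(inner ℂ ξ (Matrix.toEuclideanLin A ξ) : ℂ)‖) :
    ∀ C ∈ G, ‖Matrix.toEuclideanLin C ξ - ξ‖ ≤ 4 * Real.sqrt (2 * ε) :=
  stmt_3_general n ε G hunitary hcomm ξ hξ hweak
end

section
/- Let n ≥ 1 and 0 < ε < 1/32. Suppose 𝒢 is a closed (hence compact) subgroup of the group of n×n complex unitary matrices such that every element of 𝒢 is a commutator ABA⁻¹B⁻¹ of two elements A, B ∈ 𝒢. If ξ ∈ ℂⁿ is a unit vector with |⟨Gξ, ξ⟩| ≥ 1 − ε for all G ∈ 𝒢, then there exists a nonzero vector η ∈ ℂⁿ with Gη = η for every G ∈ 𝒢 and ‖η − ξ‖ ≤ 4√(2ε). -/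
/-!
Write `Uξ = αξ + r` and `Vξ = βξ + s` with `r, s ⟂ ξ`. A weak `ε`-approximate fixed point
forces `‖r‖, ‖s‖ ≤ √(2ε)`, and expanding `UVξ - VUξ` in these terms bounds it by
`2(‖r‖ + ‖s‖) ≤ 4√(2ε)`. For a commutator `C = ABA⁻¹B⁻¹` of unitaries, `‖Cξ - ξ‖` is such a
quantity for `U = A⁻¹`, `V = B⁻¹`, so every element of the group moves `ξ` by at most
`δ = 4√(2ε)`. The point of least norm in the closed convex hull of the orbit of `ξ` is then
fixed by the group, by strict convexity of the norm, and lies within `δ < ‖ξ‖` of `ξ`.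
-/

open scoped InnerProductSpace

section ApproximateFixedPoint

variable {𝕜 H : Type*} [RCLike 𝕜] [NormedAddCommGroup H] [InnerProductSpace 𝕜 H]

theorem norm_sub_inner_smul_sq {ξ : H} (hξ : ‖ξ‖ = 1) (x : H) :
    ‖x - ⟪ξ, x⟫_𝕜 • ξ‖ ^ 2 = ‖x‖ ^ 2 - ‖⟪ξ, x⟫_𝕜‖ ^ 2 := by
  have hx : ⟪x, ⟪ξ, x⟫_𝕜 • ξ⟫_𝕜 = (‖⟪ξ, x⟫_𝕜‖ ^ 2 : ℝ) := by
    rw [inner_smul_right, ← inner_conj_symm x ξ, RCLike.mul_conj, RCLike.ofReal_pow]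
  rw [norm_sub_sq (𝕜 := 𝕜), hx, RCLike.ofReal_re, norm_smul, hξ]
  ring

theorem norm_sub_inner_smul_le_sqrt {ξ x : H} {ε : ℝ} (hξ : ‖ξ‖ = 1) (hx : ‖x‖ ≤ 1)
    (hweak : 1 - ε ≤ ‖⟪ξ, x⟫_𝕜‖) : ‖x - ⟪ξ, x⟫_𝕜 • ξ‖ ≤ √(2 * ε) := by
  have hle : ‖⟪ξ, x⟫_𝕜‖ ≤ 1 := by
    simpa [hξ] using (norm_inner_le_norm (𝕜 := 𝕜) ξ x).trans (mul_le_one₀ hξ.le (norm_nonneg x) hx)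
  refine Real.le_sqrt_of_sq_le ?_
  rw [norm_sub_inner_smul_sq hξ]
  nlinarith [norm_nonneg x, norm_nonneg ⟪ξ, x⟫_𝕜]

theorem norm_mul_apply_sub_mul_apply_le (U V : H →L[𝕜] H) (hU : ‖U‖ ≤ 1) (hV : ‖V‖ ≤ 1)
    {ξ : H} {ε : ℝ} (hξ : ‖ξ‖ = 1) (hUξ : 1 - ε ≤ ‖⟪ξ, U ξ⟫_𝕜‖) (hVξ : 1 - ε ≤ ‖⟪ξ, V ξ⟫_𝕜‖) :
    ‖(U * V) ξ - (V * U) ξ‖ ≤ 4 * √(2 * ε) := by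
  set α := ⟪ξ, U ξ⟫_𝕜
  set β := ⟪ξ, V ξ⟫_𝕜
  set r := U ξ - α • ξ
  set s := V ξ - β • ξ
  have hcontr : ∀ {W : H →L[𝕜] H}, ‖W‖ ≤ 1 → ∀ x, ‖W x‖ ≤ ‖x‖ := fun {W} hW x ↦ by
    simpa using W.le_of_opNorm_le hW x
  have hinner : ∀ {W : H →L[𝕜] H}, ‖W‖ ≤ 1 → ‖⟪ξ, W ξ⟫_𝕜‖ ≤ 1 := fun {W} hW ↦
    (norm_inner_le_norm ξ (W ξ)).trans (by simpa [hξ] using hcontr hW ξ)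
  have hr : ‖r‖ ≤ √(2 * ε) := norm_sub_inner_smul_le_sqrt hξ (hξ ▸ hcontr hU ξ) hUξ
  have hs : ‖s‖ ≤ √(2 * ε) := norm_sub_inner_smul_le_sqrt hξ (hξ ▸ hcontr hV ξ) hVξ
  have hdecomp : (U * V) ξ - (V * U) ξ = U s - V r + β • r - α • s := by
    simp only [r, s, mul_apply_eq_comp, map_sub, map_smul]
    module
  calc ‖(U * V) ξ - (V * U) ξ‖ ≤ ‖U s‖ + ‖V r‖ + ‖β‖ * ‖r‖ + ‖α‖ * ‖s‖ := by
        rw [hdecomp, ← norm_smul, ← norm_smul]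
        linarith [norm_sub_le (U s - V r + β • r) (α • s), norm_add_le (U s - V r) (β • r),
          norm_sub_le (U s) (V r)]
    _ ≤ ‖s‖ + ‖r‖ + 1 * ‖r‖ + 1 * ‖s‖ := by
        gcongr
        exacts [hcontr hU s, hcontr hV r, hinner hV, hinner hU]
    _ ≤ 4 * √(2 * ε) := by linarith

variable [CompleteSpace H]

theorem norm_commutator_apply_sub_self_le {u v : H →L[𝕜] H} (hu : u ∈ unitary (H →L[𝕜] H))
    (hv : v ∈ unitary (H →L[𝕜] H)) {ξ : H} {ε : ℝ} (hξ : ‖ξ‖ = 1)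
    (huξ : 1 - ε ≤ ‖⟪ξ, u ξ⟫_𝕜‖) (hvξ : 1 - ε ≤ ‖⟪ξ, v ξ⟫_𝕜‖) :
    ‖(u * v * star u * star v) ξ - ξ‖ ≤ 4 * √(2 * ε) := by
  have hstar : ∀ {w : H →L[𝕜] H}, w ∈ unitary (H →L[𝕜] H) → 1 - ε ≤ ‖⟪ξ, w ξ⟫_𝕜‖ →
      ‖star w‖ ≤ 1 ∧ 1 - ε ≤ ‖⟪ξ, star w ξ⟫_𝕜‖ := fun {w} hw hwξ ↦ by
    refine ⟨(star w).opNorm_le_bound zero_le_one fun x ↦ ?_, ?_⟩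
    · rw [(star w).norm_map_of_mem_unitary (Unitary.star_mem hw), one_mul]
    · rwa [w.star_eq_adjoint, w.adjoint_inner_right, norm_inner_symm]
  -- Applying the isometry `star v * star u` turns the displacement of `ξ` under the commutator
  -- into the failure of `star u` and `star v` to commute at `ξ`.
  have hcancel : star v * star u * (u * v * star u * star v) = star u * star v := by
    simp only [← mul_assoc]
    rw [mul_assoc (star v), Unitary.star_mul_self_of_mem hu, mul_one,
      Unitary.star_mul_self_of_mem hv, one_mul]
  have hw : star v * star u ∈ unitary (H →L[𝕜] H) :=
    mul_mem (Unitary.star_mem hv) (Unitary.star_mem hu)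
  obtain ⟨hu', huξ'⟩ := hstar hu huξ
  obtain ⟨hv', hvξ'⟩ := hstar hv hvξ
  calc ‖(u * v * star u * star v) ξ - ξ‖
      = ‖(star u * star v) ξ - (star v * star u) ξ‖ := by
        rw [← (star v * star u).norm_map_of_mem_unitary hw, map_sub, ← mul_apply_eq_comp, hcancel]
    _ ≤ 4 * √(2 * ε) := norm_mul_apply_sub_mul_apply_le _ _ hu' hv' hξ huξ' hvξ'

end ApproximateFixedPoint

section CommonFixedPoint

variable {H : Type*} [NormedAddCommGroup H] [InnerProductSpace ℂ H] [CompleteSpace H]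

theorem exists_forall_apply_eq_self_norm_sub_le (S : Submonoid (H →L[ℂ] H))
    (hS : S ≤ unitary (H →L[ℂ] H)) {ξ : H} {δ : ℝ} (hδ : ∀ u ∈ S, ‖u ξ - ξ‖ ≤ δ) :
    ∃ η : H, (∀ u ∈ S, u η = η) ∧ ‖η - ξ‖ ≤ δ := by
  -- the real inner product gives the Hilbert projection theorem and strict convexity over `ℝ`
  let := InnerProductSpace.complexToReal (G := H)
  set K := closure (convexHull ℝ ((fun u : H →L[ℂ] H ↦ u ξ) '' S))
  have hξK : ξ ∈ K := subset_closure (subset_convexHull ℝ _ ⟨1, S.one_mem, rfl⟩)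
  have hKball : K ⊆ Metric.closedBall ξ δ := by
    refine closure_minimal (convexHull_min ?_ (convex_closedBall ξ δ)) Metric.isClosed_closedBall
    rintro _ ⟨u, hu, rfl⟩
    simpa [dist_eq_norm] using hδ u hu
  have hKinv : ∀ u ∈ S, ∀ x ∈ K, u x ∈ K := by
    intro u hu
    have himage : u '' K ⊆ K := by
      refine (image_closure_subset_closure_image u.continuous).trans (closure_mono ?_)
      rw [← ContinuousLinearMap.coe_restrictScalars' (R := ℝ), ← ContinuousLinearMap.coe_coe,
        LinearMap.image_convexHull, Set.image_image]
      exact convexHull_mono (by rintro _ ⟨w, hw, rfl⟩; exact ⟨u * w, S.mul_mem hu hw, rfl⟩)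
    exact fun x hx ↦ himage ⟨x, hx, rfl⟩
  obtain ⟨η, hηK, hηmin⟩ := exists_norm_eq_iInf_of_complete_convex ⟨ξ, hξK⟩
    isClosed_closure.isComplete (convex_convexHull ℝ _).closure 0
  have hηle : ∀ x ∈ K, ‖η‖ ≤ ‖x‖ := fun x hx ↦ by
    have := ciInf_le ⟨0, Set.forall_mem_range.2 fun w : K ↦ norm_nonneg (0 - (w : H))⟩ (⟨x, hx⟩ : K)
    rwa [← hηmin, zero_sub, norm_neg, zero_sub, norm_neg] at this
  refine ⟨η, fun u hu ↦ ?_, by simpa [dist_eq_norm] using hKball hηK⟩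
  by_contra hne
  have hmid : (1 / 2 : ℝ) • (u η + η) ∈ K := by
    rw [smul_add]
    exact (convex_convexHull ℝ _).closure (hKinv u hu η hηK) hηK
      (by norm_num) (by norm_num) (by norm_num)
  have hnorm : ‖u η‖ = ‖η‖ := u.norm_map_of_mem_unitary (hS hu) η
  exact (hnorm ▸ (norm_midpoint_lt_iff hnorm).2 hne).not_ge (hηle _ hmid)

end CommonFixedPoint

theorem stmt_4_general (n : ℕ) (ε : ℝ) (hε1 : ε < 1 / 32)
    (G : Set (Matrix (Fin n) (Fin n) ℂ))
    (hone : (1 : Matrix (Fin n) (Fin n) ℂ) ∈ G)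
    (hmul : ∀ A ∈ G, ∀ B ∈ G, A * B ∈ G)
    (hunitary : ∀ A ∈ G, A ∈ Matrix.unitaryGroup (Fin n) ℂ)
    (hcomm : ∀ C ∈ G, ∃ A ∈ G, ∃ B ∈ G, C = A * B * A⁻¹ * B⁻¹)
    (ξ : EuclideanSpace ℂ (Fin n)) (hξ : ‖ξ‖ = 1)
    (hweak : ∀ A ∈ G, 1 - ε ≤ ‖(inner ℂ ξ (Matrix.toEuclideanLin A ξ) : ℂ)‖) :
    ∃ η : EuclideanSpace ℂ (Fin n), η ≠ 0 ∧
      (∀ A ∈ G, Matrix.toEuclideanLin A η = η) ∧ ‖η - ξ‖ ≤ 4 * Real.sqrt (2 * ε) := by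
  let T := Matrix.toEuclideanCLM (n := Fin n) (𝕜 := ℂ)
  have hTu : ∀ A ∈ G, T A ∈ unitary _ := fun A hA ↦ Unitary.map_mem T (hunitary A hA)
  have hinv_eq_star : ∀ A ∈ G, A⁻¹ = star A := fun A hA ↦
    Matrix.inv_eq_left_inv (Matrix.mem_unitaryGroup_iff'.mp (hunitary A hA))
  let S : Submonoid _ :=
    Submonoid.map T { carrier := G, mul_mem' := fun {A B} hA hB ↦ hmul A hA B hB, one_mem' := hone }
  have hdisp : ∀ u ∈ S, ‖u ξ - ξ‖ ≤ 4 * √(2 * ε) := by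
    rintro _ ⟨C, hC, rfl⟩
    obtain ⟨A, hA, B, hB, rfl⟩ := hcomm C hC
    rw [hinv_eq_star A hA, hinv_eq_star B hB, map_mul, map_mul, map_mul, map_star, map_star]
    exact norm_commutator_apply_sub_self_le (hTu A hA) (hTu B hB) hξ (hweak A hA) (hweak B hB)
  obtain ⟨η, hfix, hdist⟩ := exists_forall_apply_eq_self_norm_sub_le S
    (by rintro _ ⟨A, hA, rfl⟩; exact hTu A hA) hdisp
  refine ⟨η, ?_, fun A hA ↦ hfix (T A) ⟨A, hA, rfl⟩, hdist⟩
  rintro rfl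
  have : √(2 * ε) < 1 / 4 := (Real.sqrt_lt' (by norm_num)).2 (by linarith)
  rw [zero_sub, norm_neg, hξ] at hdist
  linarith

/-- If every element of a closed (hence compact) group of unitary matrices
`G` is a commutator of two elements of `G`, `0 < ε < 1/32`, and `ξ` is a weak
`ε`-approximate fixed point of `G`, then `G` has a nonzero fixed point `η` with
`‖η - ξ‖ ≤ 4√(2ε)`. -/
theorem stmt_4 (n : ℕ) (hn : 1 ≤ n) (ε : ℝ) (hε : 0 < ε) (hε1 : ε < 1 / 32)
    (G : Set (Matrix (Fin n) (Fin n) ℂ))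
    (hone : (1 : Matrix (Fin n) (Fin n) ℂ) ∈ G)
    (hmul : ∀ A ∈ G, ∀ B ∈ G, A * B ∈ G)
    (hinv : ∀ A ∈ G, A⁻¹ ∈ G)
    (hunitary : ∀ A ∈ G, A ∈ Matrix.unitaryGroup (Fin n) ℂ)
    (hclosed : IsClosed G)
    (hcomm : ∀ C ∈ G, ∃ A ∈ G, ∃ B ∈ G, C = A * B * A⁻¹ * B⁻¹)
    (ξ : EuclideanSpace ℂ (Fin n)) (hξ : ‖ξ‖ = 1)
    (hweak : ∀ A ∈ G, 1 - ε ≤ ‖(inner ℂ ξ (Matrix.toEuclideanLin A ξ) : ℂ)‖) :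
    ∃ η : EuclideanSpace ℂ (Fin n), η ≠ 0 ∧
      (∀ A ∈ G, Matrix.toEuclideanLin A η = η) ∧ ‖η - ξ‖ ≤ 4 * Real.sqrt (2 * ε) :=
  stmt_4_general n ε hε1 G hone hmul hunitary hcomm ξ hξ hweak
end

section
/- Let n ≥ 1 and 0 < ε < 1. Suppose 𝒢 is an indecomposable monomial group of n×n unitary matrices and ξ ∈ ℂⁿ is a unit vector with |⟨Gξ, ξ⟩| ≥ 1 − ε for all G ∈ 𝒢. Let |ξ| ∈ ℝⁿ denote the vector of entrywise absolute values of ξ and let η = (1/√n)(1, 1, …, 1). Then η is fixed by every permutation matrix |G| (G ∈ 𝒢, |G| the matrix of entrywise absolute values), and ‖η − |ξ|‖ ≤ n√(nε). -/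
/-!
Write `u = |ξ|`, a nonnegative unit vector. For a monomial `A` with underlying permutation `σ`,
`|⟨Aξ, ξ⟩| ≤ ∑ₖ u k * u (σ⁻¹ k)`, so `∑ₖ (u k - u (σ⁻¹ k))² = 2 - 2 ∑ₖ u k * u (σ⁻¹ k) ≤ 2ε`.
By transitivity every pair `(i, j)` occurs as `(k, σ⁻¹ k)` for some `A ∈ 𝒢`, hence
`(u i - u j)² ≤ 2ε` for all `i, j`. Since `∑ u² = 1`, the constant `1/√n` lies between the
smallest and the largest coordinate of `u`, so every coordinate of `η - u` has square at most
`2ε`, and `‖η - u‖² ≤ 2nε ≤ n³ε` unless `n = 1`, where `u = η`.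
-/

open Finset Matrix

section UnitVector

variable {ι : Type*} [Fintype ι] {u : ι → ℝ} {δ : ℝ}

theorem sq_sub_comp_perm_le (hu : ∑ i, u i ^ 2 = 1) (σ : Equiv.Perm ι) {ε : ℝ}
    (h : 1 - ε ≤ ∑ i, u i * u (σ i)) (k : ι) : (u k - u (σ k)) ^ 2 ≤ 2 * ε := by
  have hsum : ∑ i, (u i - u (σ i)) ^ 2 = 2 - 2 * ∑ i, u i * u (σ i) := by
    simp only [sub_sq, sum_add_distrib, sum_sub_distrib, mul_assoc, ← mul_sum,
      Equiv.sum_comp σ (fun i => u i ^ 2), hu]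
    ring
  calc (u k - u (σ k)) ^ 2 ≤ ∑ i, (u i - u (σ i)) ^ 2 :=
        single_le_sum (f := fun i => (u i - u (σ i)) ^ 2) (fun i _ => sq_nonneg _)
          (mem_univ k)
    _ ≤ 2 * ε := by linarith

variable (hu0 : ∀ i, 0 ≤ u i) (hu : ∑ i, u i ^ 2 = 1)
include hu0 hu

theorem exists_inv_sqrt_card_le [Nonempty ι] : ∃ j, 1 / √(Fintype.card ι) ≤ u j := by
  have hsum : ∑ _i : ι, (1 / Fintype.card ι : ℝ) ≤ ∑ i, u i ^ 2 := by simp [hu]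
  obtain ⟨j, -, hj⟩ := exists_le_of_sum_le univ_nonempty hsum
  refine ⟨j, ?_⟩
  rw [one_div, ← Real.sqrt_inv, ← Real.sqrt_sq (hu0 j), ← one_div]
  exact Real.sqrt_le_sqrt hj

theorem exists_le_inv_sqrt_card [Nonempty ι] : ∃ j, u j ≤ 1 / √(Fintype.card ι) := by
  have hsum : ∑ i, u i ^ 2 ≤ ∑ _i : ι, (1 / Fintype.card ι : ℝ) := by simp [hu]
  obtain ⟨j, -, hj⟩ := exists_le_of_sum_le univ_nonempty hsum
  refine ⟨j, ?_⟩
  rw [one_div, ← Real.sqrt_inv, ← Real.sqrt_sq (hu0 j), ← one_div]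
  exact Real.sqrt_le_sqrt hj

theorem sq_inv_sqrt_card_sub_le (hpair : ∀ i j, (u i - u j) ^ 2 ≤ δ) (i : ι) :
    (1 / √(Fintype.card ι) - u i) ^ 2 ≤ δ := by
  have : Nonempty ι := ⟨i⟩
  obtain ⟨j, hj⟩ := exists_inv_sqrt_card_le hu0 hu
  obtain ⟨j', hj'⟩ := exists_le_inv_sqrt_card hu0 hu
  have h := abs_le.mp (Real.abs_le_sqrt (hpair j i))
  have h' := abs_le.mp (Real.abs_le_sqrt (hpair j' i))
  calc (1 / √(Fintype.card ι) - u i) ^ 2 ≤ √δ ^ 2 := sq_le_sq' (by linarith) (by linarith)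
    _ = δ := Real.sq_sqrt ((sq_nonneg _).trans (hpair i i))

theorem norm_const_inv_sqrt_card_sub_sq_le (hpair : ∀ i j, (u i - u j) ^ 2 ≤ δ) :
    ‖(WithLp.toLp 2 ((fun _ => 1 / √(Fintype.card ι)) - u) : EuclideanSpace ℝ ι)‖ ^ 2
      ≤ Fintype.card ι * δ := by
  rw [EuclideanSpace.norm_sq_eq]
  calc ∑ i, ‖(WithLp.toLp 2 ((fun _ => 1 / √(Fintype.card ι)) - u) : EuclideanSpace ℝ ι) i‖ ^ 2
      = ∑ i, (1 / √(Fintype.card ι) - u i) ^ 2 := by simp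
    _ ≤ ∑ _i : ι, δ := sum_le_sum fun i _ => sq_inv_sqrt_card_sub_le hu0 hu hpair i
    _ = Fintype.card ι * δ := by simp

end UnitVector

theorem EuclideanSpace.sum_norm_sq_eq_one {𝕜 ι : Type*} [RCLike 𝕜] [Fintype ι]
    {ξ : EuclideanSpace 𝕜 ι} (hξ : ‖ξ‖ = 1) : ∑ i, ‖ξ i‖ ^ 2 = 1 := by
  simpa [hξ] using (EuclideanSpace.norm_sq_eq ξ).symm

section Monomial

variable {ι 𝕜 : Type*} [Fintype ι] [DecidableEq ι] [RCLike 𝕜] {A : Matrix ι ι 𝕜}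
  {σ : Equiv.Perm ι}

theorem norm_mulVec_apply_of_norm_eq_perm (hσ : ∀ i j, ‖A i j‖ = if σ j = i then 1 else 0)
    (x : ι → 𝕜) (k : ι) : ‖(A *ᵥ x) k‖ = ‖x (σ.symm k)‖ := by
  have hzero : ∀ m, m ≠ σ.symm k → A k m * x m = 0 := fun m hm => by
    rw [← norm_eq_zero, norm_mul, hσ, if_neg fun h => hm (σ.eq_symm_apply.mpr h), zero_mul]
  rw [Matrix.mulVec, dotProduct, Fintype.sum_eq_single _ hzero, norm_mul, hσ,
    if_pos (σ.apply_symm_apply k), one_mul]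

theorem mulVec_norm_const_of_norm_eq_perm (hσ : ∀ i j, ‖A i j‖ = if σ j = i then 1 else 0)
    (c : ℝ) : (Matrix.of fun i j => ‖A i j‖) *ᵥ (fun _ => c) = fun _ => c := by
  funext i
  simp [Matrix.mulVec, dotProduct, hσ, ← σ.eq_symm_apply]

theorem norm_inner_toEuclideanLin_le (hσ : ∀ i j, ‖A i j‖ = if σ j = i then 1 else 0)
    (ξ : EuclideanSpace 𝕜 ι) :
    ‖inner 𝕜 ξ (Matrix.toEuclideanLin A ξ)‖ ≤ ∑ k, ‖ξ k‖ * ‖ξ (σ.symm k)‖ := by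
  rw [Matrix.toLpLin_apply, PiLp.inner_apply]
  refine (norm_sum_le _ _).trans (sum_le_sum fun k _ => ?_)
  rw [← norm_mulVec_apply_of_norm_eq_perm hσ ξ.ofLp k]
  exact norm_inner_le_norm _ _

theorem sq_norm_sub_norm_le_of_ne_zero (hσ : ∀ i j, ‖A i j‖ = if σ j = i then 1 else 0)
    {ξ : EuclideanSpace 𝕜 ι} (hξ : ‖ξ‖ = 1) {ε : ℝ}
    (hweak : 1 - ε ≤ ‖inner 𝕜 ξ (Matrix.toEuclideanLin A ξ)‖) {i j : ι} (hij : A i j ≠ 0) :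
    (‖ξ i‖ - ‖ξ j‖) ^ 2 ≤ 2 * ε := by
  have hσj : σ.symm i = j := σ.symm_apply_eq.mpr <| by
    by_contra h
    exact hij (norm_eq_zero.mp ((hσ i j).trans (if_neg (Ne.symm h))))
  simpa [hσj] using sq_sub_comp_perm_le (EuclideanSpace.sum_norm_sq_eq_one hξ) σ.symm
    (hweak.trans (norm_inner_toEuclideanLin_le hσ ξ)) i

end Monomial

theorem two_mul_le_pow_three_of_ne_one {n : ℕ} (hn : n ≠ 1) : (2 * n : ℝ) ≤ n ^ 3 := by
  rcases n with _ | _ | n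
  · simp
  · contradiction
  · push_cast
    nlinarith [sq_nonneg (n : ℝ), (Nat.cast_nonneg n : (0 : ℝ) ≤ n)]

theorem stmt_6_general (n : ℕ) (ε : ℝ) (hε : 0 < ε)
    (G : Set (Matrix (Fin n) (Fin n) ℂ))
    (hmonomial : ∀ A ∈ G, ∃ σ : Equiv.Perm (Fin n),
      ∀ i j, ‖A i j‖ = if σ j = i then 1 else 0)
    (htrans : ∀ i j : Fin n, ∃ A ∈ G, A i j ≠ 0)
    (ξ : EuclideanSpace ℂ (Fin n)) (hξ : ‖ξ‖ = 1)
    (hweak : ∀ A ∈ G, 1 - ε ≤ ‖(inner ℂ ξ (Matrix.toEuclideanLin A ξ) : ℂ)‖) :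
    (∀ A ∈ G,
      (Matrix.of fun i j => (‖A i j‖ : ℝ)).mulVec
          (fun _ => 1 / Real.sqrt n) = fun _ => 1 / Real.sqrt n) ∧
    ‖(WithLp.toLp 2 ((fun _ => 1 / Real.sqrt n) - (fun i => ‖ξ i‖)) :
        EuclideanSpace ℝ (Fin n))‖ ≤ n * Real.sqrt (n * ε) := by
  refine ⟨fun A hA => ?_, ?_⟩
  · obtain ⟨σ, hσ⟩ := hmonomial A hA
    exact mulVec_norm_const_of_norm_eq_perm hσ _
  set u : Fin n → ℝ := fun i => ‖ξ i‖
  have hu0 : ∀ i, 0 ≤ u i := fun i => norm_nonneg _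
  have hu : ∑ i, u i ^ 2 = 1 := EuclideanSpace.sum_norm_sq_eq_one hξ
  have hpair : ∀ i j, (u i - u j) ^ 2 ≤ 2 * ε := fun i j => by
    obtain ⟨A, hA, hAij⟩ := htrans i j
    obtain ⟨σ, hσ⟩ := hmonomial A hA
    exact sq_norm_sub_norm_le_of_ne_zero hσ hξ (hweak A hA) hAij
  rw [← sq_le_sq₀ (norm_nonneg _) (by positivity), mul_pow, Real.sq_sqrt (by positivity)]
  obtain rfl | hn1 := eq_or_ne n 1
  · have h := norm_const_inv_sqrt_card_sub_sq_le hu0 hu (δ := 0) fun i j => by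
      simp [Subsingleton.elim i j]
    simp only [Fintype.card_fin, mul_zero] at h
    exact h.trans (by positivity)
  · have h := norm_const_inv_sqrt_card_sub_sq_le hu0 hu hpair
    rw [Fintype.card_fin] at h
    calc _ ≤ n * (2 * ε) := h
      _ ≤ n ^ 2 * (n * ε) := by nlinarith [two_mul_le_pow_three_of_ne_one hn1]

/-- If an indecomposable monomial group `G` of `n × n` unitary matrices
(all `|A|` are permutation matrices and the associated permutation group acts transitively)
has a weak `ε`-approximate fixed point `ξ`, then the vector `η = (1/√n)(1,…,1)` is fixed by
every permutation matrix `|A|` (`A ∈ G`), and `‖η - |ξ|‖ ≤ n√(nε)`. -/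
theorem stmt_6 (n : ℕ) (hn : 1 ≤ n) (ε : ℝ) (hε : 0 < ε) (hε1 : ε < 1)
    (G : Set (Matrix (Fin n) (Fin n) ℂ))
    (hone : (1 : Matrix (Fin n) (Fin n) ℂ) ∈ G)
    (hmul : ∀ A ∈ G, ∀ B ∈ G, A * B ∈ G)
    (hinv : ∀ A ∈ G, A⁻¹ ∈ G)
    (hunitary : ∀ A ∈ G, A ∈ Matrix.unitaryGroup (Fin n) ℂ)
    (hmonomial : ∀ A ∈ G, ∃ σ : Equiv.Perm (Fin n),
      ∀ i j, ‖A i j‖ = if σ j = i then 1 else 0)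
    (htrans : ∀ i j : Fin n, ∃ A ∈ G, A i j ≠ 0)
    (ξ : EuclideanSpace ℂ (Fin n)) (hξ : ‖ξ‖ = 1)
    (hweak : ∀ A ∈ G, 1 - ε ≤ ‖(inner ℂ ξ (Matrix.toEuclideanLin A ξ) : ℂ)‖) :
    (∀ A ∈ G,
      (Matrix.of fun i j => (‖A i j‖ : ℝ)).mulVec
          (fun _ => 1 / Real.sqrt n) = fun _ => 1 / Real.sqrt n) ∧
    ‖(WithLp.toLp 2 ((fun _ => 1 / Real.sqrt n) - (fun i => ‖ξ i‖)) :
        EuclideanSpace ℝ (Fin n))‖ ≤ n * Real.sqrt (n * ε) :=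
  stmt_6_general n ε hε G hmonomial htrans ξ hξ hweak
end

section
/- Let n ≥ 1 and 0 < ε < 1. Suppose 𝒢 is an indecomposable monomial group of n×n unitary matrices and ξ ∈ ℂⁿ is a unit vector with nonnegative real entries such that |⟨Gξ, ξ⟩| ≥ 1 − ε for all G ∈ 𝒢. If n√(nε) < 1/3, then the vector η = (1/√n)(1, 1, …, 1) satisfies |⟨Gη, η⟩| ≥ 1 − 3n√(nε) for every G ∈ 𝒢; that is, η is a weak 3n√(nε)-approximate fixed point of 𝒢. -/
/-!
Write `x i = |ξ i|`, a unit vector of ℝⁿ. A monomial `G` with permutation `σ` satisfies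
`|⟨Gξ, ξ⟩| ≤ ∑ x (σ j) x j`, so weak fixedness gives `‖x ∘ σ - x‖² ≤ 2ε`; by transitivity every
pair of coordinates satisfies `(x i - x j)² ≤ 2ε`. Summing over all pairs gives
`(∑ x i)² ≥ n - n²ε`, i.e. `τ := ⟨η, ξ⟩ = (∑ x i)/√n` satisfies `τ² ≥ 1 - nε`, hence
`‖ξ - η‖² = 2 - 2τ ≤ (16/9) nε`. Finally, for unitary `A` the map `v ↦ ⟨Av, v⟩` is
`2`-Lipschitz on unit vectors, so `|⟨Aη, η⟩| ≥ 1 - ε - 2‖ξ - η‖ ≥ 1 - 3n√(nε)`.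
-/

open Finset RCLike
open scoped InnerProductSpace ComplexConjugate ComplexOrder

section Monomial

variable {𝕜 ι : Type*} [RCLike 𝕜] [DecidableEq ι]
  {A : Matrix ι ι 𝕜} {σ : Equiv.Perm ι} (hA : ∀ i j, ‖A i j‖ = if σ j = i then 1 else 0)
include hA

lemma Matrix.eq_zero_of_monomial {i j : ι} (h : σ j ≠ i) : A i j = 0 :=
  norm_eq_zero.mp (by rw [hA, if_neg h])

lemma Matrix.norm_apply_perm_of_monomial (j : ι) : ‖A (σ j) j‖ = 1 := by
  rw [hA, if_pos rfl]

lemma Matrix.toEuclideanLin_apply_of_monomial [Fintype ι] (v : EuclideanSpace 𝕜 ι) (i : ι) :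
    Matrix.toEuclideanLin A v i = A i (σ.symm i) * v (σ.symm i) := by
  change ∑ j, A i j * v j = _
  refine Fintype.sum_eq_single (σ.symm i) fun j hj => ?_
  rw [Matrix.eq_zero_of_monomial hA fun h => hj (σ.eq_symm_apply.mpr h), zero_mul]

lemma Matrix.norm_inner_toEuclideanLin_le_of_monomial [Fintype ι] (v : EuclideanSpace 𝕜 ι) :
    ‖⟪v, Matrix.toEuclideanLin A v⟫_𝕜‖ ≤ ∑ j, ‖v (σ j)‖ * ‖v j‖ := by
  calc ‖⟪v, Matrix.toEuclideanLin A v⟫_𝕜‖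
      = ‖∑ i, conj (v i) * (A i (σ.symm i) * v (σ.symm i))‖ := by
        simp only [PiLp.inner_apply, RCLike.inner_apply',
          Matrix.toEuclideanLin_apply_of_monomial hA]
    _ ≤ ∑ i, ‖conj (v i) * (A i (σ.symm i) * v (σ.symm i))‖ := norm_sum_le _ _
    _ = ∑ j, ‖v (σ j)‖ * ‖v j‖ := by
        rw [← Equiv.sum_comp σ]
        refine sum_congr rfl fun j _ => ?_
        rw [σ.symm_apply_apply, norm_mul, norm_mul, RCLike.norm_conj,
          Matrix.norm_apply_perm_of_monomial hA, one_mul]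

end Monomial

lemma sq_sub_apply_perm_le {ι : Type*} [Fintype ι] (x : ι → ℝ) (σ : Equiv.Perm ι) (j : ι) :
    (x (σ j) - x j) ^ 2 ≤ 2 * ∑ k, x k ^ 2 - 2 * ∑ k, x (σ k) * x k := by
  calc (x (σ j) - x j) ^ 2 ≤ ∑ k, (x (σ k) - x k) ^ 2 :=
        single_le_sum (f := fun k => (x (σ k) - x k) ^ 2) (fun _ _ => sq_nonneg _) (mem_univ j)
    _ = ∑ k, x (σ k) ^ 2 + ∑ k, x k ^ 2 - 2 * ∑ k, x (σ k) * x k := by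
        simp only [sub_sq, sum_add_distrib, sum_sub_distrib, mul_sum, mul_assoc]; ring
    _ = _ := by rw [Equiv.sum_comp σ (fun k => x k ^ 2)]; ring

lemma sum_sum_sub_sq {ι : Type*} [Fintype ι] (x : ι → ℝ) :
    ∑ i, ∑ j, (x i - x j) ^ 2 = 2 * Fintype.card ι * ∑ i, x i ^ 2 - 2 * (∑ i, x i) ^ 2 := by
  simp only [sub_sq, sum_add_distrib, sum_sub_distrib, sum_const, card_univ, nsmul_eq_mul,
    ← mul_sum, ← sum_mul, sq (∑ i, x i)]
  ring

lemma card_mul_sum_sq_le {ι : Type*} [Fintype ι] (x : ι → ℝ) {δ : ℝ}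
    (h : ∀ i j, (x i - x j) ^ 2 ≤ δ) :
    Fintype.card ι * ∑ i, x i ^ 2 ≤ (∑ i, x i) ^ 2 + Fintype.card ι ^ 2 * δ / 2 := by
  have : ∑ i, ∑ j, (x i - x j) ^ 2 ≤ Fintype.card ι ^ 2 * δ := by
    calc _ ≤ ∑ _i : ι, ∑ _j : ι, δ := sum_le_sum fun i _ => sum_le_sum fun j _ => h i j
      _ = _ := by simp [sq, mul_assoc]
  linarith [sum_sum_sub_sq x]

lemma ContinuousLinearMap.norm_inner_map_self_sub_le {𝕜 E : Type*} [RCLike 𝕜]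
    [NormedAddCommGroup E] [InnerProductSpace 𝕜 E] (u : E →L[𝕜] E) (x y : E) :
    ‖⟪x, u x⟫_𝕜 - ⟪y, u y⟫_𝕜‖ ≤ ‖u‖ * (‖x‖ + ‖y‖) * ‖x - y‖ := by
  have : ⟪x, u x⟫_𝕜 - ⟪y, u y⟫_𝕜 = ⟪x - y, u x⟫_𝕜 + ⟪y, u (x - y)⟫_𝕜 := by
    simp only [inner_sub_left, inner_sub_right, map_sub]; ring
  rw [this]
  calc _ ≤ ‖x - y‖ * ‖u x‖ + ‖y‖ * ‖u (x - y)‖ :=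
        (norm_add_le _ _).trans (add_le_add (norm_inner_le_norm _ _) (norm_inner_le_norm _ _))
    _ ≤ ‖x - y‖ * (‖u‖ * ‖x‖) + ‖y‖ * (‖u‖ * ‖x - y‖) := by
        gcongr <;> exact u.le_opNorm _
    _ = _ := by ring

lemma Matrix.opNorm_toEuclideanCLM_le_one_of_mem_unitaryGroup {𝕜 ι : Type*} [RCLike 𝕜]
    [Fintype ι] [DecidableEq ι]
    {A : Matrix ι ι 𝕜} (hA : A ∈ Matrix.unitaryGroup ι 𝕜) :
    ‖Matrix.toEuclideanCLM (n := ι) (𝕜 := 𝕜) A‖ ≤ 1 :=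
  ContinuousLinearMap.opNorm_le_bound _ zero_le_one fun v => by
    rw [ContinuousLinearMap.norm_map_of_mem_unitary (Unitary.map_mem _ hA), one_mul]

lemma EuclideanSpace.re_inner_toLp_const {𝕜 ι : Type*} [RCLike 𝕜] [Fintype ι] (c : ℝ)
    (v : EuclideanSpace 𝕜 ι) :
    re ⟪WithLp.toLp 2 (fun _ : ι => (c : 𝕜)), v⟫_𝕜 = c * ∑ i, re (v i) := by
  simp [PiLp.inner_apply, mul_sum, mul_comm]

lemma EuclideanSpace.re_inner_toLp_const_of_nonneg {ι : Type*} [Fintype ι] (c : ℝ)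
    {v : EuclideanSpace ℂ ι} (hv : ∀ i, 0 ≤ v i) :
    re ⟪WithLp.toLp 2 (fun _ : ι => (c : ℂ)), v⟫_ℂ = c * ∑ i, ‖v i‖ := by
  refine (EuclideanSpace.re_inner_toLp_const c v).trans ?_
  exact congrArg (c * ·) (sum_congr rfl fun i _ => Complex.re_eq_norm.mpr (hv i))

lemma EuclideanSpace.norm_toLp_inv_sqrt_card {𝕜 ι : Type*} [RCLike 𝕜] [Fintype ι]
    [Nonempty ι] :
    ‖WithLp.toLp 2 (fun _ : ι => ((1 / Real.sqrt (Fintype.card ι) : ℝ) : 𝕜))‖ = 1 := by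
  rw [EuclideanSpace.norm_eq]
  simp [Real.sq_sqrt]

lemma sq_norm_sub_norm_le_of_monomial {𝕜 ι : Type*} [RCLike 𝕜] [Fintype ι] [DecidableEq ι]
    {A : Matrix ι ι 𝕜} {σ : Equiv.Perm ι} (hA : ∀ i j, ‖A i j‖ = if σ j = i then 1 else 0)
    {ξ : EuclideanSpace 𝕜 ι} (hξ : ‖ξ‖ = 1) {ε : ℝ}
    (hweak : 1 - ε ≤ ‖⟪ξ, Matrix.toEuclideanLin A ξ⟫_𝕜‖) {i j : ι} (hij : A i j ≠ 0) :
    (‖ξ i‖ - ‖ξ j‖) ^ 2 ≤ 2 * ε := by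
  have hσ : σ j = i := by_contra fun h => hij (Matrix.eq_zero_of_monomial hA h)
  have hsum : ∑ k, ‖ξ k‖ ^ 2 = 1 := by rw [← EuclideanSpace.norm_sq_eq, hξ, one_pow]
  have hperm := sq_sub_apply_perm_le (fun k => ‖ξ k‖) σ j
  rw [hσ, hsum] at hperm
  linarith [Matrix.norm_inner_toEuclideanLin_le_of_monomial hA ξ]

lemma one_sub_card_mul_le_sq_inv_sqrt_card_mul_sum_norm {𝕜 ι : Type*} [RCLike 𝕜] [Fintype ι] [Nonempty ι]
    {ξ : EuclideanSpace 𝕜 ι} (hξ : ‖ξ‖ = 1) {ε : ℝ}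
    (h : ∀ i j, (‖ξ i‖ - ‖ξ j‖) ^ 2 ≤ 2 * ε) :
    1 - Fintype.card ι * ε ≤ (1 / √(Fintype.card ι) * ∑ i, ‖ξ i‖) ^ 2 := by
  have hsum : ∑ k, ‖ξ k‖ ^ 2 = 1 := by rw [← EuclideanSpace.norm_sq_eq, hξ, one_pow]
  have hcard : (0 : ℝ) < Fintype.card ι := by exact_mod_cast Fintype.card_pos
  have := card_mul_sum_sq_le (fun k => ‖ξ k‖) h
  rw [hsum] at this
  rw [one_div_mul_eq_div, div_pow, Real.sq_sqrt hcard.le, le_div_iff₀ hcard]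
  nlinarith

lemma two_sub_two_mul_le_of_one_sub_le_sq {t τ : ℝ} (ht : 0 ≤ t) (ht9 : t ≤ 1 / 9) (hτ : 0 ≤ τ)
    (hτsq : 1 - t ≤ τ ^ 2) : 2 - 2 * τ ≤ 16 / 9 * t := by
  by_contra! h
  -- otherwise `τ < 1 - 8t/9`, and then `τ² < (1 - 8t/9)² ≤ 1 - t`
  nlinarith [mul_pos (by linarith : 0 < 1 - 8 / 9 * t - τ) (by linarith : 0 < 1 - 8 / 9 * t + τ)]

lemma add_two_mul_le_of_one_sub_le_sq {n ε τ d : ℝ} (hn : 1 ≤ n) (hε : 0 ≤ ε) (hτ : 0 ≤ τ)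
    (hτsq : 1 - n * ε ≤ τ ^ 2) (hd : d ^ 2 = 2 - 2 * τ) (hsmall : n * √(n * ε) < 1 / 3) :
    ε + 2 * d ≤ 3 * (n * √(n * ε)) := by
  set s := √(n * ε)
  have hs0 : 0 ≤ s := Real.sqrt_nonneg _
  have hs2 : s ^ 2 = n * ε := Real.sq_sqrt (by positivity)
  have hsn : s ≤ n * s := le_mul_of_one_le_left hs0 hn
  have hd_le : d ≤ 4 / 3 * s := by
    refine (abs_le_of_sq_le_sq' ?_ (by positivity)).2
    have := two_sub_two_mul_le_of_one_sub_le_sq (by positivity) (by nlinarith) hτ hτsq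
    nlinarith
  nlinarith

theorem stmt_7_general (n : ℕ) (hn : 1 ≤ n) (ε : ℝ) (hε : 0 < ε)
    (G : Set (Matrix (Fin n) (Fin n) ℂ))
    (hunitary : ∀ A ∈ G, A ∈ Matrix.unitaryGroup (Fin n) ℂ)
    (hmonomial : ∀ A ∈ G, ∃ σ : Equiv.Perm (Fin n),
      ∀ i j, ‖A i j‖ = if σ j = i then 1 else 0)
    (htrans : ∀ i j : Fin n, ∃ A ∈ G, A i j ≠ 0)
    (ξ : EuclideanSpace ℂ (Fin n)) (hξ : ‖ξ‖ = 1)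
    (hreal : ∀ i, (ξ i).im = 0 ∧ 0 ≤ (ξ i).re)
    (hweak : ∀ A ∈ G, 1 - ε ≤ ‖(inner ℂ ξ (Matrix.toEuclideanLin A ξ) : ℂ)‖)
    (hsmall : (n : ℝ) * Real.sqrt (n * ε) < 1 / 3) :
    ∀ A ∈ G,
      1 - 3 * ((n : ℝ) * Real.sqrt (n * ε)) ≤
        ‖(@inner ℂ (EuclideanSpace ℂ (Fin n)) _
          (WithLp.toLp 2 (fun _ => ((1 / Real.sqrt n : ℝ) : ℂ)))
          (Matrix.toEuclideanLin A (WithLp.toLp 2 (fun _ => ((1 / Real.sqrt n : ℝ) : ℂ)))))‖ := by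
  intro A hA
  have : NeZero n := ⟨by omega⟩
  set η : EuclideanSpace ℂ (Fin n) := WithLp.toLp 2 (fun _ => ((1 / Real.sqrt n : ℝ) : ℂ))
  have hη : ‖η‖ = 1 := by
    have := EuclideanSpace.norm_toLp_inv_sqrt_card (𝕜 := ℂ) (ι := Fin n)
    rwa [Fintype.card_fin] at this
  have hpair : ∀ i j, (‖ξ i‖ - ‖ξ j‖) ^ 2 ≤ 2 * ε := fun i j => by
    obtain ⟨B, hB, hij⟩ := htrans i j
    obtain ⟨σ, hσ⟩ := hmonomial B hB
    exact sq_norm_sub_norm_le_of_monomial hσ hξ (hweak B hB) hij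
  have hτ : re ⟪η, ξ⟫_ℂ = 1 / √n * ∑ i, ‖ξ i‖ :=
    EuclideanSpace.re_inner_toLp_const_of_nonneg _ fun i =>
      Complex.nonneg_iff.mpr ⟨(hreal i).2, (hreal i).1.symm⟩
  have hτsq : 1 - n * ε ≤ (re ⟪η, ξ⟫_ℂ) ^ 2 := by
    simpa [hτ] using one_sub_card_mul_le_sq_inv_sqrt_card_mul_sum_norm hξ hpair
  have hd : ‖ξ - η‖ ^ 2 = 2 - 2 * re ⟪η, ξ⟫_ℂ := by
    rw [norm_sub_rev, norm_sub_sq (𝕜 := ℂ), hη, hξ]; ring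
  have hnum := add_two_mul_le_of_one_sub_le_sq (by exact_mod_cast hn) hε.le
    (hτ ▸ by positivity) hτsq hd hsmall
  set U := Matrix.toEuclideanCLM (n := Fin n) (𝕜 := ℂ) A
  have hU : ‖U‖ ≤ 1 := Matrix.opNorm_toEuclideanCLM_le_one_of_mem_unitaryGroup (hunitary A hA)
  have hclose : ‖⟪ξ, Matrix.toEuclideanLin A ξ⟫_ℂ‖ - ‖⟪η, Matrix.toEuclideanLin A η⟫_ℂ‖
      ≤ ‖U‖ * (‖ξ‖ + ‖η‖) * ‖ξ - η‖ :=
    (norm_sub_norm_le _ _).trans (U.norm_inner_map_self_sub_le ξ η)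
  rw [hξ, hη] at hclose
  nlinarith [hweak A hA, norm_nonneg (ξ - η)]

/-- Let `G` be an indecomposable monomial group of `n × n` unitary
matrices and `ξ` a unit vector with nonnegative real entries which is a weak
`ε`-approximate fixed point of `G`. If `n√(nε) < 1/3`, then `η = (1/√n)(1,…,1)` is a weak
`3n√(nε)`-approximate fixed point of `G`. -/
theorem stmt_7 (n : ℕ) (hn : 1 ≤ n) (ε : ℝ) (hε : 0 < ε) (hε1 : ε < 1)
    (G : Set (Matrix (Fin n) (Fin n) ℂ))
    (hone : (1 : Matrix (Fin n) (Fin n) ℂ) ∈ G)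
    (hmul : ∀ A ∈ G, ∀ B ∈ G, A * B ∈ G)
    (hinv : ∀ A ∈ G, A⁻¹ ∈ G)
    (hunitary : ∀ A ∈ G, A ∈ Matrix.unitaryGroup (Fin n) ℂ)
    (hmonomial : ∀ A ∈ G, ∃ σ : Equiv.Perm (Fin n),
      ∀ i j, ‖A i j‖ = if σ j = i then 1 else 0)
    (htrans : ∀ i j : Fin n, ∃ A ∈ G, A i j ≠ 0)
    (ξ : EuclideanSpace ℂ (Fin n)) (hξ : ‖ξ‖ = 1)
    (hreal : ∀ i, (ξ i).im = 0 ∧ 0 ≤ (ξ i).re)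
    (hweak : ∀ A ∈ G, 1 - ε ≤ ‖(inner ℂ ξ (Matrix.toEuclideanLin A ξ) : ℂ)‖)
    (hsmall : (n : ℝ) * Real.sqrt (n * ε) < 1 / 3) :
    ∀ A ∈ G,
      1 - 3 * ((n : ℝ) * Real.sqrt (n * ε)) ≤
        ‖(@inner ℂ (EuclideanSpace ℂ (Fin n)) _
          (WithLp.toLp 2 (fun _ => ((1 / Real.sqrt n : ℝ) : ℂ)))
          (Matrix.toEuclideanLin A (WithLp.toLp 2 (fun _ => ((1 / Real.sqrt n : ℝ) : ℂ)))))‖ :=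
  stmt_7_general n hn ε hε G hunitary hmonomial htrans ξ hξ hreal hweak hsmall
end

section
/- Let k ≥ 1, let φ₁, …, φ_k ∈ [−π, π], and let 0 < ε < 1. If |1 + Σ_{j=1}^k e^{iφ_j}| ≥ (k+1)(1 − ε), then Σ_{j=1}^k |φ_j| < π √k (k+1) √(ε/2). -/
/-!
Write `w = ∑ e^{iφ_j}`, so `‖w‖ ≤ k`. Expanding `‖1 + w‖² = 1 + 2 Re w + ‖w‖²` shows that the
hypothesis forces `∑ (1 - cos φ_j) = k - Re w` to be at most `(k+1)² (2ε - ε²) / 2`. On `[-π, π]`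
Jordan's inequality gives `φ² ≤ π²/2 · (1 - cos φ)`, which bounds `∑ φ_j²`, and Cauchy–Schwarz
turns this into the bound on `∑ |φ_j|`.
-/

open Finset

section SumExp

open Complex

lemma sq_norm_one_add_le {w : ℂ} {r : ℝ} (hw : ‖w‖ ≤ r) :
    ‖1 + w‖ ^ 2 ≤ (r + 1) ^ 2 - 2 * (r - w.re) := by
  have hexpand : ‖1 + w‖ ^ 2 = 1 + 2 * w.re + ‖w‖ ^ 2 := by
    rw [Complex.sq_norm, Complex.sq_norm, normSq_apply, normSq_apply]
    simp only [add_re, one_re, add_im, one_im]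
    ring
  nlinarith [norm_nonneg w]

variable {ι : Type*} [Fintype ι] (φ : ι → ℝ)

lemma norm_sum_exp_ofReal_mul_I_le : ‖∑ j, exp (φ j * I)‖ ≤ Fintype.card ι :=
  calc ‖∑ j, exp (φ j * I)‖ ≤ ∑ j, ‖exp (φ j * I)‖ := norm_sum_le _ _
    _ = Fintype.card ι := by simp [norm_exp_ofReal_mul_I]

lemma re_sum_exp_ofReal_mul_I : (∑ j, exp (φ j * I)).re = ∑ j, Real.cos (φ j) := by
  simp [re_sum, exp_ofReal_mul_I_re]

lemma sum_one_sub_cos_le_of_le_norm {ρ : ℝ} (hρ : 0 ≤ ρ)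
    (h : ρ ≤ ‖1 + ∑ j, exp (φ j * I)‖) :
    ∑ j, (1 - Real.cos (φ j)) ≤ ((Fintype.card ι + 1) ^ 2 - ρ ^ 2) / 2 := by
  have hupper := sq_norm_one_add_le (norm_sum_exp_ofReal_mul_I_le φ)
  rw [re_sum_exp_ofReal_mul_I] at hupper
  have hlower := pow_le_pow_left₀ hρ h 2
  rw [sum_sub_distrib, sum_const, card_univ, nsmul_one]
  linarith

end SumExp

open Real

lemma sq_le_pi_sq_div_two_mul_one_sub_cos {x : ℝ} (hx : |x| ≤ π) :
    x ^ 2 ≤ π ^ 2 / 2 * (1 - cos x) := by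
  have hjordan := cos_le_one_sub_mul_cos_sq hx
  have hπ : 0 < π ^ 2 := by positivity
  calc x ^ 2 = π ^ 2 / 2 * (2 / π ^ 2 * x ^ 2) := by field_simp
    _ ≤ π ^ 2 / 2 * (1 - cos x) := by gcongr; linarith

lemma sq_sum_abs_le_card_mul_sum_sq {ι : Type*} [Fintype ι] (f : ι → ℝ) :
    (∑ j, |f j|) ^ 2 ≤ Fintype.card ι * ∑ j, f j ^ 2 := by
  simpa [sq_abs] using sq_sum_le_card_mul_sum_sq (s := univ) (f := fun j => |f j|)

/-- Let `k ≥ 1`, `φ₁, …, φ_k ∈ [-π, π]`, and `0 < ε < 1`. If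
`|1 + ∑ e^{iφ_j}| ≥ (k+1)(1-ε)`, then `∑ |φ_j| < π √k (k+1) √(ε/2)`. -/
theorem stmt_9 (k : ℕ) (hk : 1 ≤ k) (φ : Fin k → ℝ)
    (hφ : ∀ j, -Real.pi ≤ φ j ∧ φ j ≤ Real.pi)
    (ε : ℝ) (hε : 0 < ε) (hε1 : ε < 1)
    (h : ((k : ℝ) + 1) * (1 - ε) ≤
      ‖1 + ∑ j, Complex.exp (φ j * Complex.I)‖) :
    ∑ j, |φ j| < Real.pi * Real.sqrt k * ((k : ℝ) + 1) * Real.sqrt (ε / 2) := by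
  have hcos := sum_one_sub_cos_le_of_le_norm φ (mul_nonneg (by positivity) (by linarith)) h
  rw [Fintype.card_fin] at hcos
  have hsq : ∑ j, φ j ^ 2 ≤ π ^ 2 / 2 * ∑ j, (1 - cos (φ j)) := by
    rw [mul_sum]
    exact sum_le_sum fun j _ => sq_le_pi_sq_div_two_mul_one_sub_cos (abs_le.2 (hφ j))
  have hcs := sq_sum_abs_le_card_mul_sum_sq φ
  rw [Fintype.card_fin] at hcs
  have hk' : (0 : ℝ) < k := by exact_mod_cast hk
  refine lt_of_pow_lt_pow_left₀ 2 (by positivity) ?_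
  rw [mul_pow, mul_pow, mul_pow, sq_sqrt hk'.le, sq_sqrt (by positivity)]
  calc (∑ j, |φ j|) ^ 2 ≤ k * ∑ j, φ j ^ 2 := hcs
    _ ≤ k * (π ^ 2 / 2 * (((k + 1) ^ 2 - ((k + 1) * (1 - ε)) ^ 2) / 2)) := by
      gcongr
      exact hsq.trans (by gcongr)
    _ < π ^ 2 * k * ((k : ℝ) + 1) ^ 2 * (ε / 2) := by
      have hgap : 0 < π ^ 2 * k * ((k : ℝ) + 1) ^ 2 * ε ^ 2 := by positivity
      linarith
end

section
/- Let n ≥ 1 and 0 < ε < 2/n³. Suppose g₁, …, g_n are complex numbers of modulus 1 such that g₁g₂⋯g_n = 1 and |g₁ + ⋯ + g_n| ≥ n(1 − ε). Then there exists a complex number α with |α| = 1 and αⁿ = 1 such that Σ_{j=1}^n |g_j − α| < πn√(2nε) and (Σ_{j=1}^n |g_j − α|²)^{1/2} < πn√(2ε). -/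
/-!
Let `u` be a unit vector in the direction of `S = ∑ gⱼ`. Then `∑ |gⱼ - u|² = 2(n - |S|) ≤ 2nε`,
so by Cauchy–Schwarz `∑ |gⱼ - u| ≤ n√(2ε)`. Since `∏ gⱼ = 1`, telescoping gives
`|uⁿ - 1| ≤ ∑ |gⱼ - u|`, and a unit complex number whose `n`-th power is within `δ` of `1`
lies within `πδ / 2n` of an `n`-th root of unity `α` (Jordan's inequality). The triangle
inequality, in `ℓ¹` and in `ℓ²`, then bounds the distances to `α` by `(1 + π/2)` times those to `u`,
and `1 + π/2 < π`.
-/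

open Finset Real

theorem Finset.norm_prod_sub_prod_le_sum {ι R : Type*} [NormedCommRing R] [NormOneClass R]
    (s : Finset ι) {a b : ι → R} (ha : ∀ i ∈ s, ‖a i‖ ≤ 1) (hb : ∀ i ∈ s, ‖b i‖ ≤ 1) :
    ‖∏ i ∈ s, a i - ∏ i ∈ s, b i‖ ≤ ∑ i ∈ s, ‖a i - b i‖ := by
  induction s using Finset.cons_induction with
  | empty => simp
  | cons j s _ ih =>
    simp only [Finset.forall_mem_cons] at ha hb
    have hprod : ‖∏ i ∈ s, a i‖ ≤ 1 :=
      (s.norm_prod_le a).trans (prod_le_one (fun _ _ ↦ norm_nonneg _) ha.2)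
    rw [prod_cons, prod_cons, sum_cons]
    calc ‖a j * ∏ i ∈ s, a i - b j * ∏ i ∈ s, b i‖
        = ‖(a j - b j) * ∏ i ∈ s, a i + b j * (∏ i ∈ s, a i - ∏ i ∈ s, b i)‖ := by ring_nf
      _ ≤ ‖a j - b j‖ * ‖∏ i ∈ s, a i‖ + ‖b j‖ * ‖∏ i ∈ s, a i - ∏ i ∈ s, b i‖ :=
        (norm_add_le _ _).trans (add_le_add (norm_mul_le _ _) (norm_mul_le _ _))
      _ ≤ ‖a j - b j‖ * 1 + 1 * ∑ i ∈ s, ‖a i - b i‖ := by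
        gcongr
        · exact hb.1
        · exact ih ha.2 hb.2
      _ = _ := by ring

section InnerProductSpace

variable {E : Type*} [NormedAddCommGroup E] [InnerProductSpace ℝ E]

theorem sum_norm_sub_sq_eq_of_norm_eq_one {ι : Type*} (s : Finset ι) {x : ι → E}
    (hx : ∀ i ∈ s, ‖x i‖ = 1) {u : E} (hu : ‖u‖ = 1) :
    ∑ i ∈ s, ‖x i - u‖ ^ 2 = 2 * (#s - inner ℝ (∑ i ∈ s, x i) u) := by
  have hterm : ∀ i ∈ s, ‖x i - u‖ ^ 2 = 2 - 2 * inner ℝ (x i) u := fun i hi ↦ by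
    rw [norm_sub_sq_real, hx i hi, hu]
    ring
  rw [sum_congr rfl hterm, sum_sub_distrib, sum_const, nsmul_eq_mul, ← mul_sum, sum_inner]
  ring

theorem exists_norm_eq_one_inner_eq_norm [Nontrivial E] (v : E) :
    ∃ u : E, ‖u‖ = 1 ∧ inner ℝ v u = ‖v‖ := by
  by_cases hv : v = 0
  · obtain ⟨u, hu⟩ := exists_norm_eq E zero_le_one
    exact ⟨u, hu, by simp [hv]⟩
  · refine ⟨(‖v‖ : ℝ)⁻¹ • v, norm_smul_inv_norm hv, ?_⟩
    rw [real_inner_smul_right, real_inner_self_eq_norm_sq]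
    field_simp [norm_ne_zero_iff.mpr hv]

theorem exists_sum_norm_sub_sq_eq [Nontrivial E] {ι : Type*} (s : Finset ι) {x : ι → E}
    (hx : ∀ i ∈ s, ‖x i‖ = 1) :
    ∃ u : E, ‖u‖ = 1 ∧ ∑ i ∈ s, ‖x i - u‖ ^ 2 = 2 * (#s - ‖∑ i ∈ s, x i‖) := by
  obtain ⟨u, hu, hinner⟩ := exists_norm_eq_one_inner_eq_norm (∑ i ∈ s, x i)
  exact ⟨u, hu, by rw [sum_norm_sub_sq_eq_of_norm_eq_one s hx hu, hinner]⟩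

end InnerProductSpace

section Constant

variable {ι E : Type*} [Fintype ι] [SeminormedAddCommGroup E]

theorem sum_norm_sub_le_sum_norm_sub_add (f : ι → E) (a c : E) :
    ∑ i, ‖f i - c‖ ≤ ∑ i, ‖f i - a‖ + Fintype.card ι * ‖a - c‖ := by
  rw [← nsmul_eq_mul, ← card_univ, ← sum_const, ← sum_add_distrib]
  exact sum_le_sum fun i _ ↦ norm_sub_le_norm_sub_add_norm_sub _ _ _

theorem sqrt_sum_norm_sub_sq_le (f : ι → E) (a c : E) :
    √(∑ i, ‖f i - c‖ ^ 2) ≤ √(∑ i, ‖f i - a‖ ^ 2) + √(Fintype.card ι) * ‖a - c‖ := by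
  have hsplit : WithLp.toLp 2 (fun i ↦ f i - c) =
      WithLp.toLp 2 (fun i ↦ f i - a) + WithLp.toLp 2 (fun _ : ι ↦ a - c) := by
    rw [← WithLp.toLp_add]
    congr 1
    ext i
    simp
  have hconst : ‖WithLp.toLp 2 (fun _ : ι ↦ a - c)‖ = √(Fintype.card ι) * ‖a - c‖ := by
    simp only [PiLp.norm_eq_of_L2, sum_const, card_univ, nsmul_eq_mul]
    rw [sqrt_mul (Nat.cast_nonneg _), sqrt_sq (norm_nonneg _)]
  have := norm_add_le (WithLp.toLp 2 (fun i ↦ f i - a)) (WithLp.toLp 2 (fun _ : ι ↦ a - c))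
  rwa [← hsplit, hconst, PiLp.norm_eq_of_L2, PiLp.norm_eq_of_L2] at this

end Constant

theorem sum_le_sqrt_card_mul_sqrt_sum_sq {ι : Type*} (s : Finset ι) (f : ι → ℝ) :
    ∑ i ∈ s, f i ≤ √(#s) * √(∑ i ∈ s, f i ^ 2) := by
  simpa using Real.sum_mul_le_sqrt_mul_sqrt s (fun _ ↦ 1) f

/-- Write `uⁿ = exp(iθ)` with `|θ| ≤ π` and take `α = u · exp(-iθ/n)`. -/
theorem Complex.exists_pow_eq_one_norm_sub_le {u : ℂ} (hu : ‖u‖ = 1) {n : ℕ} (hn : n ≠ 0) :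
    ∃ α : ℂ, α ^ n = 1 ∧ ‖u - α‖ ≤ π / (2 * n) * ‖u ^ n - 1‖ := by
  set θ := (u ^ n).arg
  have hun : u ^ n = Complex.exp (Complex.I * θ) := by
    simpa [hu, mul_comm] using (Complex.norm_mul_exp_arg_mul_I (u ^ n)).symm
  set w := Complex.exp (Complex.I * (θ / n : ℝ))
  have hw : ‖w‖ = 1 := Complex.norm_exp_I_mul_ofReal _
  have hw0 : w ≠ 0 := Complex.exp_ne_zero _
  have hwn : w ^ n = u ^ n := by
    rw [hun, ← Complex.exp_nat_mul]
    congr 1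
    push_cast
    field_simp
  have hu0 : u ≠ 0 := norm_ne_zero_iff.mp (by simp [hu])
  refine ⟨u / w, by rw [div_pow, hwn, div_self (pow_ne_zero _ hu0)], ?_⟩
  have hdist : ‖u - u / w‖ ≤ |θ| / n := by
    rw [show u - u / w = u / w * (w - 1) by field_simp, norm_mul, norm_div, hu, hw, div_one,
      one_mul]
    exact Real.norm_exp_I_mul_ofReal_sub_one_le.trans_eq (by
      rw [Real.norm_eq_abs, abs_div, Nat.abs_cast])
  have hjordan : 2 / π * (|θ| / 2) ≤ |Real.sin (θ / 2)| := by
    have hθ := Complex.abs_arg_le_pi (u ^ n)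
    simpa [abs_div] using mul_abs_le_abs_sin (x := θ / 2) (by rw [abs_div, abs_two]; linarith)
  have hchord : ‖u ^ n - 1‖ = 2 * |Real.sin (θ / 2)| := by
    rw [hun, Complex.norm_exp_I_mul_ofReal_sub_one, norm_mul, Real.norm_eq_abs,
      Real.norm_eq_abs, abs_two]
  rw [hchord]
  calc ‖u - u / w‖ ≤ |θ| / n := hdist
    _ = π / (2 * n) * (2 * (2 / π * (|θ| / 2))) := by field_simp
    _ ≤ π / (2 * n) * (2 * |Real.sin (θ / 2)|) := by gcongr

theorem Complex.exists_pow_card_eq_one_sum_norm_sub_le {ι : Type*} [Fintype ι] [Nonempty ι]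
    {g : ι → ℂ} (hg : ∀ i, ‖g i‖ = 1) (hprod : ∏ i, g i = 1) {u : ℂ} (hu : ‖u‖ = 1) :
    ∃ α : ℂ, α ^ Fintype.card ι = 1 ∧
      ∑ i, ‖g i - α‖ ≤ (1 + π / 2) * ∑ i, ‖g i - u‖ ∧
      √(∑ i, ‖g i - α‖ ^ 2) ≤ (1 + π / 2) * √(∑ i, ‖g i - u‖ ^ 2) := by
  set n := Fintype.card ι
  set L := ∑ i, ‖g i - u‖
  set D := √(∑ i, ‖g i - u‖ ^ 2)
  have hn : (0 : ℝ) < n := by positivity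
  have hsqrt_n : √(n : ℝ) ^ 2 = n := sq_sqrt hn.le
  have hLD : L ≤ √n * D := by simpa using sum_le_sqrt_card_mul_sqrt_sum_sq univ fun i ↦ ‖g i - u‖
  have hpow : ‖u ^ n - 1‖ ≤ L := by
    have := univ.norm_prod_sub_prod_le_sum (a := g) (b := fun _ ↦ u) (fun i _ ↦ (hg i).le)
      (fun _ _ ↦ hu.le)
    rwa [hprod, prod_const, card_univ, norm_sub_rev] at this
  obtain ⟨α, hαn, hα⟩ := Complex.exists_pow_eq_one_norm_sub_le hu (Fintype.card_ne_zero (α := ι))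
  have hB : n * ‖u - α‖ ≤ π / 2 * L := by
    calc n * ‖u - α‖ ≤ n * (π / (2 * n) * L) := by gcongr; exact hα.trans (by gcongr)
      _ = π / 2 * L := by field_simp
  refine ⟨α, hαn, ?_, ?_⟩
  · linarith [sum_norm_sub_le_sum_norm_sub_add g u α]
  · have hB' : √n * ‖u - α‖ ≤ π / 2 * D := by
      have : √n * (√n * ‖u - α‖) ≤ √n * (π / 2 * D) := by
        rw [← mul_assoc, ← sq, hsqrt_n]
        nlinarith [pi_pos]
      exact le_of_mul_le_mul_left this (sqrt_pos.mpr hn)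
    linarith [sqrt_sum_norm_sub_sq_le g u α]

theorem stmt_10_general (n : ℕ) (hn : 1 ≤ n) (ε : ℝ) (hε : 0 < ε)
    (g : Fin n → ℂ) (hg : ∀ j, ‖g j‖ = 1)
    (hprod : ∏ j, g j = 1)
    (hsum : (n : ℝ) * (1 - ε) ≤ ‖∑ j, g j‖) :
    ∃ α : ℂ, ‖α‖ = 1 ∧ α ^ n = 1 ∧
      (∑ j, ‖g j - α‖) < Real.pi * n * Real.sqrt (2 * n * ε) ∧
      Real.sqrt (∑ j, ‖g j - α‖ ^ 2) < Real.pi * n * Real.sqrt (2 * ε) := by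
  have : NeZero n := ⟨by omega⟩
  set c := √(2 * ε)
  have hc : 0 < c := by positivity
  have hn1 : (1 : ℝ) ≤ √n := one_le_sqrt.mpr (by exact_mod_cast hn)
  obtain ⟨u, hu, hdist⟩ := exists_sum_norm_sub_sq_eq (univ : Finset (Fin n)) fun j _ ↦ hg j
  rw [card_univ, Fintype.card_fin] at hdist
  have hL2 : √(∑ j, ‖g j - u‖ ^ 2) ≤ √n * c := by
    rw [← sqrt_mul (Nat.cast_nonneg n)]
    exact sqrt_le_sqrt (by nlinarith)
  have hL1 : ∑ j, ‖g j - u‖ ≤ √n * (√n * c) := by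
    simpa using (sum_le_sqrt_card_mul_sqrt_sum_sq univ fun j ↦ ‖g j - u‖).trans
      (mul_le_mul_of_nonneg_left hL2 (sqrt_nonneg _))
  obtain ⟨α, hαn, hα1, hα2⟩ := Complex.exists_pow_card_eq_one_sum_norm_sub_le hg hprod hu
  rw [Fintype.card_fin] at hαn
  have hπ : 1 + π / 2 < π := by linarith [pi_gt_three]
  have hsqrt_n : √(n : ℝ) * √n = n := mul_self_sqrt (Nat.cast_nonneg n)
  refine ⟨α, Complex.norm_eq_one_of_pow_eq_one hαn (NeZero.ne n), hαn, ?_, ?_⟩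
  · rw [show 2 * n * ε = n * (2 * ε) by ring, sqrt_mul (Nat.cast_nonneg n)]
    calc ∑ j, ‖g j - α‖ ≤ (1 + π / 2) * (√n * (√n * c)) := hα1.trans (by gcongr)
      _ < π * (√n * (√n * c)) := by gcongr
      _ ≤ π * (√n * (√n * c)) * √n := le_mul_of_one_le_right (by positivity) hn1
      _ = π * n * (√n * c) := by linear_combination π * c * √n * hsqrt_n
  · calc √(∑ j, ‖g j - α‖ ^ 2) ≤ (1 + π / 2) * (√n * c) := hα2.trans (by gcongr)
      _ < π * (√n * c) := by gcongr
      _ ≤ π * (√n * c) * √n := le_mul_of_one_le_right (by positivity) hn1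
      _ = π * n * c := by linear_combination π * c * hsqrt_n

/-- Let `n ≥ 1` and `0 < ε < 2/n³`. If `g₁, …, g_n` are unimodular
complex numbers with `g₁ ⋯ g_n = 1` and `|g₁ + ⋯ + g_n| ≥ n(1-ε)`, then there is an `n`-th
root of unity `α` with `∑ |g_j - α| < πn√(2nε)` and `(∑ |g_j - α|²)^{1/2} < πn√(2ε)`. -/
theorem stmt_10 (n : ℕ) (hn : 1 ≤ n) (ε : ℝ) (hε : 0 < ε) (hε1 : ε < 2 / (n : ℝ) ^ 3)
    (g : Fin n → ℂ) (hg : ∀ j, ‖g j‖ = 1)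
    (hprod : ∏ j, g j = 1)
    (hsum : (n : ℝ) * (1 - ε) ≤ ‖∑ j, g j‖) :
    ∃ α : ℂ, ‖α‖ = 1 ∧ α ^ n = 1 ∧
      (∑ j, ‖g j - α‖) < Real.pi * n * Real.sqrt (2 * n * ε) ∧
      Real.sqrt (∑ j, ‖g j - α‖ ^ 2) < Real.pi * n * Real.sqrt (2 * ε) :=
  stmt_10_general n hn ε hε g hg hprod hsum
end

section
/- Let ℂⁿ = V₁ ⊕ V₂ ⊕ ⋯ ⊕ V_k be an orthogonal direct sum decomposition into nonzero subspaces, and let 𝒢 be a group of n×n unitary matrices such that for every G ∈ 𝒢 and every j ∈ {1,…,k} there is an index π(j) with G(V_j) ⊆ V_{π(j)}. Let 0 < ε < 1 and let ξ ∈ ℂⁿ be a unit vector with |⟨Gξ, ξ⟩| ≥ 1 − ε for all G ∈ 𝒢; write ξ_i for the orthogonal projection of ξ onto V_i. If ξ_i ≠ 0, then for every G ∈ 𝒢 with G(V_i) ⊆ V_i one has |⟨Gξ_i, ξ_i⟩| ≥ ‖ξ_i‖² − ε; equivalently, the unit vector ξ_i/‖ξ_i‖ satisfies |⟨G(ξ_i/‖ξ_i‖),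 ξ_i/‖ξ_i‖⟩| ≥ 1 − ε/‖ξ_i‖². -/
/-!
A unitary `U` that maps `Vᵢ` into itself also maps `Vᵢᗮ` into itself, so writing
`ξ = ξᵢ + η` with `η ⊥ Vᵢ` the cross terms of `⟪ξ, Uξ⟫` vanish:
`⟪ξ, Uξ⟫ = ⟪ξᵢ, Uξᵢ⟫ + ⟪η, Uη⟫`. By Cauchy–Schwarz `‖⟪η, Uη⟫‖ ≤ ‖η‖² = 1 - ‖ξᵢ‖²`,
hence `1 - ε ≤ ‖⟪ξᵢ, Uξᵢ⟫‖ + 1 - ‖ξᵢ‖²`.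
-/

open scoped InnerProductSpace

section

variable {𝕜 E : Type*} [RCLike 𝕜] [NormedAddCommGroup E] [InnerProductSpace 𝕜 E]

namespace LinearIsometry

variable (U : E →ₗᵢ[𝕜] E) {K : Submodule 𝕜 E}

theorem mapsTo_orthogonal [FiniteDimensional 𝕜 K] (hK : ∀ x ∈ K, U x ∈ K) :
    ∀ y ∈ Kᗮ, U y ∈ Kᗮ := by
  have hmap : K.map U.toLinearMap = K :=
    Submodule.eq_of_le_of_finrank_eq (Submodule.map_le_iff_le_comap.mpr hK)
      (Submodule.equivMapOfInjective _ U.injective K).finrank_eq.symm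
  intro y hy x hx
  rw [← hmap] at hx
  obtain ⟨x', hx', rfl⟩ := hx
  rw [coe_toLinearMap, U.inner_map_map]
  exact hy x' hx'

theorem inner_map_self_eq_add [K.HasOrthogonalProjection] (hK : ∀ x ∈ K, U x ∈ K)
    (hKperp : ∀ y ∈ Kᗮ, U y ∈ Kᗮ) (x : E) :
    ⟪x, U x⟫_𝕜 = ⟪K.starProjection x, U (K.starProjection x)⟫_𝕜 +
      ⟪Kᗮ.starProjection x, U (Kᗮ.starProjection x)⟫_𝕜 := by
  have hP : K.starProjection x ∈ K := K.starProjection_apply_mem x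
  have hQ : Kᗮ.starProjection x ∈ Kᗮ := Kᗮ.starProjection_apply_mem x
  conv_lhs => rw [← K.starProjection_add_starProjection_orthogonal x]
  rw [map_add, inner_add_left, inner_add_right, inner_add_right,
    Submodule.inner_right_of_mem_orthogonal hP (hKperp _ hQ),
    Submodule.inner_left_of_mem_orthogonal (hK _ hP) hQ, add_zero, zero_add]

theorem norm_inner_map_self_le [FiniteDimensional 𝕜 K] (hK : ∀ x ∈ K, U x ∈ K) (x : E) :
    ‖⟪x, U x⟫_𝕜‖ ≤
      ‖⟪K.starProjection x, U (K.starProjection x)⟫_𝕜‖ + (‖x‖ ^ 2 - ‖K.starProjection x‖ ^ 2) := by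
  set y := Kᗮ.starProjection x
  have hy : ‖⟪y, U y⟫_𝕜‖ ≤ ‖x‖ ^ 2 - ‖K.starProjection x‖ ^ 2 := by
    calc ‖⟪y, U y⟫_𝕜‖ ≤ ‖y‖ * ‖U y‖ := norm_inner_le_norm _ _
      _ = ‖x‖ ^ 2 - ‖K.starProjection x‖ ^ 2 := by
        rw [U.norm_map, K.norm_sq_eq_add_norm_sq_starProjection x]; ring
  rw [U.inner_map_self_eq_add hK (U.mapsTo_orthogonal hK)]
  exact (norm_add_le _ _).trans (add_le_add_right hy _)

end LinearIsometry

theorem norm_inner_smul_map_smul (f : E →ₗ[𝕜] E) (c : 𝕜) (v : E) :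
    ‖⟪c • v, f (c • v)⟫_𝕜‖ = ‖c‖ ^ 2 * ‖⟪v, f v⟫_𝕜‖ := by
  rw [map_smul, inner_smul_left, inner_smul_right, norm_mul, norm_mul, RCLike.norm_conj]; ring

theorem one_sub_div_le_norm_inner_normalize (f : E →ₗ[𝕜] E) {v : E} (hv : v ≠ 0) {ε : ℝ}
    (h : ‖v‖ ^ 2 - ε ≤ ‖⟪v, f v⟫_𝕜‖) :
    1 - ε / ‖v‖ ^ 2 ≤ ‖⟪(‖v‖⁻¹ : 𝕜) • v, f ((‖v‖⁻¹ : 𝕜) • v)⟫_𝕜‖ := by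
  have hv2 : 0 < ‖v‖ ^ 2 := by positivity
  rw [norm_inner_smul_map_smul, norm_inv, RCLike.norm_ofReal, abs_norm, inv_pow,
    one_sub_div hv2.ne', ← div_eq_inv_mul]
  exact div_le_div_of_nonneg_right h hv2.le

end

theorem Matrix.norm_toEuclideanLin_apply_of_mem_unitaryGroup {𝕜 n : Type*} [RCLike 𝕜] [Fintype n]
    [DecidableEq n] {A : Matrix n n 𝕜} (hA : A ∈ Matrix.unitaryGroup n 𝕜) (x : EuclideanSpace 𝕜 n) :
    ‖Matrix.toEuclideanLin A x‖ = ‖x‖ :=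
  (Matrix.toEuclideanCLM (n := n) (𝕜 := 𝕜) A).norm_map_of_mem_unitary (Unitary.map_mem _ hA) x

theorem stmt_12_general (n : ℕ) (k : ℕ)
    (V : Fin k → Submodule ℂ (EuclideanSpace ℂ (Fin n)))
    (G : Set (Matrix (Fin n) (Fin n) ℂ))
    (hunitary : ∀ A ∈ G, A ∈ Matrix.unitaryGroup (Fin n) ℂ)
    (ε : ℝ)
    (ξ : EuclideanSpace ℂ (Fin n)) (hξ : ‖ξ‖ = 1)
    (hweak : ∀ A ∈ G, 1 - ε ≤ ‖(inner ℂ ξ (Matrix.toEuclideanLin A ξ) : ℂ)‖)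
    (i : Fin k)
    (hξi : ((Submodule.orthogonalProjectionOnto (V i) ξ : V i) : EuclideanSpace ℂ (Fin n)) ≠ 0) :
    ∀ A ∈ G, (∀ x ∈ V i, Matrix.toEuclideanLin A x ∈ V i) →
      (‖((Submodule.orthogonalProjectionOnto (V i) ξ : V i) : EuclideanSpace ℂ (Fin n))‖ ^ 2 - ε ≤
        ‖(inner ℂ
          ((Submodule.orthogonalProjectionOnto (V i) ξ : V i) : EuclideanSpace ℂ (Fin n))
          (Matrix.toEuclideanLin A
            ((Submodule.orthogonalProjectionOnto (V i) ξ : V i) : EuclideanSpace ℂ (Fin n))) : ℂ)‖) ∧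
      (1 - ε / ‖((Submodule.orthogonalProjectionOnto (V i) ξ : V i) : EuclideanSpace ℂ (Fin n))‖ ^ 2 ≤
        ‖(inner ℂ
          ((‖((Submodule.orthogonalProjectionOnto (V i) ξ : V i) : EuclideanSpace ℂ (Fin n))‖⁻¹ : ℂ) •
            ((Submodule.orthogonalProjectionOnto (V i) ξ : V i) : EuclideanSpace ℂ (Fin n)))
          (Matrix.toEuclideanLin A
            ((‖((Submodule.orthogonalProjectionOnto (V i) ξ : V i) : EuclideanSpace ℂ (Fin n))‖⁻¹ : ℂ) •
              ((Submodule.orthogonalProjectionOnto (V i) ξ : V i) : EuclideanSpace ℂ (Fin n)))) : ℂ)‖) := by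
  intro A hA hAV
  let U : EuclideanSpace ℂ (Fin n) →ₗᵢ[ℂ] EuclideanSpace ℂ (Fin n) :=
    ⟨Matrix.toEuclideanLin A, Matrix.norm_toEuclideanLin_apply_of_mem_unitaryGroup (hunitary A hA)⟩
  have hξi_bound : ‖(V i).starProjection ξ‖ ^ 2 - ε ≤
      ‖⟪(V i).starProjection ξ, U ((V i).starProjection ξ)⟫_ℂ‖ := by
    have hsplit := U.norm_inner_map_self_le hAV ξ
    have hweakA : 1 - ε ≤ ‖⟪ξ, U ξ⟫_ℂ‖ := hweak A hA
    rw [hξ, one_pow] at hsplit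
    linarith
  exact ⟨hξi_bound, one_sub_div_le_norm_inner_normalize U.toLinearMap hξi hξi_bound⟩

/-- Let `ℂⁿ = V₁ ⊕ ⋯ ⊕ V_k` be an orthogonal direct sum of nonzero
subspaces, permuted by a group `G` of unitary matrices, let `ξ` be a weak `ε`-approximate
fixed point of `G` and `ξᵢ` its orthogonal projection onto `Vᵢ`. If `ξᵢ ≠ 0` then for
every `A ∈ G` with `A(Vᵢ) ⊆ Vᵢ` one has `|⟨Aξᵢ, ξᵢ⟩| ≥ ‖ξᵢ‖² - ε`; equivalently, the
unit vector `ξᵢ/‖ξᵢ‖` satisfies `|⟨A(ξᵢ/‖ξᵢ‖), ξᵢ/‖ξᵢ‖⟩| ≥ 1 - ε/‖ξᵢ‖²`. -/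
theorem stmt_12 (n : ℕ) (hn : 1 ≤ n) (k : ℕ) (hk : 1 ≤ k)
    (V : Fin k → Submodule ℂ (EuclideanSpace ℂ (Fin n)))
    (hVne : ∀ j, V j ≠ ⊥)
    (horth : ∀ i j, i ≠ j → ∀ x ∈ V i, ∀ y ∈ V j, (inner ℂ x y : ℂ) = 0)
    (hspan : (⨆ j, V j) = ⊤)
    (G : Set (Matrix (Fin n) (Fin n) ℂ))
    (hone : (1 : Matrix (Fin n) (Fin n) ℂ) ∈ G)
    (hmul : ∀ A ∈ G, ∀ B ∈ G, A * B ∈ G)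
    (hinv : ∀ A ∈ G, A⁻¹ ∈ G)
    (hunitary : ∀ A ∈ G, A ∈ Matrix.unitaryGroup (Fin n) ℂ)
    (hblock : ∀ A ∈ G, ∀ j : Fin k, ∃ p : Fin k,
      ∀ x ∈ V j, Matrix.toEuclideanLin A x ∈ V p)
    (ε : ℝ) (hε : 0 < ε) (hε1 : ε < 1)
    (ξ : EuclideanSpace ℂ (Fin n)) (hξ : ‖ξ‖ = 1)
    (hweak : ∀ A ∈ G, 1 - ε ≤ ‖(inner ℂ ξ (Matrix.toEuclideanLin A ξ) : ℂ)‖)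
    (i : Fin k)
    (hξi : ((Submodule.orthogonalProjectionOnto (V i) ξ : V i) : EuclideanSpace ℂ (Fin n)) ≠ 0) :
    ∀ A ∈ G, (∀ x ∈ V i, Matrix.toEuclideanLin A x ∈ V i) →
      (‖((Submodule.orthogonalProjectionOnto (V i) ξ : V i) : EuclideanSpace ℂ (Fin n))‖ ^ 2 - ε ≤
        ‖(inner ℂ
          ((Submodule.orthogonalProjectionOnto (V i) ξ : V i) : EuclideanSpace ℂ (Fin n))
          (Matrix.toEuclideanLin A
            ((Submodule.orthogonalProjectionOnto (V i) ξ : V i) : EuclideanSpace ℂ (Fin n))) : ℂ)‖) ∧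
      (1 - ε / ‖((Submodule.orthogonalProjectionOnto (V i) ξ : V i) : EuclideanSpace ℂ (Fin n))‖ ^ 2 ≤
        ‖(inner ℂ
          ((‖((Submodule.orthogonalProjectionOnto (V i) ξ : V i) : EuclideanSpace ℂ (Fin n))‖⁻¹ : ℂ) •
            ((Submodule.orthogonalProjectionOnto (V i) ξ : V i) : EuclideanSpace ℂ (Fin n)))
          (Matrix.toEuclideanLin A
            ((‖((Submodule.orthogonalProjectionOnto (V i) ξ : V i) : EuclideanSpace ℂ (Fin n))‖⁻¹ : ℂ) •
              ((Submodule.orthogonalProjectionOnto (V i) ξ : V i) : EuclideanSpace ℂ (Fin n)))) : ℂ)‖) :=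
  stmt_12_general n k V G hunitary ε ξ hξ hweak i hξi
end

section
/- Let n ≥ 2 and 0 < ε < 1/(3600 n¹¹). Suppose 𝒢 is a monomial group of n×n unitary matrices and ξ ∈ ℂⁿ is a unit vector with |⟨Gξ, ξ⟩| ≥ 1 − ε for all G ∈ 𝒢. Then 𝒢 has a common eigenvector, i.e. there exists a nonzero vector ζ ∈ ℂⁿ such that for each G ∈ 𝒢 there is a scalar λ with Gζ = λζ. -/
/-!
Conjugation by `𝒢` permutes the rank-one projectors `P_A = (Aξ)(Aξ)ᴴ`, `A ∈ 𝒢`, and acts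
isometrically on matrices with the Frobenius (Hilbert–Schmidt) norm. The point `Q` of minimal
norm in the closed convex hull of these projectors is unique, hence fixed by every conjugation:
`Q` commutes with `𝒢`. Since each `P_A` is Hermitian, of Frobenius norm `1` and has
`⟨P_A ξ, ξ⟩ = |⟨Aξ, ξ⟩|² ≥ (1 - ε)²`, the same holds for `Q` with `‖Q‖_F ≤ 1`. So the top
eigenvalue `μ` of `Q` satisfies `μ² > 1/2`, while `∑ μᵢ² = ‖Q‖_F² ≤ 1`: `μ` is a simple
eigenvalue, and its eigenline is invariant under every matrix commuting with `Q`.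
-/

open Matrix

theorem Convex.exists_mem_forall_norm_le_imp_eq {F : Type*} [NormedAddCommGroup F]
    [InnerProductSpace ℝ F] [CompleteSpace F] {C : Set F} (hne : C.Nonempty)
    (hcl : IsClosed C) (hconv : Convex ℝ C) : ∃ q ∈ C, ∀ x ∈ C, ‖x‖ ≤ ‖q‖ → x = q := by
  obtain ⟨q, hqC, hq⟩ := exists_norm_eq_iInf_of_complete_convex hne hcl.isComplete hconv 0
  refine ⟨q, hqC, fun x hx hxq => ?_⟩
  have hinner := (norm_eq_iInf_iff_real_inner_le_zero hconv hqC).1 hq x hx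
  rw [zero_sub, inner_neg_left, inner_sub_right, real_inner_self_eq_norm_sq] at hinner
  -- `‖q‖² ≤ ⟪x, q⟫` turns `‖x - q‖² = ‖x‖² - 2⟪x, q⟫ + ‖q‖²` into `‖x - q‖² ≤ ‖x‖² - ‖q‖²`
  have : ‖x - q‖ ^ 2 ≤ 0 := by
    rw [norm_sub_sq_real, real_inner_comm]
    nlinarith [norm_nonneg x, norm_nonneg q]
  exact sub_eq_zero.1 (norm_eq_zero.1 (by nlinarith [norm_nonneg (x - q)]))

theorem exists_mem_closedConvexHull_forall_apply_eq {F : Type*} [NormedAddCommGroup F]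
    [InnerProductSpace ℝ F] [CompleteSpace F] {S : Set F} (hS : S.Nonempty) :
    ∃ q ∈ closedConvexHull ℝ S, ∀ T : F →ₗᵢ[ℝ] F, Set.MapsTo T S S → T q = q := by
  obtain ⟨q, hqC, hq⟩ :=
    (convex_closedConvexHull (𝕜 := ℝ) (s := S)).exists_mem_forall_norm_le_imp_eq
      (hS.mono subset_closedConvexHull) isClosed_closedConvexHull
  refine ⟨q, hqC, fun T hT => hq _ ?_ (T.norm_map q).le⟩
  exact closedConvexHull_min (hT.mono_right subset_closedConvexHull)
    (convex_closedConvexHull.linear_preimage T.toLinearMap)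
    (isClosed_closedConvexHull.preimage T.continuous) hqC

theorem LinearMap.apply_mem_of_mem_closedConvexHull {E F : Type*} [NormedAddCommGroup F]
    [NormedSpace ℝ F] [FiniteDimensional ℝ F] [AddCommGroup E] [Module ℝ E] [TopologicalSpace E]
    [IsTopologicalAddGroup E] [ContinuousSMul ℝ E] {S : Set F} {K : Set E} (f : F →ₗ[ℝ] E)
    (hK : IsClosed K) (hconv : Convex ℝ K) (hS : Set.MapsTo f S K) {q : F}
    (hq : q ∈ closedConvexHull ℝ S) : f q ∈ K :=
  closedConvexHull_min hS (hconv.linear_preimage f)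
    (hK.preimage f.continuous_of_finiteDimensional) hq

theorem apply_ne_of_sum_sq_le_one {ι : Type*} [Fintype ι] [DecidableEq ι] {x : ι → ℝ}
    (hx : ∑ i, x i ^ 2 ≤ 1) {i : ι} (hi : 1 / 2 < x i ^ 2) {j : ι} (hji : j ≠ i) : x j ≠ x i := by
  intro hxj
  have hpair : x i ^ 2 + x j ^ 2 ≤ ∑ k, x k ^ 2 := by
    rw [← Finset.sum_pair (f := fun k => x k ^ 2) hji.symm]
    exact Finset.sum_le_sum_of_subset_of_nonneg (Finset.subset_univ _) fun k _ _ => sq_nonneg _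
  rw [hxj] at hpair
  linarith

noncomputable section

variable {𝕜 : Type*} [RCLike 𝕜]

section Frobenius

variable {m n : Type*}

def Matrix.toFrobenius : Matrix m n 𝕜 ≃ₗ[𝕜] EuclideanSpace 𝕜 (m × n) :=
  ((ofLinearEquiv 𝕜).symm.trans (LinearEquiv.curry 𝕜 𝕜 m n).symm).trans
    (WithLp.linearEquiv 2 𝕜 (m × n → 𝕜)).symm

@[simp] theorem Matrix.toFrobenius_apply (M : Matrix m n 𝕜) (p : m × n) :
    toFrobenius M p = M p.1 p.2 := rfl

theorem Matrix.inner_toFrobenius [Fintype m] [Fintype n] (M N : Matrix m n 𝕜) :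
    inner 𝕜 (toFrobenius M) (toFrobenius N) = (Mᴴ * N).trace := by
  simp [PiLp.inner_apply, Matrix.trace, Matrix.mul_apply, Fintype.sum_prod_type,
    Finset.sum_comm (γ := m), mul_comm]

theorem Matrix.norm_toFrobenius_sq [Fintype m] [Fintype n] (M : Matrix m n 𝕜) :
    ‖toFrobenius M‖ ^ 2 = ∑ i, ∑ j, ‖M i j‖ ^ 2 := by
  simp [EuclideanSpace.norm_sq_eq, Fintype.sum_prod_type]

end Frobenius

variable {ι : Type*} [Fintype ι]

theorem Matrix.star_mulVec_dotProduct_mulVec_mulVec (U M : Matrix ι ι 𝕜) (ξ : ι → 𝕜) :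
    star (Uᴴ *ᵥ ξ) ⬝ᵥ (M *ᵥ (Uᴴ *ᵥ ξ)) = star ξ ⬝ᵥ ((U * M * Uᴴ) *ᵥ ξ) := by
  rw [star_mulVec, conjTranspose_conjTranspose, ← dotProduct_mulVec, mulVec_mulVec,
    mulVec_mulVec, Matrix.mul_assoc]

theorem Matrix.mul_vecMulVec_star_mul_conjTranspose (U : Matrix ι ι 𝕜) (u : ι → 𝕜) :
    U * vecMulVec u (star u) * Uᴴ = vecMulVec (U *ᵥ u) (star (U *ᵥ u)) := by
  rw [mul_vecMulVec, vecMulVec_mul, star_mulVec]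

theorem Matrix.norm_toFrobenius_vecMulVec_star {u : ι → 𝕜} (hu : star u ⬝ᵥ u = 1) :
    ‖toFrobenius (vecMulVec u (star u))‖ = 1 := by
  have hidem : (vecMulVec u (star u))ᴴ * vecMulVec u (star u) = vecMulVec u (star u) := by
    rw [conjTranspose_vecMulVec, star_star, vecMulVec_mul_vecMulVec, hu, one_smul]
  rw [norm_eq_sqrt_re_inner (𝕜 := 𝕜), inner_toFrobenius, hidem, trace_vecMulVec,
    dotProduct_comm, hu, RCLike.one_re, Real.sqrt_one]

theorem Matrix.re_dotProduct_vecMulVec_star_mulVec (u ξ : ι → 𝕜) :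
    RCLike.re (star ξ ⬝ᵥ (vecMulVec u (star u) *ᵥ ξ)) = ‖star ξ ⬝ᵥ u‖ ^ 2 := by
  rw [vecMulVec_mulVec, dotProduct_smul, MulOpposite.smul_eq_mul_unop, MulOpposite.unop_op,
    star_dotProduct u, RCLike.star_def, RCLike.mul_conj]
  norm_cast

variable [DecidableEq ι]

theorem Matrix.conjTranspose_mul_self_of_mem_unitaryGroup {U : Matrix ι ι 𝕜}
    (hU : U ∈ unitaryGroup ι 𝕜) : Uᴴ * U = 1 :=
  mem_unitaryGroup_iff'.1 hU

theorem Matrix.mul_conjTranspose_self_of_mem_unitaryGroup {U : Matrix ι ι 𝕜}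
    (hU : U ∈ unitaryGroup ι 𝕜) : U * Uᴴ = 1 :=
  mem_unitaryGroup_iff.1 hU

theorem Matrix.norm_toFrobenius_unitary_conj {U : Matrix ι ι 𝕜} (hU : U ∈ unitaryGroup ι 𝕜)
    (M : Matrix ι ι 𝕜) : ‖toFrobenius (U * M * Uᴴ)‖ = ‖toFrobenius M‖ := by
  have hU' : Uᴴ * U = 1 := conjTranspose_mul_self_of_mem_unitaryGroup hU
  have key : (U * M * Uᴴ)ᴴ * (U * M * Uᴴ) = U * (Mᴴ * M) * Uᴴ := by
    simp only [conjTranspose_mul, conjTranspose_conjTranspose, Matrix.mul_assoc]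
    rw [← Matrix.mul_assoc Uᴴ U, hU', Matrix.one_mul]
  rw [norm_eq_sqrt_re_inner (𝕜 := 𝕜), norm_eq_sqrt_re_inner (𝕜 := 𝕜), inner_toFrobenius,
    inner_toFrobenius, key, trace_mul_cycle, ← Matrix.mul_assoc, hU', Matrix.one_mul]

def Matrix.frobeniusConj (U : unitaryGroup ι 𝕜) :
    EuclideanSpace 𝕜 (ι × ι) →ₗᵢ[ℝ] EuclideanSpace 𝕜 (ι × ι) where
  toLinearMap := (toFrobenius.toLinearMap ∘ₗ
    (LinearMap.mulLeft 𝕜 (U : Matrix ι ι 𝕜) ∘ₗ LinearMap.mulRight 𝕜 (U : Matrix ι ι 𝕜)ᴴ) ∘ₗ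
      toFrobenius.symm.toLinearMap).restrictScalars ℝ
  norm_map' x := by
    simpa [Matrix.mul_assoc] using norm_toFrobenius_unitary_conj U.2 (toFrobenius.symm x)

theorem Matrix.frobeniusConj_apply (U : unitaryGroup ι 𝕜) (M : Matrix ι ι 𝕜) :
    frobeniusConj U (toFrobenius M) =
      toFrobenius ((U : Matrix ι ι 𝕜) * M * (U : Matrix ι ι 𝕜)ᴴ) := by
  simp [frobeniusConj, Matrix.mul_assoc]

theorem Matrix.commute_of_frobeniusConj_apply_eq (U : unitaryGroup ι 𝕜) {M : Matrix ι ι 𝕜}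
    (h : frobeniusConj U (toFrobenius M) = toFrobenius M) : Commute (U : Matrix ι ι 𝕜) M := by
  rw [frobeniusConj_apply] at h
  calc (U : Matrix ι ι 𝕜) * M = U * M * (U : Matrix ι ι 𝕜)ᴴ * U := by
        rw [Matrix.mul_assoc _ _ (U : Matrix ι ι 𝕜),
          conjTranspose_mul_self_of_mem_unitaryGroup U.2, Matrix.mul_one]
    _ = M * U := by rw [toFrobenius.injective h]

theorem Matrix.star_mulVec_dotProduct_mulVec_of_mem_unitaryGroup {U : Matrix ι ι 𝕜}
    (hU : U ∈ unitaryGroup ι 𝕜) (ξ : ι → 𝕜) : star (U *ᵥ ξ) ⬝ᵥ (U *ᵥ ξ) = star ξ ⬝ᵥ ξ := by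
  rw [star_mulVec, dotProduct_mulVec, vecMul_vecMul,
    conjTranspose_mul_self_of_mem_unitaryGroup hU, vecMul_one]

theorem Matrix.exists_isHermitian_commute_of_le_norm_dotProduct {G : Set (Matrix ι ι 𝕜)}
    (hone : 1 ∈ G) (hmul : ∀ A ∈ G, ∀ B ∈ G, A * B ∈ G)
    (hunitary : ∀ A ∈ G, A ∈ unitaryGroup ι 𝕜) {ξ : ι → 𝕜} (hξ : star ξ ⬝ᵥ ξ = 1) {c : ℝ}
    (hc : ∀ A ∈ G, c ≤ ‖star ξ ⬝ᵥ (A *ᵥ ξ)‖ ^ 2) :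
    ∃ Q : Matrix ι ι 𝕜, Q.IsHermitian ∧ ‖toFrobenius Q‖ ≤ 1 ∧
      c ≤ RCLike.re (star ξ ⬝ᵥ (Q *ᵥ ξ)) ∧ ∀ A ∈ G, Commute A Q := by
  set P : Matrix ι ι 𝕜 → EuclideanSpace 𝕜 (ι × ι) :=
    fun A => toFrobenius (vecMulVec (A *ᵥ ξ) (star (A *ᵥ ξ)))
  obtain ⟨q, hq, hfix⟩ :=
    exists_mem_closedConvexHull_forall_apply_eq (⟨P 1, 1, hone, rfl⟩ : (P '' G).Nonempty)
  refine ⟨toFrobenius.symm q, ?herm, ?norm, ?rayleigh, ?comm⟩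
  case herm =>
    refine LinearMap.apply_mem_of_mem_closedConvexHull
      (toFrobenius.symm.toLinearMap.restrictScalars ℝ) (isClosed_eq continuous_star continuous_id)
      (selfAdjoint.submodule ℝ _).convex ?_ hq
    rintro - ⟨A, -, rfl⟩
    simp [P, star_eq_conjTranspose, conjTranspose_vecMulVec]
  case norm =>
    have := LinearMap.apply_mem_of_mem_closedConvexHull LinearMap.id Metric.isClosed_closedBall
      (convex_closedBall 0 1) ?_ hq
    · simpa using this
    rintro - ⟨A, hA, rfl⟩
    simp [P, norm_toFrobenius_vecMulVec_star
      ((star_mulVec_dotProduct_mulVec_of_mem_unitaryGroup (hunitary A hA) ξ).trans hξ)]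
  case rayleigh =>
    let f : Matrix ι ι 𝕜 →ₗ[𝕜] 𝕜 :=
      { toFun := fun M => star ξ ⬝ᵥ (M *ᵥ ξ)
        map_add' := fun M N => by rw [add_mulVec, dotProduct_add]
        map_smul' := fun a M => by rw [smul_mulVec, dotProduct_smul]; rfl }
    refine LinearMap.apply_mem_of_mem_closedConvexHull
      (RCLike.reLm ∘ₗ (f ∘ₗ toFrobenius.symm.toLinearMap).restrictScalars ℝ)
      isClosed_Ici (convex_Ici c) ?_ hq
    rintro - ⟨A, hA, rfl⟩
    show c ≤ RCLike.re (star ξ ⬝ᵥ (vecMulVec (A *ᵥ ξ) (star (A *ᵥ ξ)) *ᵥ ξ))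
    rw [re_dotProduct_vecMulVec_star_mulVec]
    exact hc A hA
  case comm =>
    intro A hA
    refine commute_of_frobeniusConj_apply_eq ⟨A, hunitary A hA⟩ ?_
    rw [toFrobenius.apply_symm_apply]
    refine hfix _ ?_
    rintro - ⟨B, hB, rfl⟩
    refine ⟨A * B, hmul A hA B hB, ?_⟩
    simp only [P, frobeniusConj_apply, mul_vecMulVec_star_mul_conjTranspose, mulVec_mulVec]

theorem Matrix.re_star_dotProduct_diagonal_mulVec (d : ι → ℝ) (c : ι → 𝕜) :
    RCLike.re (star c ⬝ᵥ (diagonal (fun i => (d i : 𝕜)) *ᵥ c)) = ∑ i, d i * ‖c i‖ ^ 2 := by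
  simp only [mulVec_diagonal, dotProduct, Pi.star_apply, map_sum]
  refine Finset.sum_congr rfl fun i _ => ?_
  rw [mul_left_comm, RCLike.star_def, RCLike.conj_mul]
  norm_cast

theorem Matrix.IsHermitian.eq_unitary_conj_diagonal {Q : Matrix ι ι 𝕜} (hQ : Q.IsHermitian) :
    Q = (hQ.eigenvectorUnitary : Matrix ι ι 𝕜) * diagonal (fun i => (hQ.eigenvalues i : 𝕜)) *
      (hQ.eigenvectorUnitary : Matrix ι ι 𝕜)ᴴ :=
  hQ.spectral_theorem

theorem Matrix.IsHermitian.exists_re_star_dotProduct_mulVec_le_eigenvalues {Q : Matrix ι ι 𝕜}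
    (hQ : Q.IsHermitian) {ξ : ι → 𝕜} (hξ : star ξ ⬝ᵥ ξ = 1) :
    ∃ i, RCLike.re (star ξ ⬝ᵥ (Q *ᵥ ξ)) ≤ hQ.eigenvalues i := by
  set U : Matrix ι ι 𝕜 := ↑hQ.eigenvectorUnitary
  set c := Uᴴ *ᵥ ξ
  have hU : U * Uᴴ = 1 := mul_conjTranspose_self_of_mem_unitaryGroup hQ.eigenvectorUnitary.2
  have hc : ∑ i, ‖c i‖ ^ 2 = 1 := by
    have h := re_star_dotProduct_diagonal_mulVec (fun _ => 1) c
    simp only [RCLike.ofReal_one, diagonal_one, one_mul] at h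
    rw [← h, star_mulVec_dotProduct_mulVec_mulVec, Matrix.mul_one, hU, one_mulVec, hξ,
      RCLike.one_re]
  have hne : Nonempty ι := by
    rcases isEmpty_or_nonempty ι with h | h
    · simp [dotProduct] at hξ
    · exact h
  obtain ⟨i, hi⟩ := Finite.exists_max hQ.eigenvalues
  refine ⟨i, ?_⟩
  calc RCLike.re (star ξ ⬝ᵥ (Q *ᵥ ξ))
      = ∑ j, hQ.eigenvalues j * ‖c j‖ ^ 2 := by
        rw [← re_star_dotProduct_diagonal_mulVec, star_mulVec_dotProduct_mulVec_mulVec,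
          ← hQ.eq_unitary_conj_diagonal]
    _ ≤ ∑ j, hQ.eigenvalues i * ‖c j‖ ^ 2 := by gcongr with j; exact hi j
    _ = hQ.eigenvalues i := by rw [← Finset.mul_sum, hc, mul_one]

theorem Matrix.IsHermitian.norm_toFrobenius_sq {Q : Matrix ι ι 𝕜} (hQ : Q.IsHermitian) :
    ‖toFrobenius Q‖ ^ 2 = ∑ i, hQ.eigenvalues i ^ 2 := by
  conv_lhs => rw [hQ.eq_unitary_conj_diagonal]
  rw [norm_toFrobenius_unitary_conj hQ.eigenvectorUnitary.2, Matrix.norm_toFrobenius_sq]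
  simp [diagonal_apply, apply_ite (fun z : 𝕜 => ‖z‖ ^ 2)]

theorem Matrix.mulVec_single_eq_smul_of_commute_diagonal {B : Matrix ι ι 𝕜} {d : ι → 𝕜}
    (hB : Commute B (diagonal d)) {i : ι} (hd : ∀ j ≠ i, d j ≠ d i) :
    B *ᵥ Pi.single i 1 = B i i • Pi.single i 1 := by
  ext j
  rcases eq_or_ne j i with rfl | hji
  · simp
  have hentry := congr_fun₂ hB.eq j i
  simp only [mul_diagonal, diagonal_mul] at hentry
  have : B j i = 0 := by
    by_contra h
    exact hd j hji (mul_left_cancel₀ h (hentry.trans (mul_comm _ _))).symm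
  simp [this, hji]

theorem Matrix.IsHermitian.exists_mulVec_eq_smul_of_commute {Q : Matrix ι ι 𝕜}
    (hQ : Q.IsHermitian) {i : ι} (hi : ∀ j ≠ i, hQ.eigenvalues j ≠ hQ.eigenvalues i) :
    ∃ v : ι → 𝕜, v ≠ 0 ∧ ∀ A : Matrix ι ι 𝕜, Commute A Q → ∃ c : 𝕜, A *ᵥ v = c • v := by
  set U : Matrix ι ι 𝕜 := ↑hQ.eigenvectorUnitary
  set D := diagonal fun i => (hQ.eigenvalues i : 𝕜)
  have hU : U * Uᴴ = 1 := mul_conjTranspose_self_of_mem_unitaryGroup hQ.eigenvectorUnitary.2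
  have hU' : Uᴴ * U = 1 := conjTranspose_mul_self_of_mem_unitaryGroup hQ.eigenvectorUnitary.2
  refine ⟨U *ᵥ Pi.single i 1, fun h => ?_, fun A hA => ?_⟩
  · have := congr_arg (Uᴴ *ᵥ ·) h
    simp only [mulVec_mulVec, hU', one_mulVec, mulVec_zero] at this
    simpa using congr_fun this i
  set B := Uᴴ * A * U
  have hBD : Commute B D := by
    have := hA.map (Unitary.conjStarAlgAut 𝕜 _ (star hQ.eigenvectorUnitary))
    rwa [hQ.conjStarAlgAut_star_eigenvectorUnitary, Unitary.conjStarAlgAut_star_apply] at this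
  have hAU : A * U = U * B := by
    simp only [B, ← Matrix.mul_assoc, hU, Matrix.one_mul]
  refine ⟨B i i, ?_⟩
  rw [mulVec_mulVec, hAU, ← mulVec_mulVec, mulVec_single_eq_smul_of_commute_diagonal hBD
    fun j hj => RCLike.ofReal_injective.ne (hi j hj), mulVec_smul]

theorem Matrix.IsHermitian.exists_mulVec_eq_smul_of_commute_of_norm_toFrobenius_le_one
    {Q : Matrix ι ι 𝕜} (hQ : Q.IsHermitian) (hnorm : ‖toFrobenius Q‖ ≤ 1) {ξ : ι → 𝕜}
    (hξ : star ξ ⬝ᵥ ξ = 1) (hray : 1 / √2 < RCLike.re (star ξ ⬝ᵥ (Q *ᵥ ξ))) :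
    ∃ v : ι → 𝕜, v ≠ 0 ∧ ∀ A : Matrix ι ι 𝕜, Commute A Q → ∃ c : 𝕜, A *ᵥ v = c • v := by
  obtain ⟨i, hi⟩ := hQ.exists_re_star_dotProduct_mulVec_le_eigenvalues hξ
  have hsq : 1 / 2 < hQ.eigenvalues i ^ 2 := by
    have h := hray.trans_le hi
    have hsqrt : (1 / √2) ^ 2 = 1 / 2 := by rw [div_pow, Real.sq_sqrt zero_le_two, one_pow]
    rw [← hsqrt]
    exact pow_lt_pow_left₀ h (by positivity) two_ne_zero
  have hsum : ∑ j, hQ.eigenvalues j ^ 2 ≤ 1 := by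
    rw [← hQ.norm_toFrobenius_sq]
    exact pow_le_one₀ (norm_nonneg _) hnorm
  exact hQ.exists_mulVec_eq_smul_of_commute fun j hj => apply_ne_of_sum_sq_le_one hsum hsq hj

theorem Matrix.exists_common_eigenvector_of_le_norm_inner {G : Set (Matrix ι ι 𝕜)}
    (hone : 1 ∈ G) (hmul : ∀ A ∈ G, ∀ B ∈ G, A * B ∈ G)
    (hunitary : ∀ A ∈ G, A ∈ unitaryGroup ι 𝕜) {ξ : EuclideanSpace 𝕜 ι} (hξ : ‖ξ‖ = 1) {c : ℝ}
    (hc : 1 / √2 < c) (hweak : ∀ A ∈ G, c ≤ ‖inner 𝕜 ξ (toEuclideanLin A ξ)‖ ^ 2) :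
    ∃ ζ : EuclideanSpace 𝕜 ι, ζ ≠ 0 ∧ ∀ A ∈ G, ∃ lam : 𝕜, toEuclideanLin A ζ = lam • ζ := by
  have hinner (A : Matrix ι ι 𝕜) :
      inner 𝕜 ξ (toEuclideanLin A ξ) = star ξ.ofLp ⬝ᵥ (A *ᵥ ξ.ofLp) := by
    rw [EuclideanSpace.inner_eq_star_dotProduct, toLpLin_apply, dotProduct_comm]
  have hunit : star ξ.ofLp ⬝ᵥ ξ.ofLp = 1 := by
    rw [dotProduct_comm, ← EuclideanSpace.inner_eq_star_dotProduct, inner_self_eq_norm_sq_to_K,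
      hξ, RCLike.ofReal_one, one_pow]
  obtain ⟨Q, hQ, hnorm, hray, hcomm⟩ := exists_isHermitian_commute_of_le_norm_dotProduct hone
    hmul hunitary hunit fun A hA => hinner A ▸ hweak A hA
  obtain ⟨v, hv, hAv⟩ :=
    hQ.exists_mulVec_eq_smul_of_commute_of_norm_toFrobenius_le_one hnorm hunit (hc.trans_le hray)
  refine ⟨WithLp.toLp 2 v, by simpa using hv, fun A hA => ?_⟩
  obtain ⟨lam, hlam⟩ := hAv A (hcomm A hA)
  exact ⟨lam, by rw [toLpLin_apply, hlam]; rfl⟩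

end

theorem stmt_13_general (n : ℕ) (ε : ℝ)
    (hε1 : ε < 1 / (3600 * (n : ℝ) ^ 11))
    (G : Set (Matrix (Fin n) (Fin n) ℂ))
    (hone : (1 : Matrix (Fin n) (Fin n) ℂ) ∈ G)
    (hmul : ∀ A ∈ G, ∀ B ∈ G, A * B ∈ G)
    (hunitary : ∀ A ∈ G, A ∈ Matrix.unitaryGroup (Fin n) ℂ)
    (ξ : EuclideanSpace ℂ (Fin n)) (hξ : ‖ξ‖ = 1)
    (hweak : ∀ A ∈ G, 1 - ε ≤ ‖(inner ℂ ξ (Matrix.toEuclideanLin A ξ) : ℂ)‖) :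
    ∃ ζ : EuclideanSpace ℂ (Fin n), ζ ≠ 0 ∧
      ∀ A ∈ G, ∃ lam : ℂ, Matrix.toEuclideanLin A ζ = lam • ζ := by
  have hε : ε < 1 / 10 := by
    refine hε1.trans_le ?_
    rcases n.eq_zero_or_pos with rfl | hn
    · norm_num -- the bound is `1 / 0 = 0` here
    · have : (1 : ℝ) ≤ (n : ℝ) ^ 11 := one_le_pow₀ (by exact_mod_cast hn)
      rw [div_le_div_iff₀ (by positivity) (by norm_num)]
      nlinarith
  refine exists_common_eigenvector_of_le_norm_inner hone hmul hunitary hξ ?_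
    fun A hA => pow_le_pow_left₀ (by linarith) (hweak A hA) 2
  calc 1 / √2 ≤ 3 / 4 := by
        rw [div_le_div_iff₀ (by positivity) (by norm_num)]
        nlinarith [Real.le_sqrt_of_sq_le (show (4 / 3 : ℝ) ^ 2 ≤ 2 by norm_num)]
    _ < (1 - ε) ^ 2 := by nlinarith

/-- Let `n ≥ 2` and `0 < ε < 1/(3600 n¹¹)`. Every monomial group of
`n × n` unitary matrices with a weak `ε`-approximate fixed point has a common
eigenvector. -/
theorem stmt_13 (n : ℕ) (hn : 2 ≤ n) (ε : ℝ) (hε : 0 < ε)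
    (hε1 : ε < 1 / (3600 * (n : ℝ) ^ 11))
    (G : Set (Matrix (Fin n) (Fin n) ℂ))
    (hone : (1 : Matrix (Fin n) (Fin n) ℂ) ∈ G)
    (hmul : ∀ A ∈ G, ∀ B ∈ G, A * B ∈ G)
    (hinv : ∀ A ∈ G, A⁻¹ ∈ G)
    (hunitary : ∀ A ∈ G, A ∈ Matrix.unitaryGroup (Fin n) ℂ)
    (hmonomial : ∀ A ∈ G, ∃ σ : Equiv.Perm (Fin n),
      ∀ i j, ‖A i j‖ = if σ j = i then 1 else 0)
    (ξ : EuclideanSpace ℂ (Fin n)) (hξ : ‖ξ‖ = 1)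
    (hweak : ∀ A ∈ G, 1 - ε ≤ ‖(inner ℂ ξ (Matrix.toEuclideanLin A ξ) : ℂ)‖) :
    ∃ ζ : EuclideanSpace ℂ (Fin n), ζ ≠ 0 ∧
      ∀ A ∈ G, ∃ lam : ℂ, Matrix.toEuclideanLin A ζ = lam • ζ :=
  stmt_13_general n ε hε1 G hone hmul hunitary ξ hξ hweak
end

section
/- Let n ≥ 2 and 0 < ε < 1/(3600 n¹¹). Suppose 𝒢 is a finite group of n×n complex unitary matrices and there exists a unit vector ξ ∈ ℂⁿ with |⟨Gξ, ξ⟩| ≥ 1 − ε for all G ∈ 𝒢. Then 𝒢 is reducible, i.e. there exists a linear subspace W ⊆ ℂⁿ with 0 < dim W < n such that G(W) ⊆ W for every G ∈ 𝒢. -/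
open scoped InnerProductSpace
open InnerProductSpace Module

/-!
Average the rank-one projection `P = rankOne ξ ξ` over the group: `T = ∑ g P g⋆` commutes with
every group element, so each eigenspace of `T` is a common invariant subspace, proper unless `T`
is scalar. But `⟪x, T x⟫ = ∑ |⟪g ξ, x⟫|²`, so a scalar `T` takes the same value at `ξ` and at a
unit vector `η ⊥ ξ`; Bessel's inequality for `(ξ, η)` then bounds `2 ∑ |⟪ξ, g ξ⟫|²` by `|𝒢|`,
whereas each summand is at least `(1 - ε)² > 1/2`.
-/

theorem commute_sum_mul_mul_star {R : Type*} [Semiring R] [StarMul R] {S : Finset R} {h : R}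
    (hh : h ∈ unitary R) (hS : ∀ g ∈ S, h * g ∈ S) (hS' : ∀ g ∈ S, star h * g ∈ S) (p : R) :
    Commute h (∑ g ∈ S, g * p * star g) := by
  have hconj : ∑ g ∈ S, h * g * p * star g = ∑ g ∈ S, g * p * star g * h := by
    refine Finset.sum_nbij' (h * ·) (star h * ·) hS hS' (fun g _ => ?_) (fun g _ => ?_)
      (fun g _ => ?_)
    · simp [← mul_assoc, Unitary.star_mul_self_of_mem hh]
    · simp [← mul_assoc, Unitary.mul_star_self_of_mem hh]
    · simp [mul_assoc, star_mul, Unitary.star_mul_self_of_mem hh]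
  simpa [Commute, SemiconjBy, Finset.mul_sum, Finset.sum_mul, mul_assoc] using hconj

theorem Module.End.exists_invariant_of_forall_exists_apply_ne_smul {K V : Type*} [Field K]
    [IsAlgClosed K] [AddCommGroup V] [Module K V] [FiniteDimensional K V] (T : End K V)
    (hT : ∀ μ : K, ∃ x, T x ≠ μ • x) :
    ∃ W : Submodule K V, W ≠ ⊥ ∧ W ≠ ⊤ ∧ ∀ f : End K V, Commute T f → ∀ x ∈ W, f x ∈ W := by
  have : Nontrivial V := by
    obtain ⟨x, hx⟩ := hT 0
    exact ⟨⟨T x, 0 • x, hx⟩⟩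
  obtain ⟨μ, hμ⟩ := T.exists_eigenvalue
  refine ⟨T.eigenspace μ, hμ, fun htop => ?_,
    fun f hf x hx => T.mapsTo_genEigenspace_of_comm hf μ 1 hx⟩
  obtain ⟨x, hx⟩ := hT μ
  exact hx (End.mem_eigenspace_iff.mp (htop ▸ Submodule.mem_top))

section InnerProductSpace

variable {𝕜 E : Type*} [RCLike 𝕜] [NormedAddCommGroup E] [InnerProductSpace 𝕜 E]

theorem mul_rankOne_self_mul_star [CompleteSpace E] (g : E →L[𝕜] E) (ξ : E) :
    g * rankOne 𝕜 ξ ξ * star g = rankOne 𝕜 (g ξ) (g ξ) := by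
  rw [ContinuousLinearMap.mul_def, ContinuousLinearMap.mul_def, comp_rankOne, rankOne_comp,
    ContinuousLinearMap.star_eq_adjoint, ContinuousLinearMap.adjoint_adjoint]

theorem exists_norm_eq_one_inner_eq_zero [FiniteDimensional 𝕜 E] (hE : 1 < finrank 𝕜 E) (ξ : E) :
    ∃ η : E, ‖η‖ = 1 ∧ ⟪ξ, η⟫_𝕜 = 0 := by
  have hspan : (𝕜 ∙ ξ) ≠ ⊤ := by
    intro h
    have := finrank_span_le_card (R := 𝕜) ({ξ} : Set E)
    rw [h, finrank_top, Set.toFinset_singleton, Finset.card_singleton] at this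
    omega
  obtain ⟨y, hy, hy0⟩ := Submodule.exists_mem_ne_zero_of_ne_bot
    (mt Submodule.orthogonal_eq_bot_iff.mp hspan)
  refine ⟨(‖y‖⁻¹ : 𝕜) • y, norm_smul_inv_norm hy0, ?_⟩
  rw [inner_smul_right, Submodule.mem_orthogonal_singleton_iff_inner_right.mp hy, mul_zero]

theorem norm_inner_sq_add_norm_inner_sq_le {a b : E} (ha : ‖a‖ = 1) (hb : ‖b‖ = 1)
    (hab : ⟪a, b⟫_𝕜 = 0) (x : E) : ‖⟪a, x⟫_𝕜‖ ^ 2 + ‖⟪b, x⟫_𝕜‖ ^ 2 ≤ ‖x‖ ^ 2 := by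
  have hortho : Orthonormal 𝕜 ![a, b] := by
    rw [orthonormal_iff_ite]
    intro i j
    fin_cases i <;> fin_cases j <;>
      simp [inner_self_eq_norm_sq_to_K, ha, hb, hab, inner_eq_zero_symm.mp hab]
  simpa [Fin.sum_univ_two] using hortho.sum_inner_products_le (s := Finset.univ) x

theorem inner_sum_rankOne_self_apply {ι : Type*} (s : Finset ι) (v : ι → E) (x : E) :
    ⟪x, (∑ i ∈ s, rankOne 𝕜 (v i) (v i)) x⟫_𝕜 = ((∑ i ∈ s, ‖⟪v i, x⟫_𝕜‖ ^ 2 : ℝ) : 𝕜) := by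
  push_cast
  simp only [Finset.sum_apply, rankOne_apply, inner_sum, inner_smul_right]
  refine Finset.sum_congr rfl fun i _ => ?_
  rw [← inner_conj_symm x (v i), RCLike.mul_conj]

theorem exists_sum_rankOne_self_apply_ne_smul [FiniteDimensional 𝕜 E] (hE : 1 < finrank 𝕜 E)
    {ι : Type*} (s : Finset ι) (v : ι → E) {ξ : E} (hξ : ‖ξ‖ = 1)
    (hs : ∑ i ∈ s, ‖v i‖ ^ 2 < 2 * ∑ i ∈ s, ‖⟪ξ, v i⟫_𝕜‖ ^ 2) (μ : 𝕜) :
    ∃ x, (∑ i ∈ s, rankOne 𝕜 (v i) (v i)) x ≠ μ • x := by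
  by_contra! hμ
  obtain ⟨η, hη, hξη⟩ := exists_norm_eq_one_inner_eq_zero (𝕜 := 𝕜) hE ξ
  have hform : ∀ x : E, ‖x‖ = 1 → ∑ i ∈ s, ‖⟪v i, x⟫_𝕜‖ ^ 2 = RCLike.re μ := by
    intro x hx
    have := inner_sum_rankOne_self_apply (𝕜 := 𝕜) s v x
    rw [hμ, inner_smul_right, inner_self_eq_norm_sq_to_K, hx] at this
    simpa using congrArg RCLike.re this.symm
  have hbessel : ∑ i ∈ s, (‖⟪ξ, v i⟫_𝕜‖ ^ 2 + ‖⟪η, v i⟫_𝕜‖ ^ 2) ≤ ∑ i ∈ s, ‖v i‖ ^ 2 :=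
    Finset.sum_le_sum fun i _ => norm_inner_sq_add_norm_inner_sq_le hξ hη hξη (v i)
  have hξ' := hform ξ hξ
  have hη' := hform η hη
  simp only [norm_inner_symm (𝕜 := 𝕜) (v _)] at hξ' hη'
  rw [Finset.sum_add_distrib] at hbessel
  linarith

end InnerProductSpace

theorem exists_invariant_submodule_of_card_lt {E : Type*} [NormedAddCommGroup E]
    [InnerProductSpace ℂ E] [FiniteDimensional ℂ E] (hE : 1 < finrank ℂ E)
    {S : Finset (E →L[ℂ] E)} (hunitary : ∀ g ∈ S, g ∈ unitary (E →L[ℂ] E))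
    (hmul : ∀ g ∈ S, ∀ h ∈ S, g * h ∈ S) (hstar : ∀ g ∈ S, star g ∈ S) {ξ : E} (hξ : ‖ξ‖ = 1)
    (hS : (S.card : ℝ) < 2 * ∑ g ∈ S, ‖⟪ξ, g ξ⟫_ℂ‖ ^ 2) :
    ∃ W : Submodule ℂ E, W ≠ ⊥ ∧ W ≠ ⊤ ∧ ∀ g ∈ S, ∀ x ∈ W, g x ∈ W := by
  let T := ∑ g ∈ S, g * rankOne ℂ ξ ξ * star g
  have hT : ∀ μ : ℂ, ∃ x, T x ≠ μ • x := by
    have hnorm : ∑ g ∈ S, ‖g ξ‖ ^ 2 = S.card := by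
      simp +contextual [ContinuousLinearMap.norm_map_of_mem_unitary, hunitary, hξ]
    simpa only [T, mul_rankOne_self_mul_star] using
      exists_sum_rankOne_self_apply_ne_smul hE S (· ξ) hξ (hnorm ▸ hS)
  obtain ⟨W, hW_bot, hW_top, hW⟩ := End.exists_invariant_of_forall_exists_apply_ne_smul _ hT
  refine ⟨W, hW_bot, hW_top, fun g hg => hW _ ?_⟩
  have hgT : Commute g T := commute_sum_mul_mul_star (hunitary g hg) (hmul g hg)
    (fun h hh => hmul _ (hstar g hg) h hh) _
  exact hgT.symm.map ContinuousLinearMap.toLinearMapRingHom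

theorem stmt_14_general (n : ℕ) (hn : 2 ≤ n) (ε : ℝ)
    (hε1 : ε < 1 / (3600 * (n : ℝ) ^ 11))
    (G : Set (Matrix (Fin n) (Fin n) ℂ))
    (hfin : G.Finite)
    (hone : (1 : Matrix (Fin n) (Fin n) ℂ) ∈ G)
    (hmul : ∀ A ∈ G, ∀ B ∈ G, A * B ∈ G)
    (hinv : ∀ A ∈ G, A⁻¹ ∈ G)
    (hunitary : ∀ A ∈ G, A ∈ Matrix.unitaryGroup (Fin n) ℂ)
    (ξ : EuclideanSpace ℂ (Fin n)) (hξ : ‖ξ‖ = 1)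
    (hweak : ∀ A ∈ G, 1 - ε ≤ ‖(inner ℂ ξ (Matrix.toEuclideanLin A ξ) : ℂ)‖) :
    ∃ W : Submodule ℂ (EuclideanSpace ℂ (Fin n)),
      0 < Module.finrank ℂ W ∧ Module.finrank ℂ W < n ∧
      ∀ A ∈ G, ∀ x ∈ W, Matrix.toEuclideanLin A x ∈ W := by
  classical
  let Φ := Matrix.toEuclideanCLM (n := Fin n) (𝕜 := ℂ)
  let S := hfin.toFinset.image Φ
  have hΦ : ∀ A ∈ G, Φ A ∈ S := fun A hA => Finset.mem_image_of_mem Φ (hfin.mem_toFinset.2 hA)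
  have hS : ∀ {p : _ → Prop}, (∀ A ∈ G, p (Φ A)) → ∀ g ∈ S, p g := fun h =>
    Finset.forall_mem_image.2 fun A hA => h A (hfin.mem_toFinset.1 hA)
  have hstar : ∀ A ∈ G, star A ∈ G := fun A hA => by
    rw [← Matrix.inv_eq_left_inv (Matrix.mem_unitaryGroup_iff'.mp (hunitary A hA))]
    exact hinv A hA
  have hε : ε < 1 / 3600 := hε1.trans_le <| one_div_le_one_div_of_le (by norm_num) <|
    le_mul_of_one_le_right (by norm_num) (one_le_pow₀ (by exact_mod_cast (by omega : 1 ≤ n)))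
  have hhalf : ∀ g ∈ S, 1 < 2 * ‖⟪ξ, g ξ⟫_ℂ‖ ^ 2 := hS fun A hA => by
    have hA_weak : 1 - ε ≤ ‖⟪ξ, Φ A ξ⟫_ℂ‖ := hweak A hA
    nlinarith
  obtain ⟨W, hW_bot, hW_top, hW⟩ := exists_invariant_submodule_of_card_lt
    (by rw [finrank_euclideanSpace_fin]; omega)
    (hS fun A hA => Unitary.map_mem Φ (hunitary A hA))
    (hS fun A hA => hS fun B hB => map_mul Φ A B ▸ hΦ _ (hmul A hA B hB))
    (hS fun A hA => map_star Φ A ▸ hΦ _ (hstar A hA)) hξ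
    (by simpa [Finset.mul_sum] using Finset.sum_lt_sum_of_nonempty ⟨_, hΦ 1 hone⟩ hhalf)
  exact ⟨W, Submodule.one_le_finrank_iff.mpr hW_bot,
    (Submodule.finrank_lt hW_top).trans_eq finrank_euclideanSpace_fin,
    fun A hA => hW (Φ A) (hΦ A hA)⟩

/-- Let `n ≥ 2` and `0 < ε < 1/(3600 n¹¹)`. Every finite group of
`n × n` unitary matrices with a weak `ε`-approximate fixed point is reducible: it has a
common invariant subspace `W` with `0 < dim W < n`. -/
theorem stmt_14 (n : ℕ) (hn : 2 ≤ n) (ε : ℝ) (hε : 0 < ε)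
    (hε1 : ε < 1 / (3600 * (n : ℝ) ^ 11))
    (G : Set (Matrix (Fin n) (Fin n) ℂ))
    (hfin : G.Finite)
    (hone : (1 : Matrix (Fin n) (Fin n) ℂ) ∈ G)
    (hmul : ∀ A ∈ G, ∀ B ∈ G, A * B ∈ G)
    (hinv : ∀ A ∈ G, A⁻¹ ∈ G)
    (hunitary : ∀ A ∈ G, A ∈ Matrix.unitaryGroup (Fin n) ℂ)
    (ξ : EuclideanSpace ℂ (Fin n)) (hξ : ‖ξ‖ = 1)
    (hweak : ∀ A ∈ G, 1 - ε ≤ ‖(inner ℂ ξ (Matrix.toEuclideanLin A ξ) : ℂ)‖) :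
    ∃ W : Submodule ℂ (EuclideanSpace ℂ (Fin n)),
      0 < Module.finrank ℂ W ∧ Module.finrank ℂ W < n ∧
      ∀ A ∈ G, ∀ x ∈ W, Matrix.toEuclideanLin A x ∈ W :=
  stmt_14_general n hn ε hε1 G hfin hone hmul hinv hunitary ξ hξ hweak
end

section
/- Let n ≥ 2 and 0 < ε < 1/32. Suppose 𝒢 is a compact connected subgroup of the group of n×n complex unitary matrices and there exists a unit vector ξ ∈ ℂⁿ with |⟨Gξ, ξ⟩| ≥ 1 − ε for all G ∈ 𝒢. Then 𝒢 is reducible, i.e. there exists a linear subspace W ⊆ ℂⁿ with 0 < dim W < n such that G(W) ⊆ W for every G ∈ 𝒢. -/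
/-!
Conjugation `X ↦ A X Aᴴ` by a unitary is an isometry for the Frobenius inner product
`⟪X, Y⟫ = tr (Xᴴ Y)`, so the point of minimal norm in the closed convex hull of the `𝒢`-orbit of
the projection `P = ξ ξᴴ` is a matrix `M` fixed by all these conjugations, i.e. commuting with `𝒢`.
Every orbit point has trace `1` and pairs with `P` to `|⟨Aξ, ξ⟩|² ≥ (1 - ε)²`, and both
properties pass to `M`. A scalar matrix of trace `1` is `I / n` and pairs with `P` to
`1 / n ≤ 1 / 2 < (1 - ε)²`, so `M` is not scalar, and any eigenspace of `M` is a proper nonzero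
`𝒢`-invariant subspace.
-/

open Set Matrix Function

theorem ContinuousLinearMap.mapsTo_closedConvexHull {𝕜 E F : Type*} [Semiring 𝕜] [PartialOrder 𝕜]
    [AddCommGroup E] [Module 𝕜 E] [TopologicalSpace E]
    [AddCommGroup F] [Module 𝕜 F] [TopologicalSpace F]
    (f : E →L[𝕜] F) {s : Set E} {t : Set F} (ht : Convex 𝕜 t) (ht' : IsClosed t)
    (h : MapsTo f s t) : MapsTo f (closedConvexHull 𝕜 s) t :=
  closedConvexHull_min h (ht.linear_preimage f.toLinearMap) (ht'.preimage f.continuous)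

section InnerProductSpace

variable {𝕜 E : Type*} [RCLike 𝕜] [NormedAddCommGroup E] [InnerProductSpace 𝕜 E]
  [NormedSpace ℝ E] [IsScalarTower ℝ 𝕜 E] {S : Set E} {a x : E}

theorem inner_eq_of_mem_closedConvexHull {z : 𝕜} (h : ∀ y ∈ S, inner 𝕜 a y = z)
    (hx : x ∈ closedConvexHull ℝ S) : inner 𝕜 a x = z :=
  ((innerSL 𝕜 a).restrictScalars ℝ).mapsTo_closedConvexHull (convex_singleton z)
    isClosed_singleton h hx

theorem le_re_inner_of_mem_closedConvexHull {c : ℝ} (h : ∀ y ∈ S, c ≤ RCLike.re (inner 𝕜 a y))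
    (hx : x ∈ closedConvexHull ℝ S) : c ≤ RCLike.re (inner 𝕜 a x) :=
  (RCLike.reCLM.comp ((innerSL 𝕜 a).restrictScalars ℝ)).mapsTo_closedConvexHull (convex_Ici c)
    isClosed_Ici h hx

end InnerProductSpace

/-- By strict convexity, the point of minimal norm of the closed convex hull is unique, so every
isometry preserving the hull fixes it. -/
theorem exists_mem_closedConvexHull_forall_isFixedPt {𝕜 E ι : Type*} [NormedField 𝕜]
    [NormedAlgebra ℝ 𝕜] [NormedAddCommGroup E] [NormedSpace 𝕜 E] [NormedSpace ℝ E]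
    [IsScalarTower ℝ 𝕜 E] [StrictConvexSpace ℝ E] [ProperSpace E]
    {S : Set E} (hS : S.Nonempty) (T : ι → E →ₗᵢ[𝕜] E) (hT : ∀ i, MapsTo (T i) S S) :
    ∃ x ∈ closedConvexHull ℝ S, ∀ i, IsFixedPt (T i) x := by
  set K := closedConvexHull ℝ S
  obtain ⟨x, hxK, hx⟩ :=
    (isClosed_closedConvexHull (𝕜 := ℝ)).exists_infDist_eq_dist (hS.mono subset_closedConvexHull)
      (0 : E)
  have hmin : ∀ y ∈ K, ‖x‖ ≤ ‖y‖ := fun y hy => by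
    have := Metric.infDist_le_dist_of_mem (x := 0) hy
    rwa [hx, dist_zero_left, dist_zero_left] at this
  refine ⟨x, hxK, fun i => by_contra fun hne => ?_⟩
  have hTK : MapsTo (T i) K K :=
    ((T i).toContinuousLinearMap.restrictScalars ℝ).mapsTo_closedConvexHull
      convex_closedConvexHull isClosed_closedConvexHull ((hT i).mono_right subset_closedConvexHull)
  have hmid : (1 / 2 : ℝ) • (T i x + x) ∈ K := by
    rw [smul_add]
    exact convex_closedConvexHull (hTK hxK) hxK (by norm_num) (by norm_num) (by norm_num)
  have hlt := (norm_midpoint_lt_iff ((T i).norm_map x)).2 hne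
  linarith [hmin _ hmid, (T i).norm_map x]

theorem Module.End.exists_ne_bot_ne_top_invariant_of_notMem_range_algebraMap {K V : Type*}
    [Field K] [IsAlgClosed K] [AddCommGroup V] [Module K V] [FiniteDimensional K V]
    {f : Module.End K V} (hf : f ∉ range (algebraMap K (Module.End K V))) :
    ∃ W : Submodule K V, W ≠ ⊥ ∧ W ≠ ⊤ ∧ ∀ g : Module.End K V, Commute f g → MapsTo g W W := by
  have : Nontrivial V := by
    by_contra h
    rw [not_nontrivial_iff_subsingleton] at h
    exact hf ⟨0, Subsingleton.elim _ _⟩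
  obtain ⟨μ, hμ⟩ := f.exists_eigenvalue
  refine ⟨f.eigenspace μ, hμ, fun htop => hf ⟨μ, LinearMap.ext fun v => ?_⟩,
    fun g hg => f.mapsTo_genEigenspace_of_comm hg μ 1⟩
  have hv : v ∈ f.eigenspace μ := htop ▸ Submodule.mem_top
  rw [Module.algebraMap_end_apply, mem_eigenspace_iff.1 hv]

namespace Matrix

variable {𝕜 m n : Type*} [RCLike 𝕜]

noncomputable def vecEuclidean : Matrix m n 𝕜 ≃ₗ[𝕜] EuclideanSpace 𝕜 (n × m) where
  toFun A := WithLp.toLp 2 A.vec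
  invFun x := of fun i j => x (j, i)
  map_add' _ _ := rfl
  map_smul' _ _ := rfl
  left_inv _ := rfl
  right_inv _ := rfl

variable [Fintype m] [Fintype n]

theorem inner_vecEuclidean (A B : Matrix m n 𝕜) :
    inner 𝕜 (vecEuclidean A) (vecEuclidean B) = (Aᴴ * B).trace := by
  rw [EuclideanSpace.inner_eq_star_dotProduct, dotProduct_comm]
  exact star_vec_dotProduct_vec A B

theorem inner_vecEuclidean_vecMulVec (u v : EuclideanSpace 𝕜 n) :
    inner 𝕜 (vecEuclidean (vecMulVec u.ofLp (star u.ofLp)))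
      (vecEuclidean (vecMulVec v.ofLp (star v.ofLp))) = ‖inner 𝕜 u v‖ ^ 2 := by
  rw [inner_vecEuclidean, conjTranspose_vecMulVec, star_star, vecMulVec_mul_vecMulVec,
    trace_vecMulVec, dotProduct_smul, smul_eq_mul, ← RCLike.mul_conj,
    EuclideanSpace.inner_eq_star_dotProduct, dotProduct_star u.ofLp, dotProduct_comm (star u.ofLp)]
  rfl

theorem trace_vecMulVec_star (v : EuclideanSpace 𝕜 n) :
    (vecMulVec v.ofLp (star v.ofLp)).trace = ‖v‖ ^ 2 := by
  rw [trace_vecMulVec, ← EuclideanSpace.inner_eq_star_dotProduct, inner_self_eq_norm_sq_to_K]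

variable [DecidableEq n]

theorem mul_vecMulVec_star_mul_conjTranspose_s16 (A : Matrix n n 𝕜) (v : EuclideanSpace 𝕜 n) :
    A * vecMulVec v.ofLp (star v.ofLp) * Aᴴ =
      vecMulVec (toEuclideanLin A v).ofLp (star (toEuclideanLin A v).ofLp) := by
  rw [mul_vecMulVec, vecMulVec_mul, ← star_mulVec]
  rfl

theorem inner_vecEuclidean_one_left (A : Matrix n n 𝕜) :
    inner 𝕜 (vecEuclidean 1) (vecEuclidean A) = A.trace := by
  rw [inner_vecEuclidean, conjTranspose_one, Matrix.one_mul]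

theorem inner_vecEuclidean_conj_unitary {U : Matrix n n 𝕜} (hU : U ∈ unitaryGroup n 𝕜)
    (A B : Matrix n n 𝕜) :
    inner 𝕜 (vecEuclidean (U * A * Uᴴ)) (vecEuclidean (U * B * Uᴴ)) =
      inner 𝕜 (vecEuclidean A) (vecEuclidean B) := by
  have hUU : Uᴴ * U = 1 := Unitary.star_mul_self_of_mem hU
  have hcancel : (U * A * Uᴴ)ᴴ * (U * B * Uᴴ) = U * (Aᴴ * B) * Uᴴ := by
    simp only [conjTranspose_mul, conjTranspose_conjTranspose, Matrix.mul_assoc]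
    rw [← Matrix.mul_assoc Uᴴ U, hUU, Matrix.one_mul]
  rw [inner_vecEuclidean, inner_vecEuclidean, hcancel, trace_mul_cycle, hUU, Matrix.one_mul]

noncomputable def unitaryConjIsometry (U : unitaryGroup n 𝕜) :
    EuclideanSpace 𝕜 (n × n) →ₗᵢ[𝕜] EuclideanSpace 𝕜 (n × n) :=
  LinearMap.isometryOfInner
    (vecEuclidean.toLinearMap ∘ₗ LinearMap.mulLeft 𝕜 (U : Matrix n n 𝕜) ∘ₗ
      LinearMap.mulRight 𝕜 (U : Matrix n n 𝕜)ᴴ ∘ₗ vecEuclidean.symm.toLinearMap)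
    fun x y => by
      obtain ⟨A, rfl⟩ := vecEuclidean.surjective x
      obtain ⟨B, rfl⟩ := vecEuclidean.surjective y
      simpa [Matrix.mul_assoc] using inner_vecEuclidean_conj_unitary U.2 A B

theorem unitaryConjIsometry_vecEuclidean (U : unitaryGroup n 𝕜) (A : Matrix n n 𝕜) :
    unitaryConjIsometry U (vecEuclidean A) =
      vecEuclidean ((U : Matrix n n 𝕜) * A * (U : Matrix n n 𝕜)ᴴ) := by
  simp [unitaryConjIsometry, Matrix.mul_assoc]

theorem exists_commute_mem_closedConvexHull_conj {G : Set (Matrix n n 𝕜)} (hG : G.Nonempty)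
    (hunitary : ∀ A ∈ G, A ∈ unitaryGroup n 𝕜) (hmul : ∀ A ∈ G, ∀ B ∈ G, A * B ∈ G)
    (X : Matrix n n 𝕜) :
    ∃ M : Matrix n n 𝕜,
      vecEuclidean M ∈ closedConvexHull ℝ ((fun A => vecEuclidean (A * X * Aᴴ)) '' G) ∧
      ∀ A ∈ G, Commute A M := by
  set T : G → EuclideanSpace 𝕜 (n × n) →ₗᵢ[𝕜] EuclideanSpace 𝕜 (n × n) :=
    fun A => unitaryConjIsometry ⟨A, hunitary A A.2⟩
  have hT : ∀ A, MapsTo (T A) ((fun A => vecEuclidean (A * X * Aᴴ)) '' G)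
      ((fun A => vecEuclidean (A * X * Aᴴ)) '' G) := by
    rintro ⟨A, hA⟩ _ ⟨B, hB, rfl⟩
    refine ⟨A * B, hmul A hA B hB, ?_⟩
    simp only [T, unitaryConjIsometry_vecEuclidean, conjTranspose_mul, Matrix.mul_assoc]
  obtain ⟨Q, hQ, hfix⟩ := exists_mem_closedConvexHull_forall_isFixedPt (hG.image _) T hT
  obtain ⟨M, rfl⟩ := vecEuclidean.surjective Q
  refine ⟨M, hQ, fun A hA => ?_⟩
  have hAM : A * M * Aᴴ = M := vecEuclidean.injective <| by
    simpa only [IsFixedPt, T, unitaryConjIsometry_vecEuclidean] using hfix ⟨A, hA⟩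
  have hAA : Aᴴ * A = 1 := Unitary.star_mul_self_of_mem (hunitary A hA)
  calc A * M = A * M * (Aᴴ * A) := by rw [hAA, Matrix.mul_one]
    _ = M * A := by rw [← Matrix.mul_assoc, hAM]

theorem toEuclideanLin_notMem_range_algebraMap {X M : Matrix n n 𝕜} (hX : X.trace = 1)
    (hM : M.trace = 1)
    (h : (Fintype.card n : ℝ)⁻¹ < RCLike.re (inner 𝕜 (vecEuclidean X) (vecEuclidean M))) :
    toEuclideanLin M ∉ range (algebraMap 𝕜 (Module.End 𝕜 (EuclideanSpace 𝕜 n))) := by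
  rintro ⟨c, hc⟩
  have hMc : M = c • 1 := by
    rw [← Algebra.algebraMap_eq_smul_one]
    exact (toLpLinAlgEquiv 2).injective (((toLpLinAlgEquiv 2).commutes c).trans hc).symm
  have hcard : c * Fintype.card n = 1 := by rw [← hM, hMc, trace_smul, trace_one, smul_eq_mul]
  have hXM : inner 𝕜 (vecEuclidean X) (vecEuclidean M) = c := by
    rw [hMc, map_smul, inner_smul_right, ← inner_conj_symm, inner_vecEuclidean_one_left, hX,
      map_one, mul_one]
  rw [hXM, eq_inv_of_mul_eq_one_left hcard, ← RCLike.ofReal_natCast (K := 𝕜), ← RCLike.ofReal_inv,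
    RCLike.ofReal_re] at h
  exact lt_irrefl _ h

end Matrix

theorem stmt_16_general (n : ℕ) (hn : 2 ≤ n) (ε : ℝ) (hε1 : ε < 1 / 32)
    (G : Set (Matrix (Fin n) (Fin n) ℂ))
    (hone : (1 : Matrix (Fin n) (Fin n) ℂ) ∈ G)
    (hmul : ∀ A ∈ G, ∀ B ∈ G, A * B ∈ G)
    (hunitary : ∀ A ∈ G, A ∈ Matrix.unitaryGroup (Fin n) ℂ)
    (ξ : EuclideanSpace ℂ (Fin n)) (hξ : ‖ξ‖ = 1)
    (hweak : ∀ A ∈ G, 1 - ε ≤ ‖(inner ℂ ξ (Matrix.toEuclideanLin A ξ) : ℂ)‖) :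
    ∃ W : Submodule ℂ (EuclideanSpace ℂ (Fin n)),
      0 < Module.finrank ℂ W ∧ Module.finrank ℂ W < n ∧
      ∀ A ∈ G, ∀ x ∈ W, Matrix.toEuclideanLin A x ∈ W := by
  set P := vecMulVec ξ.ofLp (star ξ.ofLp) with hP
  have htrP : P.trace = 1 := by rw [trace_vecMulVec_star, hξ]; norm_num
  obtain ⟨M, hM, hcomm⟩ := exists_commute_mem_closedConvexHull_conj ⟨1, hone⟩ hunitary hmul P
  have htrM : M.trace = 1 := by
    rw [← inner_vecEuclidean_one_left]
    refine inner_eq_of_mem_closedConvexHull ?_ hM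
    rintro _ ⟨A, hA, rfl⟩
    rw [inner_vecEuclidean_one_left, trace_mul_cycle, ← star_eq_conjTranspose,
      Unitary.star_mul_self_of_mem (hunitary A hA), Matrix.one_mul, htrP]
  have hPM : (1 - ε) ^ 2 ≤ RCLike.re (inner ℂ (vecEuclidean P) (vecEuclidean M)) := by
    refine le_re_inner_of_mem_closedConvexHull ?_ hM
    rintro _ ⟨A, hA, rfl⟩
    dsimp only
    rw [hP, mul_vecMulVec_star_mul_conjTranspose_s16, inner_vecEuclidean_vecMulVec]
    exact_mod_cast pow_le_pow_left₀ (by linarith) (hweak A hA) 2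
  have hn' : (Fintype.card (Fin n) : ℝ)⁻¹ ≤ 1 / 2 := by
    rw [Fintype.card_fin, inv_eq_one_div]
    gcongr
    exact_mod_cast hn
  obtain ⟨W, hbot, htop, hW⟩ := Module.End.exists_ne_bot_ne_top_invariant_of_notMem_range_algebraMap
    (toEuclideanLin_notMem_range_algebraMap htrP htrM (by nlinarith))
  refine ⟨W, Submodule.one_le_finrank_iff.2 hbot, ?_,
    fun A hA x hx => hW _ ((hcomm A hA).symm.map (toLpLinAlgEquiv 2)) hx⟩
  simpa using Submodule.finrank_lt htop

/-- Let `n ≥ 2` and `0 < ε < 1/32`. Every compact connected group of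
`n × n` unitary matrices with a weak `ε`-approximate fixed point is reducible: it has a
common invariant subspace `W` with `0 < dim W < n`. -/
theorem stmt_16 (n : ℕ) (hn : 2 ≤ n) (ε : ℝ) (hε : 0 < ε) (hε1 : ε < 1 / 32)
    (G : Set (Matrix (Fin n) (Fin n) ℂ))
    (hone : (1 : Matrix (Fin n) (Fin n) ℂ) ∈ G)
    (hmul : ∀ A ∈ G, ∀ B ∈ G, A * B ∈ G)
    (hinv : ∀ A ∈ G, A⁻¹ ∈ G)
    (hunitary : ∀ A ∈ G, A ∈ Matrix.unitaryGroup (Fin n) ℂ)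
    (hcompact : IsCompact G) (hconn : IsConnected G)
    (ξ : EuclideanSpace ℂ (Fin n)) (hξ : ‖ξ‖ = 1)
    (hweak : ∀ A ∈ G, 1 - ε ≤ ‖(inner ℂ ξ (Matrix.toEuclideanLin A ξ) : ℂ)‖) :
    ∃ W : Submodule ℂ (EuclideanSpace ℂ (Fin n)),
      0 < Module.finrank ℂ W ∧ Module.finrank ℂ W < n ∧
      ∀ A ∈ G, ∀ x ∈ W, Matrix.toEuclideanLin A x ∈ W :=
  stmt_16_general n hn ε hε1 G hone hmul hunitary ξ hξ hweak
end

section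
/- Let n ≥ 2 and 0 < ε < 1/(3600 n¹¹). Suppose 𝒢 is a compact (equivalently, closed) subgroup of the group of n×n complex unitary matrices and there exists a unit vector ξ ∈ ℂⁿ with |⟨Gξ, ξ⟩| ≥ 1 − ε for all G ∈ 𝒢. Then 𝒢 is reducible, i.e. there exists a linear subspace W ⊆ ℂⁿ with 0 < dim W < n such that G(W) ⊆ W for every G ∈ 𝒢. -/
/-!
Let `P = ξ ξᴴ`. Every conjugate `A P Aᴴ` with `A ∈ 𝒢` has trace one and satisfies
`re ⟪ξ, A P Aᴴ ξ⟫ = |⟪ξ, A ξ⟫|² ≥ (1 - ε)²`, and both conditions survive in the closed convex hull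
`K` of these conjugates. Conjugation by `𝒢` preserves `K` and the Frobenius norm, so the unique
element `T` of minimal Frobenius norm in `K` commutes with `𝒢`. A scalar matrix of trace one is
`1/n ≤ 1/2 < (1 - ε)²`, so `T` is not scalar, and any eigenspace of `T` is a proper nonzero
`𝒢`-invariant subspace.
-/

open Set Matrix

theorem Module.End.exists_invariant_of_ne_algebraMap {K V : Type*} [Field K] [IsAlgClosed K]
    [AddCommGroup V] [Module K V] [FiniteDimensional K V] (T : Module.End K V)
    (hT : ∀ μ : K, T ≠ algebraMap K (Module.End K V) μ) :
    ∃ W : Submodule K V, W ≠ ⊥ ∧ W ≠ ⊤ ∧ ∀ f : Module.End K V, Commute T f → MapsTo f W W := by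
  have : Nontrivial V := by
    by_contra h
    rw [not_nontrivial_iff_subsingleton] at h
    exact hT 0 (Subsingleton.elim _ _)
  obtain ⟨μ, hμ⟩ := T.exists_eigenvalue
  refine ⟨T.eigenspace μ, hμ, fun htop => hT μ ?_, fun f hf => ?_⟩
  · ext v
    simpa using Module.End.mem_eigenspace_iff.1 (htop ▸ Submodule.mem_top : v ∈ T.eigenspace μ)
  · exact Module.End.mapsTo_genEigenspace_of_comm hf μ 1

theorem Set.MapsTo.closure_convexHull {E F : Type*} [AddCommGroup E] [Module ℝ E]
    [TopologicalSpace E] [AddCommGroup F] [Module ℝ F] [TopologicalSpace F]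
    {f : E →ₗ[ℝ] F} (hf : Continuous f) {s : Set E} {t : Set F} (h : MapsTo f s t) :
    MapsTo f (closure (convexHull ℝ s)) (closure (convexHull ℝ t)) := by
  refine MapsTo.closure (fun x hx => ?_) hf
  exact convexHull_mono h.image_subset (f.image_convexHull s ▸ mem_image_of_mem f hx)

theorem IsCompact.closure_convexHull {E : Type*} [NormedAddCommGroup E] [NormedSpace ℝ E]
    [ProperSpace E] {s : Set E} (hs : IsCompact s) : IsCompact (closure (convexHull ℝ s)) :=
  Metric.isCompact_of_isClosed_isBounded isClosed_closure
    (isBounded_convexHull.2 hs.isBounded).closure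

namespace Matrix

variable {m : Type*} [Fintype m]

noncomputable def frobeniusNormSq (M : Matrix m m ℂ) : ℝ := (Mᴴ * M).trace.re

open scoped ComplexOrder in
theorem frobeniusNormSq_nonneg (M : Matrix m m ℂ) : 0 ≤ frobeniusNormSq M :=
  (Complex.nonneg_iff.1 (posSemidef_conjTranspose_mul_self M).trace_nonneg).1

open scoped ComplexOrder in
theorem frobeniusNormSq_eq_zero {M : Matrix m m ℂ} : frobeniusNormSq M = 0 ↔ M = 0 := by
  refine ⟨fun h => ?_, fun h => by simp [h, frobeniusNormSq]⟩
  have him := (Complex.nonneg_iff.1 (posSemidef_conjTranspose_mul_self M).trace_nonneg).2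
  exact trace_conjTranspose_mul_self_eq_zero_iff.1 (Complex.ext h him.symm)

theorem continuous_frobeniusNormSq : Continuous (frobeniusNormSq (m := m)) := by
  unfold frobeniusNormSq
  fun_prop

theorem frobeniusNormSq_add_add_sub (M N : Matrix m m ℂ) :
    frobeniusNormSq (M + N) + frobeniusNormSq (M - N) =
      2 * frobeniusNormSq M + 2 * frobeniusNormSq N := by
  simp only [frobeniusNormSq, conjTranspose_add, conjTranspose_sub, add_mul, mul_add, sub_mul,
    mul_sub, trace_add, trace_sub, Complex.add_re, Complex.sub_re]
  ring

theorem frobeniusNormSq_smul (r : ℝ) (M : Matrix m m ℂ) :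
    frobeniusNormSq (r • M) = r ^ 2 * frobeniusNormSq M := by
  simp only [frobeniusNormSq, conjTranspose_smul, star_trivial, smul_mul_smul, trace_smul,
    Complex.smul_re, smul_eq_mul, sq]

variable [DecidableEq m]

theorem frobeniusNormSq_conj {B : Matrix m m ℂ} (hB : Bᴴ * B = 1) (M : Matrix m m ℂ) :
    frobeniusNormSq (B * M * Bᴴ) = frobeniusNormSq M := by
  have : (B * M * Bᴴ)ᴴ * (B * M * Bᴴ) = B * (Mᴴ * M) * Bᴴ := by
    simp only [conjTranspose_mul, conjTranspose_conjTranspose, Matrix.mul_assoc]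
    rw [← Matrix.mul_assoc Bᴴ B, hB, Matrix.one_mul]
  rw [frobeniusNormSq, frobeniusNormSq, this, trace_mul_cycle, ← Matrix.mul_assoc, hB,
    Matrix.one_mul]

theorem exists_conj_eq_self_of_isCompact {G K : Set (Matrix m m ℂ)} (hG : ∀ B ∈ G, Bᴴ * B = 1)
    (hK : IsCompact K) (hKconv : Convex ℝ K) (hKne : K.Nonempty)
    (hGK : ∀ B ∈ G, MapsTo (fun M => B * M * Bᴴ) K K) :
    ∃ T ∈ K, ∀ B ∈ G, B * T * Bᴴ = T := by
  obtain ⟨T, hTK, hTmin⟩ := hK.exists_isMinOn hKne continuous_frobeniusNormSq.continuousOn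
  refine ⟨T, hTK, fun B hB => ?_⟩
  have hmid := isMinOn_iff.1 hTmin _
    (hKconv (hGK B hB hTK) hTK (a := 1 / 2) (b := 1 / 2) (by norm_num) (by norm_num) (by norm_num))
  rw [← smul_add, frobeniusNormSq_smul] at hmid
  -- parallelogram law for `T` and `B T Bᴴ`, which have the same norm
  have hpar := frobeniusNormSq_add_add_sub (B * T * Bᴴ) T
  rw [frobeniusNormSq_conj (hG B hB)] at hpar
  rw [← sub_eq_zero, ← frobeniusNormSq_eq_zero]
  exact le_antisymm (by linarith) (frobeniusNormSq_nonneg _)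

theorem commute_of_conj_eq_self {B T : Matrix m m ℂ} (hB : Bᴴ * B = 1) (h : B * T * Bᴴ = T) :
    Commute T B :=
  calc T * B = B * T * (Bᴴ * B) := by rw [← Matrix.mul_assoc, h]
    _ = B * T := by rw [hB, Matrix.mul_one]

section Frobenius

-- Any norm would do: it only serves to make the closed convex hull of a compact set compact.
attribute [local instance] frobeniusNormedAddCommGroup frobeniusNormedSpace

theorem exists_commute_mem_closure_convexHull_conj {G : Set (Matrix m m ℂ)} (hG : IsCompact G)
    (hGne : G.Nonempty) (hmul : ∀ A ∈ G, ∀ B ∈ G, A * B ∈ G) (hGu : ∀ A ∈ G, Aᴴ * A = 1)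
    (P : Matrix m m ℂ) :
    ∃ T ∈ closure (convexHull ℝ ((fun A => A * P * Aᴴ) '' G)), ∀ B ∈ G, Commute T B := by
  set orbit := (fun A => A * P * Aᴴ) '' G
  have horbit : ∀ B ∈ G, MapsTo (fun M => B * M * Bᴴ) orbit orbit := by
    rintro B hB _ ⟨A, hA, rfl⟩
    exact ⟨B * A, hmul B hB A hA, by simp [Matrix.mul_assoc, conjTranspose_mul]⟩
  obtain ⟨T, hTK, hTfix⟩ := exists_conj_eq_self_of_isCompact hGu
    (hG.image (by fun_prop)).closure_convexHull (convex_convexHull ℝ orbit).closure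
    ((hGne.image _).mono (subset_closure.trans' (subset_convexHull ℝ _)))
    fun B hB => MapsTo.closure_convexHull (f := LinearMap.mulRight ℝ Bᴴ ∘ₗ LinearMap.mulLeft ℝ B)
      (s := orbit) (t := orbit) (by fun_prop) (horbit B hB)
  exact ⟨T, hTK, fun B hB => commute_of_conj_eq_self (hGu B hB) (hTfix B hB)⟩

end Frobenius

theorem trace_conj_vecMulVec {A : Matrix m m ℂ} (hA : Aᴴ * A = 1) (v : m → ℂ) :
    (A * vecMulVec v (star v) * Aᴴ).trace = v ⬝ᵥ star v := by
  rw [trace_mul_cycle, hA, Matrix.one_mul, trace_vecMulVec]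

theorem inner_toEuclideanLin_conj_vecMulVec (A : Matrix m m ℂ) (x : EuclideanSpace ℂ m) :
    inner ℂ x (toEuclideanLin (A * vecMulVec (WithLp.ofLp x) (star (WithLp.ofLp x)) * Aᴴ) x) =
      (‖inner ℂ x (toEuclideanLin A x)‖ ^ 2 : ℝ) := by
  rw [← InnerProductSpace.symm_toEuclideanLin_rankOne]
  simp only [toLpLin_mul_same, LinearEquiv.apply_symm_apply,
    toEuclideanLin_conjTranspose_eq_adjoint, LinearMap.coe_comp, ContinuousLinearMap.coe_coe,
    Function.comp_apply, InnerProductSpace.rankOne_apply, LinearMap.adjoint_inner_right, map_smul,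
    CStarModule.inner_op_smul_right, Complex.ofReal_pow]
  rw [← inner_conj_symm]
  exact RCLike.conj_mul _

theorem trace_eq_one_and_le_re_inner_of_mem_closure_convexHull {G : Set (Matrix m m ℂ)}
    (hGu : ∀ A ∈ G, Aᴴ * A = 1) {x : EuclideanSpace ℂ m} (hx : ‖x‖ = 1) {c : ℝ}
    (hc : ∀ A ∈ G, c ≤ ‖inner ℂ x (toEuclideanLin A x)‖ ^ 2) {T : Matrix m m ℂ}
    (hT : T ∈ closure (convexHull ℝ
      ((fun A => A * vecMulVec (WithLp.ofLp x) (star (WithLp.ofLp x)) * Aᴴ) '' G))) :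
    T.trace = 1 ∧ c ≤ (inner ℂ x (toEuclideanLin T x)).re := by
  set P := vecMulVec (WithLp.ofLp x) (star (WithLp.ofLp x))
  let φ : Matrix m m ℂ →ₗ[ℂ] ℂ × ℂ := (traceLinearMap _ ℂ ℂ).prod
    (innerₛₗ ℂ x ∘ₗ LinearMap.applyₗ x ∘ₗ toEuclideanLin.toLinearMap)
  set C : Set (ℂ × ℂ) := {1} ×ˢ {z | c ≤ z.re}
  have hC : closure (convexHull ℝ C) = C := by
    rw [(convex_singleton _).prod (convex_halfSpace_re_ge _) |>.convexHull_eq,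
      (isClosed_singleton.prod (isClosed_le continuous_const Complex.continuous_re)).closure_eq]
  have hφ : MapsTo (φ.restrictScalars ℝ) ((fun A => A * P * Aᴴ) '' G) C := by
    rintro _ ⟨A, hA, rfl⟩
    constructor
    · change (A * P * Aᴴ).trace = 1
      rw [trace_conj_vecMulVec (hGu A hA), ← EuclideanSpace.inner_eq_star_dotProduct,
        inner_self_eq_norm_sq_to_K, hx]
      norm_num
    · change c ≤ (inner ℂ x (toEuclideanLin (A * P * Aᴴ) x)).re
      rw [inner_toEuclideanLin_conj_vecMulVec, Complex.ofReal_re]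
      exact hc A hA
  obtain ⟨htr, hTx⟩ := hC ▸ hφ.closure_convexHull (LinearMap.continuous_of_finiteDimensional _) hT
  exact ⟨htr, hTx⟩

theorem toEuclideanLin_ne_algebraMap {T : Matrix m m ℂ} (hm : 2 ≤ Fintype.card m)
    (htr : T.trace = 1) {x : EuclideanSpace ℂ m} (hx : ‖x‖ = 1)
    (hTx : 1 / 2 < (inner ℂ x (toEuclideanLin T x)).re) (μ : ℂ) :
    toEuclideanLin T ≠ algebraMap ℂ _ μ := by
  intro h
  have hμ : inner ℂ x (toEuclideanLin T x) = μ := by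
    simp [h, inner_self_eq_norm_sq_to_K, hx]
  have hT : T = algebraMap ℂ _ μ :=
    (toLpLinAlgEquiv 2).injective (by rw [AlgEquiv.commutes]; exact h)
  have hcard : (Fintype.card m : ℂ) * μ = 1 := by
    rw [← htr, hT]
    simp [algebraMap_eq_diagonal]
  have hre : (Fintype.card m : ℝ) * μ.re = 1 := by
    simpa using congrArg Complex.re hcard
  have hm' : (2 : ℝ) ≤ Fintype.card m := by exact_mod_cast hm
  rw [hμ] at hTx
  nlinarith

end Matrix

theorem stmt_18_general (n : ℕ) (hn : 2 ≤ n) (ε : ℝ)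
    (hε1 : ε < 1 / (3600 * (n : ℝ) ^ 11))
    (G : Set (Matrix (Fin n) (Fin n) ℂ))
    (hone : (1 : Matrix (Fin n) (Fin n) ℂ) ∈ G)
    (hmul : ∀ A ∈ G, ∀ B ∈ G, A * B ∈ G)
    (hunitary : ∀ A ∈ G, A ∈ Matrix.unitaryGroup (Fin n) ℂ)
    (hcompact : IsCompact G)
    (ξ : EuclideanSpace ℂ (Fin n)) (hξ : ‖ξ‖ = 1)
    (hweak : ∀ A ∈ G, 1 - ε ≤ ‖(inner ℂ ξ (Matrix.toEuclideanLin A ξ) : ℂ)‖) :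
    ∃ W : Submodule ℂ (EuclideanSpace ℂ (Fin n)),
      0 < Module.finrank ℂ W ∧ Module.finrank ℂ W < n ∧
      ∀ A ∈ G, ∀ x ∈ W, Matrix.toEuclideanLin A x ∈ W := by
  have hGu : ∀ A ∈ G, Aᴴ * A = 1 := fun A hA => mem_unitaryGroup_iff'.1 (hunitary A hA)
  have hε4 : ε < 1 / 4 := by
    have hn11 : (1 : ℝ) ≤ (n : ℝ) ^ 11 := one_le_pow₀ (by exact_mod_cast (by omega : 1 ≤ n))
    exact hε1.trans_le (one_div_le_one_div_of_le (by norm_num) (by linarith))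
  obtain ⟨T, hTK, hTG⟩ := exists_commute_mem_closure_convexHull_conj hcompact ⟨1, hone⟩ hmul hGu
    (vecMulVec (WithLp.ofLp ξ) (star (WithLp.ofLp ξ)))
  obtain ⟨htr, hTξ⟩ := trace_eq_one_and_le_re_inner_of_mem_closure_convexHull hGu hξ
    (fun A hA => pow_le_pow_left₀ (by linarith) (hweak A hA) 2) hTK
  obtain ⟨W, hW_ne_bot, hW_ne_top, hW⟩ := Module.End.exists_invariant_of_ne_algebraMap _
    (toEuclideanLin_ne_algebraMap (by simpa using hn) htr hξ (by nlinarith))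
  refine ⟨W, Module.finrank_pos_iff.2 (Submodule.nontrivial_iff_ne_bot.2 hW_ne_bot),
    (Submodule.finrank_lt hW_ne_top).trans_eq finrank_euclideanSpace_fin, fun A hA => hW _ ?_⟩
  exact (hTG A hA).map (toLpLinAlgEquiv 2)

/-- Let `n ≥ 2` and `0 < ε < 1/(3600 n¹¹)`. Every compact (equivalently,
closed) group of `n × n` unitary matrices with a weak `ε`-approximate fixed point is
reducible: it has a common invariant subspace `W` with `0 < dim W < n`. -/
theorem stmt_18 (n : ℕ) (hn : 2 ≤ n) (ε : ℝ) (hε : 0 < ε)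
    (hε1 : ε < 1 / (3600 * (n : ℝ) ^ 11))
    (G : Set (Matrix (Fin n) (Fin n) ℂ))
    (hone : (1 : Matrix (Fin n) (Fin n) ℂ) ∈ G)
    (hmul : ∀ A ∈ G, ∀ B ∈ G, A * B ∈ G)
    (hinv : ∀ A ∈ G, A⁻¹ ∈ G)
    (hunitary : ∀ A ∈ G, A ∈ Matrix.unitaryGroup (Fin n) ℂ)
    (hcompact : IsCompact G)
    (ξ : EuclideanSpace ℂ (Fin n)) (hξ : ‖ξ‖ = 1)
    (hweak : ∀ A ∈ G, 1 - ε ≤ ‖(inner ℂ ξ (Matrix.toEuclideanLin A ξ) : ℂ)‖) :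
    ∃ W : Submodule ℂ (EuclideanSpace ℂ (Fin n)),
      0 < Module.finrank ℂ W ∧ Module.finrank ℂ W < n ∧
      ∀ A ∈ G, ∀ x ∈ W, Matrix.toEuclideanLin A x ∈ W :=
  stmt_18_general n hn ε hε1 G hone hmul hunitary hcompact ξ hξ hweak
end

section
/- Let n ≥ 2 and 0 < ε < 1/(3600 n¹¹). Suppose 𝒢 is a group of n×n complex unitary matrices and ξ ∈ ℂⁿ is a unit vector with |⟨Gξ, ξ⟩| ≥ 1 − ε for all G ∈ 𝒢. Then there exists a common eigenvector η of 𝒢 (a nonzero vector such that for each G ∈ 𝒢 there is a scalar λ_G with Gη = λ_G η) satisfying ‖ξ − η‖² < 3600 n¹¹ ε. -/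
/-!
Let `P` be the orthogonal projection onto `ξ` and view matrices as vectors of a Euclidean space,
so that the norm is the Frobenius norm. The closed convex hull of the orbit `{A P Aᴴ | A ∈ 𝒢}`
is compact and has a unique point `Q` of least norm; conjugation by any `B ∈ 𝒢` is an isometry
preserving the orbit, so it fixes `Q`, i.e. `Q` commutes with `𝒢`. Every `A P Aᴴ` is a positive
rank-one operator of trace one with `⟨ξ, A P Aᴴ ξ⟩ = |⟨ξ, A ξ⟩|² ≥ (1 - ε)²`, and these closed
convex conditions pass to `Q`. As `(1 - ε)² > 1/2`, the largest eigenvalue of `Q` exceeds the sum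
of the others, so it is simple; its unit eigenvector `v` spans a `𝒢`-invariant line and satisfies
`|⟨v, ξ⟩|² ≥ (1 - ε)²`. Then `η = ⟨v, ξ⟩ v` has `‖ξ - η‖² = 1 - |⟨v, ξ⟩|² ≤ 2ε`.
-/

open Set Module InnerProductSpace Function
open scoped ComplexOrder InnerProductSpace Matrix

section MinimalNorm

variable {E : Type*} [NormedAddCommGroup E] [NormedSpace ℝ E]

theorem Convex.eq_of_isMinOn_norm [StrictConvexSpace ℝ E] {K : Set E} (hK : Convex ℝ K)
    {x y : E} (hx : x ∈ K) (hy : y ∈ K) (hmin : IsMinOn norm K x) (hxy : ‖y‖ = ‖x‖) :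
    y = x := by
  by_contra hne
  have hmid : (1 / 2 : ℝ) • (y + x) ∈ K := by
    simpa [smul_add] using hK hy hx (by norm_num : (0 : ℝ) ≤ 1 / 2) (by norm_num) (by norm_num)
  exact (hmin hmid).not_gt (hxy ▸ (norm_midpoint_lt_iff hxy).2 hne)

theorem closedConvexHull_subset_preimage [FiniteDimensional ℝ E] {F : Type*} [AddCommGroup F]
    [Module ℝ F] [TopologicalSpace F] [IsTopologicalAddGroup F] [ContinuousSMul ℝ F] [T2Space F]
    (f : E →ₗ[ℝ] F) {S : Set E} {T : Set F} (hT : Convex ℝ T) (hTc : IsClosed T)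
    (hST : MapsTo f S T) : closedConvexHull ℝ S ⊆ f ⁻¹' T :=
  closedConvexHull_min hST.subset_preimage (hT.linear_preimage f)
    (hTc.preimage f.continuous_of_finiteDimensional)

theorem exists_mem_closedConvexHull_isFixedPt [StrictConvexSpace ℝ E] [FiniteDimensional ℝ E]
    {β : Type*} {S : Set E} (hS : S.Nonempty) (hSb : Bornology.IsBounded S)
    (T : β → E →ₗ[ℝ] E) (hTnorm : ∀ b x, ‖T b x‖ = ‖x‖) (hTS : ∀ b, MapsTo (T b) S S) :
    ∃ q ∈ closedConvexHull ℝ S, ∀ b, IsFixedPt (T b) q := by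
  have hKc : IsCompact (closedConvexHull ℝ S) := by
    refine Metric.isCompact_of_isClosed_isBounded isClosed_closedConvexHull ?_
    rw [closedConvexHull_eq_closure_convexHull]
    exact (isBounded_convexHull.2 hSb).closure
  obtain ⟨q, hq, hmin⟩ :=
    hKc.exists_isMinOn (hS.mono subset_closedConvexHull) continuous_norm.continuousOn
  refine ⟨q, hq, fun b => convex_closedConvexHull.eq_of_isMinOn_norm hq ?_ hmin (hTnorm b q)⟩
  exact closedConvexHull_subset_preimage (T b) convex_closedConvexHull isClosed_closedConvexHull
    (fun x hx => subset_closedConvexHull (hTS b hx)) hq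

end MinimalNorm

namespace Matrix

variable {m n : Type*}

def frobeniusEquiv : Matrix m n ℂ ≃ₗ[ℂ] EuclideanSpace ℂ (m × n) :=
  (LinearEquiv.curry ℂ ℂ m n).symm ≪≫ₗ (WithLp.linearEquiv 2 ℂ (m × n → ℂ)).symm

@[simp] lemma frobeniusEquiv_apply (M : Matrix m n ℂ) (p : m × n) :
    frobeniusEquiv M p = M p.1 p.2 := rfl

lemma inner_frobeniusEquiv [Fintype m] [Fintype n] (M N : Matrix m n ℂ) :
    ⟪frobeniusEquiv M, frobeniusEquiv N⟫_ℂ = (Mᴴ * N).trace := by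
  simp only [PiLp.inner_apply, frobeniusEquiv_apply, RCLike.inner_apply, Fintype.sum_prod_type,
    trace, diag, mul_apply, conjTranspose_apply]
  rw [Finset.sum_comm]
  simp [mul_comm]

def frobeniusConj_s19 [Fintype n] (U : Matrix n n ℂ) :
    EuclideanSpace ℂ (n × n) →ₗ[ℂ] EuclideanSpace ℂ (n × n) where
  toFun x := frobeniusEquiv (U * frobeniusEquiv.symm x * Uᴴ)
  map_add' x y := by simp [Matrix.mul_add, Matrix.add_mul]
  map_smul' c x := by simp

@[simp] lemma frobeniusConj_frobeniusEquiv [Fintype n] (U M : Matrix n n ℂ) :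
    frobeniusConj_s19 U (frobeniusEquiv M) = frobeniusEquiv (U * M * Uᴴ) := by
  simp [frobeniusConj_s19]

lemma norm_frobeniusConj [Fintype n] [DecidableEq n] {U : Matrix n n ℂ} (hU : Uᴴ * U = 1)
    (x : EuclideanSpace ℂ (n × n)) : ‖frobeniusConj_s19 U x‖ = ‖x‖ := by
  obtain ⟨M, rfl⟩ := frobeniusEquiv.surjective x
  have htr : ((U * M * Uᴴ)ᴴ * (U * M * Uᴴ)).trace = (Mᴴ * M).trace := by
    calc ((U * M * Uᴴ)ᴴ * (U * M * Uᴴ)).trace = (Uᴴ * U * (Mᴴ * (Uᴴ * U) * M)).trace := by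
          rw [← trace_mul_cycle]
          simp only [conjTranspose_mul, conjTranspose_conjTranspose, Matrix.mul_assoc]
      _ = (Mᴴ * M).trace := by rw [hU, Matrix.one_mul, Matrix.mul_one]
  rw [frobeniusConj_frobeniusEquiv, @norm_eq_sqrt_re_inner ℂ, @norm_eq_sqrt_re_inner ℂ,
    inner_frobeniusEquiv, inner_frobeniusEquiv, htr]

theorem exists_commute_frobeniusEquiv_mem_closedConvexHull [Fintype n] [DecidableEq n]
    {G : Set (Matrix n n ℂ)} (hone : 1 ∈ G) (hmul : ∀ A ∈ G, ∀ B ∈ G, A * B ∈ G)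
    (hunitary : ∀ A ∈ G, A ∈ unitaryGroup n ℂ) (P : Matrix n n ℂ) :
    ∃ Q, frobeniusEquiv Q ∈ closedConvexHull ℝ (frobeniusEquiv '' ((fun A => A * P * Aᴴ) '' G))
      ∧ ∀ B ∈ G, Commute Q B := by
  have hunit (A : Matrix n n ℂ) (hA : A ∈ G) : Aᴴ * A = 1 :=
    Unitary.star_mul_self_of_mem (hunitary A hA)
  set S := frobeniusEquiv '' ((fun A => A * P * Aᴴ) '' G)
  have hSb : Bornology.IsBounded S := by
    refine (Metric.isBounded_closedBall (x := 0) (r := ‖frobeniusEquiv P‖)).subset ?_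
    rintro _ ⟨_, ⟨A, hA, rfl⟩, rfl⟩
    rw [mem_closedBall_zero_iff, ← frobeniusConj_frobeniusEquiv, norm_frobeniusConj (hunit A hA)]
  have hSinv (B : G) : MapsTo (frobeniusConj_s19 B.1) S S := by
    rintro _ ⟨_, ⟨A, hA, rfl⟩, rfl⟩
    refine ⟨_, ⟨B * A, hmul B B.2 A hA, rfl⟩, ?_⟩
    simp [conjTranspose_mul, Matrix.mul_assoc]
  obtain ⟨q, hq, hfix⟩ := exists_mem_closedConvexHull_isFixedPt (S := S)
    ⟨_, _, ⟨1, hone, rfl⟩, rfl⟩ hSb (fun B : G => (frobeniusConj_s19 B.1).restrictScalars ℝ)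
    (fun B => norm_frobeniusConj (hunit B B.2)) hSinv
  set Q := frobeniusEquiv.symm q
  refine ⟨Q, by simpa [Q] using hq, fun B hB => ?_⟩
  have hconj : B * Q * Bᴴ = Q := by
    simpa [frobeniusConj_s19] using congrArg frobeniusEquiv.symm (hfix ⟨B, hB⟩)
  calc Q * B = B * Q * Bᴴ * B := by rw [hconj]
    _ = B * Q := by rw [Matrix.mul_assoc, hunit B hB, Matrix.mul_one]

end Matrix

theorem le_and_le_of_le_sum_mul {ι : Type*} [Fintype ι] [DecidableEq ι] {l w : ι → ℝ} {a : ℝ}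
    (i : ι) (hl : ∀ j, 0 ≤ l j) (hl1 : ∑ j, l j = 1) (hw : ∀ j, 0 ≤ w j) (hw1 : ∑ j, w j = 1)
    (hmax : ∀ j, l j ≤ l i) (ha : 1 / 2 < a) (h : a ≤ ∑ j, l j * w j) :
    a ≤ l i ∧ a ≤ w i := by
  have hli : a ≤ l i := h.trans <| by
    calc ∑ j, l j * w j ≤ ∑ j, l i * w j := by gcongr with j; exacts [hw j, hmax j]
      _ = l i := by rw [← Finset.mul_sum, hw1, mul_one]
  have hother : ∀ j ∈ Finset.univ.erase i, l j ≤ 1 - l i := fun j hj => by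
    have := Finset.add_le_sum (fun k _ => hl k) (Finset.mem_univ j) (Finset.mem_univ i)
      (Finset.ne_of_mem_erase hj)
    linarith
  have hw' : ∑ j ∈ Finset.univ.erase i, w j = 1 - w i := by
    rw [← hw1, ← Finset.add_sum_erase _ _ (Finset.mem_univ i), add_sub_cancel_left]
  have hsplit : ∑ j, l j * w j ≤ l i * w i + (1 - l i) * (1 - w i) := by
    calc ∑ j, l j * w j = l i * w i + ∑ j ∈ Finset.univ.erase i, l j * w j :=
          (Finset.add_sum_erase _ _ (Finset.mem_univ i)).symm
      _ ≤ l i * w i + ∑ j ∈ Finset.univ.erase i, (1 - l i) * w j := by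
          gcongr with j hj; exacts [hw j, hother j hj]
      _ = l i * w i + (1 - l i) * (1 - w i) := by rw [← Finset.mul_sum, hw']
  have hli1 : l i ≤ 1 := hl1 ▸ Finset.single_le_sum (fun j _ => hl j) (Finset.mem_univ i)
  exact ⟨hli, by nlinarith⟩

section Spectral

variable {𝕜 V : Type*} [RCLike 𝕜] [NormedAddCommGroup V] [InnerProductSpace 𝕜 V]

lemma inner_rankOne_self_apply (u v : V) :
    ⟪v, rankOne 𝕜 u u v⟫_𝕜 = (‖⟪u, v⟫_𝕜‖ ^ 2 : ℝ) := by
  rw [inner_right_rankOne_apply, ← inner_conj_symm, RCLike.conj_mul, RCLike.ofReal_pow]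

lemma norm_sub_inner_smul_sq_s19 {v : V} (hv : ‖v‖ = 1) (x : V) :
    ‖x - ⟪v, x⟫_𝕜 • v‖ ^ 2 = ‖x‖ ^ 2 - ‖⟪v, x⟫_𝕜‖ ^ 2 := by
  rw [@norm_sub_sq 𝕜, inner_smul_right, ← inner_conj_symm x v, RCLike.mul_conj, norm_smul, hv]
  simp only [mul_one, ← RCLike.ofReal_pow, RCLike.ofReal_re]
  ring

variable [FiniteDimensional 𝕜 V]

lemma LinearMap.IsSymmetric.re_inner_map_self_eq_sum {T : V →ₗ[𝕜] V} (hT : T.IsSymmetric)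
    {d : ℕ} (hd : finrank 𝕜 V = d) (x : V) :
    RCLike.re ⟪x, T x⟫_𝕜 =
      ∑ i, hT.eigenvalues hd i * ‖⟪hT.eigenvectorBasis hd i, x⟫_𝕜‖ ^ 2 := by
  rw [← (hT.eigenvectorBasis hd).sum_inner_mul_inner x (T x), map_sum]
  refine Finset.sum_congr rfl fun i _ => ?_
  rw [← hT, hT.apply_eigenvectorBasis, inner_smul_left, RCLike.conj_ofReal, mul_left_comm,
    ← inner_conj_symm, RCLike.conj_mul, RCLike.re_ofReal_mul, ← RCLike.ofReal_pow,
    RCLike.ofReal_re]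

theorem LinearMap.IsPositive.exists_eigenspace_eq_span_singleton {T : V →ₗ[𝕜] V}
    (hT : T.IsPositive) (htr : T.trace 𝕜 V = 1) {ξ : V} (hξ : ‖ξ‖ = 1) {a : ℝ} (ha : 1 / 2 < a)
    (hTξ : a ≤ RCLike.re ⟪ξ, T ξ⟫_𝕜) :
    ∃ (v : V) (μ : 𝕜), End.eigenspace T μ = 𝕜 ∙ v ∧ ‖v‖ = 1 ∧ a ≤ ‖⟪v, ξ⟫_𝕜‖ ^ 2 := by
  classical
  have hS := hT.isSymmetric
  set b := hS.eigenvectorBasis rfl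
  set l := hS.eigenvalues rfl
  have hl1 : ∑ i, l i = 1 := by
    simpa [htr] using (hS.re_trace_eq_sum_eigenvalues rfl).symm
  obtain ⟨i, -⟩ := Finset.nonempty_of_sum_ne_zero (hl1 ▸ one_ne_zero : ∑ i, l i ≠ 0)
  -- The eigenvalues are sorted in decreasing order, so `i₀` carries the largest one.
  set i₀ : Fin (finrank 𝕜 V) := ⟨0, i.pos⟩
  obtain ⟨hli, hwi⟩ := le_and_le_of_le_sum_mul i₀ (hT.nonneg_eigenvalues rfl) hl1
    (fun _ => sq_nonneg _) (by rw [b.sum_sq_norm_inner_right, hξ, one_pow])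
    (fun j => hS.eigenvalues_antitone rfl (Nat.zero_le j.val)) ha
    (hS.re_inner_map_self_eq_sum rfl ξ ▸ hTξ)
  have hsimple : Finset.card {i | l i = (l i₀ : 𝕜)} = 1 := by
    refine Finset.card_eq_one.2 ⟨i₀, Finset.ext fun j => ?_⟩
    simp only [Finset.mem_filter, Finset.mem_univ, true_and, Finset.mem_singleton,
      RCLike.ofReal_inj]
    refine ⟨fun hj => by_contra fun hne => ?_, fun hj => hj ▸ rfl⟩
    have := Finset.add_le_sum (fun k _ => hT.nonneg_eigenvalues rfl k) (Finset.mem_univ j)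
      (Finset.mem_univ i₀) hne
    linarith
  refine ⟨b i₀, l i₀, (Submodule.eq_of_le_of_finrank_eq ?_ ?_).symm, b.norm_eq_one i₀, hwi⟩
  · rw [Submodule.span_singleton_le_iff_mem]
    exact End.mem_eigenspace_iff.2 (hS.apply_eigenvectorBasis rfl i₀)
  · rw [finrank_span_singleton (b.orthonormal.ne_zero i₀), ← hS.card_filter_eigenvalues_eq rfl,
      hsimple]

end Spectral

lemma Module.End.exists_apply_eq_smul_of_commute {K V : Type*} [Field K] [AddCommGroup V]
    [Module K V] {T S : End K V} {μ : K} {v : V} (hT : eigenspace T μ = K ∙ v)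
    (hTS : Commute T S) : ∃ c : K, S v = c • v := by
  have hv : v ∈ eigenspace T μ := hT ▸ Submodule.mem_span_singleton_self v
  have hSv : S v ∈ eigenspace T μ := mapsTo_genEigenspace_of_comm hTS μ 1 hv
  obtain ⟨c, hc⟩ := Submodule.mem_span_singleton.1 (hT ▸ hSv)
  exact ⟨c, hc.symm⟩

lemma Matrix.toEuclideanCLM_mul_symm_rankOne_mul_conjTranspose {𝕜 n : Type*} [RCLike 𝕜]
    [Fintype n] [DecidableEq n] (A : Matrix n n 𝕜) (x y : EuclideanSpace 𝕜 n) :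
    toEuclideanCLM (n := n) (𝕜 := 𝕜)
        (A * (toEuclideanCLM (n := n) (𝕜 := 𝕜)).symm (rankOne 𝕜 x y) * Aᴴ) =
      rankOne 𝕜 (toEuclideanCLM (n := n) (𝕜 := 𝕜) A x) (toEuclideanCLM (n := n) (𝕜 := 𝕜) A y) := by
  rw [map_mul, map_mul, ← star_eq_conjTranspose, map_star, StarAlgEquiv.apply_symm_apply,
    ContinuousLinearMap.mul_def, ContinuousLinearMap.mul_def, comp_rankOne, rankOne_comp,
    ContinuousLinearMap.star_eq_adjoint, ContinuousLinearMap.adjoint_adjoint]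

lemma LinearMap.isPositive_of_inner_nonneg {V : Type*} [NormedAddCommGroup V]
    [InnerProductSpace ℂ V] {T : V →ₗ[ℂ] V} (hT : ∀ x, 0 ≤ ⟪x, T x⟫_ℂ) : T.IsPositive := by
  refine (T.isPositive_iff_complex).2 fun x => ?_
  obtain ⟨hre, him⟩ := Complex.nonneg_iff.1 (hT x)
  rw [← inner_conj_symm (T x) x, RCLike.re_to_complex, Complex.conj_re]
  exact ⟨Complex.ext (by simp only [Complex.ofReal_re, Complex.conj_re])
    (by simp only [Complex.ofReal_im, Complex.conj_im, ← him, neg_zero]), hre⟩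

theorem exists_isPositive_commute_of_le_norm_inner_sq {n : Type*} [Fintype n] [DecidableEq n]
    {G : Set (Matrix n n ℂ)} (hone : 1 ∈ G) (hmul : ∀ A ∈ G, ∀ B ∈ G, A * B ∈ G)
    (hunitary : ∀ A ∈ G, A ∈ Matrix.unitaryGroup n ℂ) {ξ : EuclideanSpace ℂ n} (hξ : ‖ξ‖ = 1)
    {a : ℝ} (hweak : ∀ A ∈ G, a ≤ ‖⟪ξ, Matrix.toEuclideanLin A ξ⟫_ℂ‖ ^ 2) :
    ∃ T : EuclideanSpace ℂ n →ₗ[ℂ] EuclideanSpace ℂ n, T.IsPositive ∧ T.trace ℂ _ = 1 ∧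
      a ≤ RCLike.re ⟪ξ, T ξ⟫_ℂ ∧ ∀ B ∈ G, Commute T (Matrix.toEuclideanLin B) := by
  set L := Matrix.toEuclideanCLM (n := n) (𝕜 := ℂ)
  set P := L.symm (rankOne ℂ ξ ξ)
  have hsample (A : Matrix n n ℂ) : L (A * P * Aᴴ) = rankOne ℂ (L A ξ) (L A ξ) :=
    Matrix.toEuclideanCLM_mul_symm_rankOne_mul_conjTranspose A ξ ξ
  obtain ⟨Q, hQ, hcomm⟩ := Matrix.exists_commute_frobeniusEquiv_mem_closedConvexHull hone hmul
    hunitary P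
  have hmem (f : Matrix n n ℂ →ₗ[ℂ] ℂ) {C : Set ℂ} (hC : Convex ℝ C) (hCc : IsClosed C)
      (hfC : ∀ A ∈ G, f (A * P * Aᴴ) ∈ C) : f Q ∈ C := by
    simpa using closedConvexHull_subset_preimage
      ((f ∘ₗ Matrix.frobeniusEquiv.symm.toLinearMap).restrictScalars ℝ) hC hCc
      (by rintro _ ⟨_, ⟨A, hA, rfl⟩, rfl⟩; simpa using hfC A hA) hQ
  refine ⟨L Q, LinearMap.isPositive_of_inner_nonneg fun v => ?_, ?_, ?_,
    fun B hB => ((hcomm B hB).map L).map ContinuousLinearMap.toLinearMapRingHom⟩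
  · refine hmem (innerₛₗ ℂ v ∘ₗ LinearMap.applyₗ v ∘ₗ Matrix.toEuclideanLin.toLinearMap)
      (convex_Ici 0) isClosed_Ici fun A _ => ?_
    show 0 ≤ ⟪v, L (A * P * Aᴴ) v⟫_ℂ
    rw [hsample, inner_rankOne_self_apply]
    positivity
  · refine hmem (LinearMap.trace ℂ _ ∘ₗ Matrix.toEuclideanLin.toLinearMap) (convex_singleton 1)
      isClosed_singleton fun A hA => ?_
    show LinearMap.trace ℂ _ (L (A * P * Aᴴ) : EuclideanSpace ℂ n →ₗ[ℂ] _) = 1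
    have hAξ : ‖L A ξ‖ = 1 :=
      (ContinuousLinearMap.norm_map_of_mem_unitary (Unitary.map_mem L (hunitary A hA)) ξ).trans hξ
    rw [hsample, trace_rankOne, inner_self_eq_norm_sq_to_K, hAξ]
    simp
  · have := hmem (innerₛₗ ℂ ξ ∘ₗ LinearMap.applyₗ ξ ∘ₗ Matrix.toEuclideanLin.toLinearMap)
      (convex_Ici (a : ℂ)) isClosed_Ici fun A hA => by
        show (a : ℂ) ≤ ⟪ξ, L (A * P * Aᴴ) ξ⟫_ℂ
        rw [hsample, inner_rankOne_self_apply, norm_inner_symm]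
        exact Complex.real_le_real.2 (hweak A hA)
    exact (Complex.le_def.1 this).1

theorem stmt_19_general (n : ℕ) (ε : ℝ) (hε : 0 < ε)
    (hε1 : ε < 1 / (3600 * (n : ℝ) ^ 11))
    (G : Set (Matrix (Fin n) (Fin n) ℂ))
    (hone : (1 : Matrix (Fin n) (Fin n) ℂ) ∈ G)
    (hmul : ∀ A ∈ G, ∀ B ∈ G, A * B ∈ G)
    (hunitary : ∀ A ∈ G, A ∈ Matrix.unitaryGroup (Fin n) ℂ)
    (ξ : EuclideanSpace ℂ (Fin n)) (hξ : ‖ξ‖ = 1)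
    (hweak : ∀ A ∈ G, 1 - ε ≤ ‖(inner ℂ ξ (Matrix.toEuclideanLin A ξ) : ℂ)‖) :
    ∃ η : EuclideanSpace ℂ (Fin n), η ≠ 0 ∧
      (∀ A ∈ G, ∃ lam : ℂ, Matrix.toEuclideanLin A η = lam • η) ∧
      ‖ξ - η‖ ^ 2 < 3600 * (n : ℝ) ^ 11 * ε := by
  -- `n = 0` is excluded by `hε1`, whose right-hand side is then `1 / 0 = 0`.
  have hn : 1 ≤ (n : ℝ) ^ 11 := by
    rcases Nat.eq_zero_or_pos n with rfl | hn
    · norm_num at hε1; linarith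
    · exact one_le_pow₀ (by exact_mod_cast hn)
  have hε' : ε < 1 / 3600 := hε1.trans_le (by gcongr; linarith)
  obtain ⟨T, hT, htr, hTξ, hcomm⟩ := exists_isPositive_commute_of_le_norm_inner_sq hone hmul
    hunitary hξ fun A hA => pow_le_pow_left₀ (by linarith) (hweak A hA) 2
  obtain ⟨v, μ, hspan, hv, hvξ⟩ :=
    hT.exists_eigenspace_eq_span_singleton htr hξ (by nlinarith) hTξ
  refine ⟨⟪v, ξ⟫_ℂ • v, smul_ne_zero ?_ (norm_ne_zero_iff.1 (hv ▸ one_ne_zero)),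
    fun A hA => ?_, ?_⟩
  · rintro hzero
    rw [hzero, norm_zero] at hvξ
    nlinarith
  · obtain ⟨c, hc⟩ := Module.End.exists_apply_eq_smul_of_commute hspan (hcomm A hA)
    exact ⟨c, by rw [map_smul, hc, smul_comm]⟩
  · rw [norm_sub_inner_smul_sq_s19 hv, hξ]
    nlinarith

/-- Let `n ≥ 2` and `0 < ε < 1/(3600 n¹¹)`. Every group of `n × n`
unitary matrices with a weak `ε`-approximate fixed point `ξ` has a common eigenvector `η`
with `‖ξ - η‖² < 3600 n¹¹ ε`. -/
theorem stmt_19 (n : ℕ) (hn : 2 ≤ n) (ε : ℝ) (hε : 0 < ε)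
    (hε1 : ε < 1 / (3600 * (n : ℝ) ^ 11))
    (G : Set (Matrix (Fin n) (Fin n) ℂ))
    (hone : (1 : Matrix (Fin n) (Fin n) ℂ) ∈ G)
    (hmul : ∀ A ∈ G, ∀ B ∈ G, A * B ∈ G)
    (hinv : ∀ A ∈ G, A⁻¹ ∈ G)
    (hunitary : ∀ A ∈ G, A ∈ Matrix.unitaryGroup (Fin n) ℂ)
    (ξ : EuclideanSpace ℂ (Fin n)) (hξ : ‖ξ‖ = 1)
    (hweak : ∀ A ∈ G, 1 - ε ≤ ‖(inner ℂ ξ (Matrix.toEuclideanLin A ξ) : ℂ)‖) :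
    ∃ η : EuclideanSpace ℂ (Fin n), η ≠ 0 ∧
      (∀ A ∈ G, ∃ lam : ℂ, Matrix.toEuclideanLin A η = lam • η) ∧
      ‖ξ - η‖ ^ 2 < 3600 * (n : ℝ) ^ 11 * ε :=
  stmt_19_general n ε hε hε1 G hone hmul hunitary ξ hξ hweak
end
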